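/- arXiv:1402.4754 — 4 statements merged into one kernel-verified Lean document; each statement's English description precedes it below -/
import Mathlib

section
/- Let D ∈ ℕ with D ≥ 20. Let G be a graph and let (A1, B1, A2, B2) be an ordered partition of V(G) with 0 ≤ |Ai| − |Bi| ≤ D/2 for i = 1, 2. Suppose that e(A1,B2) ≤ e(B1,A2), that Δ(G[Ai]) ≤ D/2 for i = 1, 2, and that G is D-balanced with respect to (A1,B1,A2,B2). Then one of the following holds: (i) for i = 1, 2, the induced subgraph G[Ai] contains a matching Mi of size |Ai| − |Bi|, and moreover |Ai| − |Bi| ≤ ⌈e(Ai)/5⌉_{1/4}; or (ii) there exist C1 ∈ {A1, B1} and C2 ∈ {A2, B2} and a spanning subgraph G' of G which is D-balanced with respect to (A1,B1,A2,B2) and whose edge set is contained in E(G[C1]) ∪ E(G[C2]) ∪ E(G[A1 ∪ B1, A2]). -/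
/-- The number of edges of `G` with both endpoints in `S`. -/
noncomputable def eIn {V : Type*} (G : SimpleGraph V) (S : Finset V) : ℕ :=
  {e ∈ G.edgeSet | ∀ v ∈ e, v ∈ S}.ncard

/-- The number of edges of `G` with one endpoint in `S` and the other in `T`
(for disjoint `S`, `T`). -/
noncomputable def eBtw {V : Type*} (G : SimpleGraph V) (S T : Finset V) : ℕ :=
  {e ∈ G.edgeSet | ∃ a ∈ S, ∃ b ∈ T, e = s(a, b)}.ncard

/-- The number of neighbours of `x` lying in `S`. -/
noncomputable def dS {V : Type*} (G : SimpleGraph V) (x : V) (S : Finset V) : ℕ :=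
  {y | y ∈ S ∧ G.Adj x y}.ncard

/-- `M` is a matching in the graph `G`: a set of pairwise vertex-disjoint edges of `G`. -/
def IsMatchingIn {V : Type*} (G : SimpleGraph V) (M : Finset (Sym2 V)) : Prop :=
  (↑M ⊆ G.edgeSet) ∧
    (M : Set (Sym2 V)).Pairwise fun e f => ∀ v : V, ¬ (v ∈ e ∧ v ∈ f)

/-- `H` is `t`-balanced with respect to `(A1, B1, A2, B2)`, where
`W1 := A1 ∪ B1` and `W2 := A2 ∪ B2`. -/
def IsBalancedWrt {V : Type*} [DecidableEq V] (H : SimpleGraph V) (t : ℤ)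
    (A1 B1 A2 B2 : Finset V) : Prop :=
  2 * (eIn H A1 : ℤ) - 2 * eIn H B1 + eBtw H A1 (A2 ∪ B2) - eBtw H B1 (A2 ∪ B2)
      = t * ((A1.card : ℤ) - B1.card) ∧
  2 * (eIn H A2 : ℤ) - 2 * eIn H B2 + eBtw H A2 (A1 ∪ B1) - eBtw H B2 (A1 ∪ B1)
      = t * ((A2.card : ℤ) - B2.card)

open Finset
open scoped Classical

section Helpers
variable {V : Type*} [Fintype V] [DecidableEq V] (G : SimpleGraph V)

/-- the finset of edges of `G` with both endpoints in `S`. -/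
noncomputable def inF (S : Finset V) : Finset (Sym2 V) :=
  G.edgeFinset.filter (fun e => ∀ v ∈ e, v ∈ S)

/-- the finset of edges of `G` with one endpoint in `S`, other in `T`. -/
noncomputable def btwF (S T : Finset V) : Finset (Sym2 V) :=
  G.edgeFinset.filter (fun e => ∃ a ∈ S, ∃ b ∈ T, e = s(a, b))

lemma eIn_eq_card (S : Finset V) : eIn G S = (inF G S).card := by
  have : {e ∈ G.edgeSet | ∀ v ∈ e, v ∈ S} = ↑(inF G S) := by
    ext e
    simp [inF, SimpleGraph.mem_edgeFinset]
  rw [eIn, this, Set.ncard_coe_finset]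

lemma eBtw_eq_card (S T : Finset V) : eBtw G S T = (btwF G S T).card := by
  have : {e ∈ G.edgeSet | ∃ a ∈ S, ∃ b ∈ T, e = s(a, b)} = ↑(btwF G S T) := by
    ext e
    simp [btwF, SimpleGraph.mem_edgeFinset]
  rw [eBtw, this, Set.ncard_coe_finset]

lemma dS_eq_card (x : V) (S : Finset V) :
    dS G x S = (S.filter (fun y => G.Adj x y)).card := by
  have : {y | y ∈ S ∧ G.Adj x y} = ↑(S.filter (fun y => G.Adj x y)) := by
    ext y; simp
  rw [dS, this, Set.ncard_coe_finset]

lemma btwF_union_right {S T₁ T₂ : Finset V} (hST₁ : Disjoint S T₁) (hST₂ : Disjoint S T₂)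
    (hT : Disjoint T₁ T₂) :
    btwF G S (T₁ ∪ T₂) = btwF G S T₁ ∪ btwF G S T₂ ∧
      Disjoint (btwF G S T₁) (btwF G S T₂) := by
  constructor
  · ext e
    simp only [btwF, mem_filter, mem_union]
    constructor
    · rintro ⟨he, a, ha, b, hb, rfl⟩
      rcases hb with hb | hb
      · exact Or.inl ⟨he, a, ha, b, hb, rfl⟩
      · exact Or.inr ⟨he, a, ha, b, hb, rfl⟩
    · rintro (⟨he, a, ha, b, hb, rfl⟩ | ⟨he, a, ha, b, hb, rfl⟩)
      · exact ⟨he, a, ha, b, Or.inl hb, rfl⟩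
      · exact ⟨he, a, ha, b, Or.inr hb, rfl⟩
  · rw [Finset.disjoint_left]
    intro e h1 h2
    simp only [btwF, mem_filter] at h1 h2
    obtain ⟨he, a, ha, b, hb, rfl⟩ := h1
    obtain ⟨he', a', ha', b', hb', habs⟩ := h2
    rw [Sym2.eq_iff] at habs
    rcases habs with ⟨rfl, rfl⟩ | ⟨rfl, rfl⟩
    · exact (Finset.disjoint_left.1 hT hb) hb'
    · exact (Finset.disjoint_left.1 hST₂ ha) hb'

lemma eBtw_union_right {S T₁ T₂ : Finset V} (hST₁ : Disjoint S T₁) (hST₂ : Disjoint S T₂)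
    (hT : Disjoint T₁ T₂) :
    eBtw G S (T₁ ∪ T₂) = eBtw G S T₁ + eBtw G S T₂ := by
  obtain ⟨h₁, h₂⟩ := btwF_union_right G hST₁ hST₂ hT
  rw [eBtw_eq_card, eBtw_eq_card, eBtw_eq_card, h₁, Finset.card_union_of_disjoint h₂]

end Helpers

section MatchingTheory
variable {V : Type*} [Fintype V] [DecidableEq V] (G : SimpleGraph V)

/-- matching inside `A`. -/
def MatchIn (A : Finset V) (M : Finset (Sym2 V)) : Prop :=
  IsMatchingIn G M ∧ ∀ e ∈ M, ∀ v ∈ e, v ∈ A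

def covered (M : Finset (Sym2 V)) (v : V) : Prop := ∃ e ∈ M, v ∈ e

variable {G}

lemma matchIn_empty (A : Finset V) : MatchIn G A ∅ := by
  refine ⟨⟨by simp, by simp⟩, by simp⟩

lemma MatchIn.subset_edgeFinset {A M} (h : MatchIn G A M) : M ⊆ G.edgeFinset := by
  intro e he
  exact SimpleGraph.mem_edgeFinset.2 (h.1.1 he)

lemma IsMatchingIn.eq_of_shared {M : Finset (Sym2 V)} (hM : IsMatchingIn G M)
    {e f : Sym2 V} {v : V} (he : e ∈ M) (hf : f ∈ M) (hve : v ∈ e) (hvf : v ∈ f) :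
    e = f := by
  by_contra hne
  exact hM.2 (Finset.mem_coe.2 he) (Finset.mem_coe.2 hf) hne v ⟨hve, hvf⟩

lemma MatchIn.mono {A M M'} (h : MatchIn G A M) (hsub : M' ⊆ M) : MatchIn G A M' :=
  ⟨⟨subset_trans (Finset.coe_subset.2 hsub) h.1.1,
    Set.Pairwise.mono (Finset.coe_subset.2 hsub) h.1.2⟩,
   fun e he => h.2 e (hsub he)⟩

lemma MatchIn.insert {A M} (h : MatchIn G A M) {x y : V} (hadj : G.Adj x y)
    (hx : x ∈ A) (hy : y ∈ A) (hcx : ¬ covered M x) (hcy : ¬ covered M y) :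
    MatchIn G A (insert s(x,y) M) ∧ (insert s(x,y) M).card = M.card + 1 := by
  have hsymm : Symmetric (fun e f : Sym2 V => ∀ v : V, ¬ (v ∈ e ∧ v ∈ f)) := by
    intro e f hef v hv
    exact hef v ⟨hv.2, hv.1⟩
  have hnotmem : s(x,y) ∉ M := fun hmem => hcx ⟨s(x,y), hmem, by simp⟩
  refine ⟨⟨⟨?_, ?_⟩, ?_⟩, ?_⟩
  · rw [Finset.coe_insert]
    exact Set.insert_subset ((SimpleGraph.mem_edgeSet G).2 hadj) h.1.1
  · rw [Finset.coe_insert]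
    haveI : Std.Symm (fun e f : Sym2 V => ∀ v : V, ¬ (v ∈ e ∧ v ∈ f)) := ⟨fun a b h => hsymm h⟩
    rw [Set.pairwise_insert_of_symm]
    refine ⟨h.1.2, ?_⟩
    intro f hf _ v hv
    rw [Sym2.mem_iff] at hv
    rcases hv.1 with rfl | rfl
    · exact hcx ⟨f, Finset.mem_coe.1 hf, hv.2⟩
    · exact hcy ⟨f, Finset.mem_coe.1 hf, hv.2⟩
  · intro e he v hv
    rcases Finset.mem_insert.1 he with rfl | he'
    · rcases Sym2.mem_iff.1 hv with rfl | rfl <;> assumption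
    · exact h.2 e he' v hv
  · exact Finset.card_insert_of_notMem hnotmem

lemma exists_max_matchIn (A : Finset V) :
    ∃ M, MatchIn G A M ∧ ∀ M', MatchIn G A M' → M'.card ≤ M.card := by
  obtain ⟨M, hM, hmax⟩ := Finset.exists_max_image
    ((G.edgeFinset.powerset).filter (fun M => MatchIn G A M)) Finset.card
    ⟨∅, by simp [matchIn_empty]⟩
  rw [Finset.mem_filter] at hM
  refine ⟨M, hM.2, fun M' hM' => hmax M' ?_⟩
  rw [Finset.mem_filter, Finset.mem_powerset]
  exact ⟨hM'.subset_edgeFinset, hM'⟩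

lemma covered_partner {M : Finset (Sym2 V)} (hM : IsMatchingIn G M) {v : V}
    (h : covered M v) : ∃ w, G.Adj v w ∧ s(v,w) ∈ M := by
  obtain ⟨e, heM, hve⟩ := h
  refine ⟨Sym2.Mem.other' hve, ?_, ?_⟩
  · rw [← SimpleGraph.mem_edgeSet, Sym2.other_spec' hve]
    exact hM.1 heM
  · rw [Sym2.other_spec' hve]
    exact heM

lemma partner_unique {M : Finset (Sym2 V)} (hM : IsMatchingIn G M) {v w w' : V}
    (h : s(v,w) ∈ M) (h' : s(v,w') ∈ M) : w = w' := by
  have : s(v,w) = s(v,w') :=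
    hM.eq_of_shared h h' (Sym2.mem_iff.2 (Or.inl rfl)) (Sym2.mem_iff.2 (Or.inl rfl))
  rwa [Sym2.congr_right] at this

end MatchingTheory

section Counting
variable {V : Type*} [Fintype V] [DecidableEq V] {G : SimpleGraph V}

lemma eIn_erase {A : Finset V} {u : V} (hu : u ∈ A) :
    eIn G A = eIn G (A.erase u) + dS G u A := by
  classical
  rw [eIn_eq_card, eIn_eq_card, dS_eq_card]
  have hsplit := Finset.card_filter_add_card_filter_not
    (s := inF G A) (p := fun e => u ∈ e)
  have h2 : (inF G A).filter (fun e => ¬ u ∈ e) = inF G (A.erase u) := by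
    ext e
    simp only [inF, Finset.mem_filter, SimpleGraph.mem_edgeFinset]
    constructor
    · rintro ⟨⟨he, hA⟩, hue⟩
      exact ⟨he, fun v hv => Finset.mem_erase.2 ⟨fun h => hue (h ▸ hv), hA v hv⟩⟩
    · rintro ⟨he, hA⟩
      exact ⟨⟨he, fun v hv => Finset.mem_of_mem_erase (hA v hv)⟩,
        fun hue => (Finset.mem_erase.1 (hA u hue)).1 rfl⟩
  have h3 : (inF G A).filter (fun e => u ∈ e) =
      (A.filter (fun y => G.Adj u y)).image (fun w => s(u,w)) := by
    ext e
    simp only [inF, Finset.mem_filter, Finset.mem_image, SimpleGraph.mem_edgeFinset]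
    constructor
    · rintro ⟨⟨he, hA⟩, hue⟩
      refine ⟨Sym2.Mem.other' hue, ?_, Sym2.other_spec' hue⟩
      have hmem : Sym2.Mem.other' hue ∈ e := Sym2.other_mem' hue
      refine ⟨hA _ hmem, ?_⟩
      rw [← SimpleGraph.mem_edgeSet, Sym2.other_spec' hue]
      exact he
    · rintro ⟨w, hw, rfl⟩
      exact ⟨⟨(SimpleGraph.mem_edgeSet G).2 hw.2, fun v hv => by
        rcases Sym2.mem_iff.1 hv with rfl | rfl
        · exact hu
        · exact hw.1⟩, Sym2.mem_iff.2 (Or.inl rfl)⟩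
  have h4 : ((A.filter (fun y => G.Adj u y)).image (fun w => s(u,w))).card =
      (A.filter (fun y => G.Adj u y)).card := by
    apply Finset.card_image_of_injective
    intro w w' hww'
    exact Sym2.congr_right.1 hww'
  rw [h2] at hsplit
  rw [h3, h4] at hsplit
  omega

lemma inF_decomp {A : Finset V} {e : Sym2 V} (he : e ∈ inF G A) :
    ∃ x y, e = s(x,y) ∧ G.Adj x y ∧ x ∈ A ∧ y ∈ A := by
  induction e with
  | _ x y =>
    rw [inF, Finset.mem_filter, SimpleGraph.mem_edgeFinset, SimpleGraph.mem_edgeSet] at he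
    exact ⟨x, y, rfl, he.1, he.2 x (Sym2.mem_iff.2 (Or.inl rfl)),
      he.2 y (Sym2.mem_iff.2 (Or.inr rfl))⟩

lemma count_light (A : Finset V) (d : ℕ) (M : Finset (Sym2 V)) (hM : MatchIn G A M)
    (hmax : ∀ M', MatchIn G A M' → M'.card ≤ M.card)
    (hdeg : ∀ v ∈ A, dS G v A ≤ d)
    (hlight : ∀ w, covered M w →
      ((A.filter (fun z => ¬ covered M z)).filter (fun z => G.Adj w z)).card ≤ 1) :
    eIn G A ≤ M.card * (d+1) := by
  classical
  set W : Finset V := A.filter (fun v => covered M v) with hW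
  have hWA : W ⊆ A := Finset.filter_subset _ _
  have hnotW : ∀ z ∈ A, z ∉ W → ¬ covered M z := by
    intro z hz hzW hc
    exact hzW (Finset.mem_filter.2 ⟨hz, hc⟩)
  -- |W| = 2 |M|
  have hWcard : W.card = 2 * M.card := by
    have hWeq : W = M.biUnion (fun e => Finset.univ.filter (fun v => v ∈ e)) := by
      ext x
      simp only [hW, Finset.mem_filter, Finset.mem_biUnion, Finset.mem_univ, true_and]
      constructor
      · rintro ⟨_, e, heM, hx⟩
        exact ⟨e, heM, hx⟩
      · rintro ⟨e, heM, hx⟩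
        exact ⟨hM.2 e heM x hx, e, heM, hx⟩
    rw [hWeq, Finset.card_biUnion]
    · have : ∀ e ∈ M, (Finset.univ.filter (fun v => v ∈ e)).card = 2 := by
        intro e heM
        obtain ⟨x, y, rfl, hadj, _, _⟩ := inF_decomp
          (Finset.mem_filter.2 ⟨hM.subset_edgeFinset heM,
            fun v hv => hM.2 e heM v hv⟩)
        have : Finset.univ.filter (fun v => v ∈ s(x,y)) = {x, y} := by
          ext v; simp [Sym2.mem_iff]
        rw [this, Finset.card_insert_of_notMem (by simp [hadj.ne]), Finset.card_singleton]
      rw [Finset.sum_congr rfl this, Finset.sum_const, smul_eq_mul, mul_comm]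
    · intro e heM f hfM hef
      rw [Function.onFun, Finset.disjoint_left]
      intro v hv hv'
      rw [Finset.mem_filter] at hv hv'
      exact hef (hM.1.eq_of_shared heM hfM hv.2 hv'.2)
  -- every edge inside A has an endpoint in W
  have f0 : ∀ e ∈ inF G A, ∃ x y, e = s(x,y) ∧ G.Adj x y ∧ x ∈ W ∧ y ∈ A := by
    intro e he
    obtain ⟨x, y, rfl, hadj, hxA, hyA⟩ := inF_decomp he
    by_cases hx : x ∈ W
    · exact ⟨x, y, rfl, hadj, hx, hyA⟩
    by_cases hy : y ∈ W
    · exact ⟨y, x, Sym2.eq_swap, hadj.symm, hy, hxA⟩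
    · exfalso
      obtain ⟨_, hcard⟩ := hM.insert hadj hxA hyA (hnotW x hxA hx) (hnotW y hyA hy)
      have := hmax _ (hM.insert hadj hxA hyA (hnotW x hxA hx) (hnotW y hyA hy)).1
      omega
  set innerF := (inF G A).filter (fun e => ∀ v ∈ e, v ∈ W) with hinner
  set crossF := (inF G A).filter (fun e => ¬ ∀ v ∈ e, v ∈ W) with hcross
  have hic : innerF.card + crossF.card = (inF G A).card :=
    Finset.card_filter_add_card_filter_not _
  -- cross ≤ |W|
  have f3 : crossF.card ≤ W.card := by
    have hsub : crossF ⊆ W.biUnion (fun w =>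
        ((A.filter (fun z => ¬ covered M z)).filter (fun z => G.Adj w z)).image
          (fun z => s(w,z))) := by
      intro e heC
      rw [hcross, Finset.mem_filter] at heC
      obtain ⟨he, hnot⟩ := heC
      obtain ⟨x, y, rfl, hadj, hxW, hyA⟩ := f0 e he
      have hyW : y ∉ W := by
        intro hyW
        exact hnot (fun v hv => by
          rcases Sym2.mem_iff.1 hv with rfl | rfl <;> assumption)
      refine Finset.mem_biUnion.2 ⟨x, hxW, Finset.mem_image.2 ⟨y, ?_, rfl⟩⟩
      exact Finset.mem_filter.2 ⟨Finset.mem_filter.2 ⟨hyA, hnotW y hyA hyW⟩, hadj⟩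
    calc crossF.card ≤ _ := Finset.card_le_card hsub
      _ ≤ ∑ w ∈ W, (((A.filter (fun z => ¬ covered M z)).filter
            (fun z => G.Adj w z)).image (fun z => s(w,z))).card := Finset.card_biUnion_le
      _ ≤ ∑ _w ∈ W, 1 := by
          apply Finset.sum_le_sum
          intro w hw
          refine le_trans Finset.card_image_le (hlight w ?_)
          exact (Finset.mem_filter.1 hw).2
      _ = W.card := by simp
  -- 2*inner + cross ≤ |W| * d
  have f4 : 2 * innerF.card + crossF.card ≤ W.card * d := by
    set pairs := W.biUnion (fun w => (A.filter (fun z => G.Adj w z)).image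
      (fun z => ((w, z) : V × V))) with hpairs
    have hpc : pairs.card = ∑ w ∈ W, dS G w A := by
      rw [hpairs, Finset.card_biUnion]
      · apply Finset.sum_congr rfl
        intro w _
        rw [Finset.card_image_of_injective _ (fun a b h => (Prod.ext_iff.1 h).2),
          dS_eq_card]
      · intro w hw w' hw' hww'
        rw [Function.onFun, Finset.disjoint_left]
        intro p hp hp'
        simp only [Finset.mem_image] at hp hp'
        obtain ⟨z, _, rfl⟩ := hp
        obtain ⟨z', _, h⟩ := hp'
        exact hww' (Prod.ext_iff.1 h).1.symm
    have hmap : ∀ p ∈ pairs, s(p.1, p.2) ∈ inF G A := by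
      intro p hp
      rw [hpairs, Finset.mem_biUnion] at hp
      obtain ⟨w, hw, hp⟩ := hp
      rw [Finset.mem_image] at hp
      obtain ⟨z, hz, rfl⟩ := hp
      rw [Finset.mem_filter] at hz
      rw [inF, Finset.mem_filter, SimpleGraph.mem_edgeFinset, SimpleGraph.mem_edgeSet]
      exact ⟨hz.2, fun v hv => by
        rcases Sym2.mem_iff.1 hv with rfl | rfl
        · exact hWA hw
        · exact hz.1⟩
    have hfib := Finset.card_eq_sum_card_fiberwise hmap
    have hsplitsum : (∑ e ∈ innerF, (pairs.filter (fun p => s(p.1,p.2) = e)).card)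
        + (∑ e ∈ crossF, (pairs.filter (fun p => s(p.1,p.2) = e)).card)
        = ∑ e ∈ inF G A, (pairs.filter (fun p => s(p.1,p.2) = e)).card :=
      Finset.sum_filter_add_sum_filter_not (inF G A) (fun e => ∀ v ∈ e, v ∈ W) _
    have bound1 : ∀ e ∈ innerF, 2 ≤ (pairs.filter (fun p => s(p.1,p.2) = e)).card := by
      intro e heI
      rw [hinner, Finset.mem_filter] at heI
      obtain ⟨he, hall⟩ := heI
      obtain ⟨x, y, rfl, hadj, hxA, hyA⟩ := inF_decomp he
      have hxW : x ∈ W := hall x (Sym2.mem_iff.2 (Or.inl rfl))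
      have hyW : y ∈ W := hall y (Sym2.mem_iff.2 (Or.inr rfl))
      have hsub2 : ({((x,y) : V × V), (y,x)} : Finset (V × V)) ⊆
          pairs.filter (fun p => s(p.1,p.2) = s(x,y)) := by
        intro p hp
        rcases Finset.mem_insert.1 hp with rfl | hp
        · refine Finset.mem_filter.2 ⟨Finset.mem_biUnion.2 ⟨x, hxW,
            Finset.mem_image.2 ⟨y, Finset.mem_filter.2 ⟨hyA, hadj⟩, rfl⟩⟩, rfl⟩
        · rw [Finset.mem_singleton] at hp
          subst hp
          refine Finset.mem_filter.2 ⟨Finset.mem_biUnion.2 ⟨y, hyW,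
            Finset.mem_image.2 ⟨x, Finset.mem_filter.2 ⟨hxA, hadj.symm⟩, rfl⟩⟩, Sym2.eq_swap⟩
      have h2 : ({((x,y) : V × V), (y,x)} : Finset (V × V)).card = 2 := by
        rw [Finset.card_insert_of_notMem (by simp [hadj.ne]), Finset.card_singleton]
      calc 2 = _ := h2.symm
        _ ≤ _ := Finset.card_le_card hsub2
    have bound2 : ∀ e ∈ crossF, 1 ≤ (pairs.filter (fun p => s(p.1,p.2) = e)).card := by
      intro e heC
      rw [hcross, Finset.mem_filter] at heC
      obtain ⟨x, y, rfl, hadj, hxW, hyA⟩ := f0 e heC.1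
      exact Finset.card_pos.2 ⟨(x,y), Finset.mem_filter.2 ⟨Finset.mem_biUnion.2 ⟨x, hxW,
        Finset.mem_image.2 ⟨y, Finset.mem_filter.2 ⟨hyA, hadj⟩, rfl⟩⟩, rfl⟩⟩
    have hdegsum : ∑ w ∈ W, dS G w A ≤ W.card * d := by
      calc ∑ w ∈ W, dS G w A ≤ ∑ _w ∈ W, d :=
            Finset.sum_le_sum (fun w hw => hdeg w (hWA hw))
        _ = W.card * d := by rw [Finset.sum_const, smul_eq_mul]
    have hge : 2 * innerF.card + crossF.card ≤ pairs.card := by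
      rw [hfib, ← hsplitsum]
      have b1 : 2 * innerF.card ≤ ∑ e ∈ innerF,
          (pairs.filter (fun p => s(p.1,p.2) = e)).card := by
        calc 2 * innerF.card = ∑ _e ∈ innerF, 2 := by rw [Finset.sum_const, smul_eq_mul, mul_comm]
          _ ≤ _ := Finset.sum_le_sum bound1
      have b2 : crossF.card ≤ ∑ e ∈ crossF,
          (pairs.filter (fun p => s(p.1,p.2) = e)).card := by
        calc crossF.card = ∑ _e ∈ crossF, 1 := by simp
          _ ≤ _ := Finset.sum_le_sum bound2
      omega
    omega
  -- conclude
  rw [eIn_eq_card]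
  have : 2 * ((inF G A).card) ≤ 2 * (M.card * (d+1)) := by
    have h1 : W.card * d = 2 * M.card * d := by rw [hWcard]
    nlinarith [hic, f3, f4, hWcard]
  omega

lemma first_contact {H : SimpleGraph V} {S : Set V} :
    ∀ {a b : V} (_q : H.Walk a b), b ∈ S → a ∉ S →
      ∃ y z, y ∈ S ∧ z ∉ S ∧ H.Adj z y := by
  intro a b q
  induction q with
  | nil => intro hb ha; exact absurd hb ha
  | @cons a c b h q ih =>
    intro hb ha
    by_cases hc : c ∈ S
    · exact ⟨c, a, hc, ha, h⟩
    · exact ih hb hc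

lemma interior_two_nbrs {H : SimpleGraph V} :
    ∀ {a b : V} (p : H.Walk a b), p.IsPath →
      ∀ y ∈ p.support, y ≠ a → y ≠ b →
        ∃ z₁ z₂, z₁ ≠ z₂ ∧ H.Adj y z₁ ∧ H.Adj y z₂ ∧
          z₁ ∈ p.support ∧ z₂ ∈ p.support := by
  intro a b p
  induction p with
  | nil =>
    intro _ y hy hya _
    rw [SimpleGraph.Walk.support_nil, List.mem_singleton] at hy
    exact absurd hy hya
  | @cons a c b h q ih =>
    intro hp y hy hya hyb
    rw [SimpleGraph.Walk.support_cons, List.mem_cons] at hy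
    rcases hy with rfl | hy
    · exact absurd rfl hya
    by_cases hyc : y = c
    · subst hyc
      cases q with
      | nil => exact absurd rfl hyb
      | @cons c d b h₂ q₂ =>
        refine ⟨a, d, ?_, h.symm, h₂, ?_, ?_⟩
        · intro had
          subst had
          have hnodup := hp.2
          rw [SimpleGraph.Walk.support_cons, List.nodup_cons] at hnodup
          apply hnodup.1
          rw [SimpleGraph.Walk.support_cons, List.mem_cons]
          exact Or.inr q₂.start_mem_support
        · rw [SimpleGraph.Walk.support_cons, List.mem_cons]; exact Or.inl rfl
        · rw [SimpleGraph.Walk.support_cons, List.mem_cons]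
          refine Or.inr ?_
          rw [SimpleGraph.Walk.support_cons, List.mem_cons]
          exact Or.inr q₂.start_mem_support
    · obtain ⟨z₁, z₂, h12, ha1, ha2, hs1, hs2⟩ := ih hp.of_cons y hy hyc hyb
      refine ⟨z₁, z₂, h12, ha1, ha2, ?_, ?_⟩ <;>
        rw [SimpleGraph.Walk.support_cons, List.mem_cons]
      · exact Or.inr hs1
      · exact Or.inr hs2

end Counting

section Crux
variable {V : Type*} [Fintype V] [DecidableEq V] {G : SimpleGraph V}

lemma crux {A : Finset V} {M : Finset (Sym2 V)} (hM : MatchIn G A M)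
    (hmax : ∀ M', MatchIn G A M' → M'.card ≤ M.card)
    {u x₁ x₂ : V} (huA : u ∈ A) (hx₁A : x₁ ∈ A) (hx₂A : x₂ ∈ A)
    (hne : x₁ ≠ x₂) (ha₁ : G.Adj u x₁) (ha₂ : G.Adj u x₂)
    (hc₁ : ¬ covered M x₁) (hc₂ : ¬ covered M x₂) :
    ∀ M', MatchIn G (A.erase u) M' → M'.card < M.card := by
  intro M' hM'
  by_contra hle
  push_neg at hle
  have hM'A : MatchIn G A M' :=
    ⟨hM'.1, fun e he v hv => Finset.mem_of_mem_erase (hM'.2 e he v hv)⟩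
  have hM'card : M'.card = M.card := le_antisymm (hmax _ hM'A) hle
  have hucov' : ¬ covered M' u := by
    rintro ⟨e, he, hue⟩
    exact (Finset.mem_erase.1 (hM'.2 e he u hue)).1 rfl
  have hucov : covered M u := by
    by_contra hu
    have hins := hM.insert ha₁ huA hx₁A hu hc₁
    have := hmax _ hins.1
    omega
  obtain ⟨v, huv, hvM⟩ := covered_partner hM.1 hucov
  have hxcov' : ∀ x, x ∈ A → G.Adj u x → ¬ covered M x → covered M' x := by
    intro x hxA hax hcx
    by_contra h
    have hins := hM'A.insert hax huA hxA hucov' h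
    have := hmax _ hins.1
    omega
  have hx₁cov' := hxcov' x₁ hx₁A ha₁ hc₁
  have hx₂cov' := hxcov' x₂ hx₂A ha₂ hc₂
  -- symmetric difference
  set D : Finset (Sym2 V) := (M \ M') ∪ (M' \ M) with hD
  have hDmem : ∀ e, e ∈ D ↔ (e ∈ M ∧ e ∉ M') ∨ (e ∈ M' ∧ e ∉ M) := by
    intro e
    simp [hD, Finset.mem_union, Finset.mem_sdiff]
  have hDG : ∀ e ∈ D, e ∈ G.edgeSet := by
    intro e he
    rcases (hDmem e).1 he with ⟨h1, _⟩ | ⟨h1, _⟩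
    · exact hM.1.1 h1
    · exact hM'.1.1 h1
  set GD : SimpleGraph V := SimpleGraph.fromEdgeSet ↑D with hGD
  have hGDadj : ∀ x y, GD.Adj x y ↔ s(x,y) ∈ D ∧ x ≠ y := by
    intro x y
    rw [hGD, SimpleGraph.fromEdgeSet_adj, Finset.mem_coe]
  have hGDadj' : ∀ x y, GD.Adj x y → s(x,y) ∈ M ∨ s(x,y) ∈ M' := by
    intro x y h
    rcases (hDmem _).1 ((hGDadj x y).1 h).1 with ⟨h1, _⟩ | ⟨h1, _⟩
    · exact Or.inl h1
    · exact Or.inr h1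
  -- degree facts
  have hdeg_u : ∀ z, GD.Adj u z → z = v := by
    intro z hz
    rcases hGDadj' u z hz with h1 | h1
    · exact partner_unique hM.1 h1 hvM
    · exact absurd ⟨s(u,z), h1, Sym2.mem_iff.2 (Or.inl rfl)⟩ hucov'
  have hdeg_x : ∀ x, ¬ covered M x → ∀ z z', GD.Adj x z → GD.Adj x z' → z = z' := by
    intro x hcx z z' hz hz'
    have h1 : s(x,z) ∈ M' := by
      rcases hGDadj' x z hz with h | h
      · exact absurd ⟨s(x,z), h, Sym2.mem_iff.2 (Or.inl rfl)⟩ hcx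
      · exact h
    have h2 : s(x,z') ∈ M' := by
      rcases hGDadj' x z' hz' with h | h
      · exact absurd ⟨s(x,z'), h, Sym2.mem_iff.2 (Or.inl rfl)⟩ hcx
      · exact h
    exact partner_unique hM'.1 h1 h2
  have hdeg2 : ∀ y z₁ z₂ z₃, GD.Adj y z₁ → GD.Adj y z₂ → GD.Adj y z₃ →
      z₁ ≠ z₂ → z₁ ≠ z₃ → z₂ ≠ z₃ → False := by
    intro y z₁ z₂ z₃ h1 h2 h3 h12 h13 h23
    have kM : ∀ z z', s(y,z) ∈ M → s(y,z') ∈ M → z = z' := fun z z' a b =>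
      partner_unique hM.1 a b
    have kM' : ∀ z z', s(y,z) ∈ M' → s(y,z') ∈ M' → z = z' := fun z z' a b =>
      partner_unique hM'.1 a b
    rcases hGDadj' y z₁ h1 with m1 | m1 <;> rcases hGDadj' y z₂ h2 with m2 | m2 <;>
      rcases hGDadj' y z₃ h3 with m3 | m3
    · exact h12 (kM _ _ m1 m2)
    · exact h12 (kM _ _ m1 m2)
    · exact h13 (kM _ _ m1 m3)
    · exact h23 (kM' _ _ m2 m3)
    · exact h23 (kM _ _ m2 m3)
    · exact h13 (kM' _ _ m1 m3)
    · exact h12 (kM' _ _ m1 m2)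
    · exact h12 (kM' _ _ m1 m2)
  by_cases hreach : GD.Reachable u x₁ ∧ GD.Reachable u x₂
  · -- both reachable : walk argument
    obtain ⟨hr₁, hr₂⟩ := hreach
    have hrx : GD.Reachable x₁ x₂ := hr₁.symm.trans hr₂
    obtain ⟨w0⟩ := hrx
    set pp : GD.Walk x₁ x₂ := w0.toPath.1 with hpp
    have hppPath : pp.IsPath := w0.toPath.2
    have hu_not : u ∉ pp.support := by
      intro hu
      obtain ⟨z₁, z₂, h12, hz1, hz2, _, _⟩ :=
        interior_two_nbrs pp hppPath u hu ha₁.ne ha₂.ne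
      exact h12 ((hdeg_u z₁ hz1).trans (hdeg_u z₂ hz2).symm)
    obtain ⟨q⟩ := hr₁
    obtain ⟨y, z, hyS, hzS, hadjzy⟩ := first_contact (S := {w | w ∈ pp.support}) q
      (show x₁ ∈ {w | w ∈ pp.support} from pp.start_mem_support) hu_not
    have hyS' : y ∈ pp.support := hyS
    have hendpoint : ∀ (xa xb : V) (pw : GD.Walk xa xb), xa ≠ xb →
        (∀ z z', GD.Adj xa z → GD.Adj xa z' → z = z') →
        ∀ z', GD.Adj xa z' → z' ∈ pw.support := by
      intro xa xb pw hxab huniq z' hz'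
      cases pw with
      | nil => exact absurd rfl hxab
      | cons h q₂ =>
        have hz'' : z' = _ := huniq z' _ hz' h
        rw [hz'', SimpleGraph.Walk.support_cons, List.mem_cons]
        exact Or.inr q₂.start_mem_support
    by_cases hy1 : y = x₁
    · subst hy1
      exact hzS (hendpoint y x₂ pp hne (hdeg_x y hc₁) z hadjzy.symm)
    by_cases hy2 : y = x₂
    · subst hy2
      have hsupp := hendpoint y x₁ pp.reverse (Ne.symm hne) (hdeg_x y hc₂) z hadjzy.symm
      rw [SimpleGraph.Walk.support_reverse, List.mem_reverse] at hsupp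
      exact hzS hsupp
    · obtain ⟨z₁, z₂, h12, hz1, hz2, hs1, hs2⟩ :=
        interior_two_nbrs pp hppPath y hyS' hy1 hy2
      have hz_ne1 : z₁ ≠ z := fun h => hzS (h ▸ hs1)
      have hz_ne2 : z₂ ≠ z := fun h => hzS (h ▸ hs2)
      exact hdeg2 y z₁ z₂ z hz1 hz2 hadjzy.symm h12 hz_ne1 hz_ne2
  · -- some xᵢ not reachable : component swap
    have hux : ∃ x, x ∈ A ∧ G.Adj u x ∧ ¬ covered M x ∧ ¬ GD.Reachable u x := by
      by_cases hr1 : GD.Reachable u x₁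
      · exact ⟨x₂, hx₂A, ha₂, hc₂, fun hr2 => hreach ⟨hr1, hr2⟩⟩
      · exact ⟨x₁, hx₁A, ha₁, hc₁, hr1⟩
    obtain ⟨x, hxA, hax, hcx, hxur⟩ := hux
    set EK : Finset (Sym2 V) := D.filter (fun e => ∀ y ∈ e, GD.Reachable u y) with hEK
    have hclosure : ∀ e ∈ D, ∀ y ∈ e, GD.Reachable u y → e ∈ EK := by
      intro e heD y hye hry
      rw [hEK, Finset.mem_filter]
      refine ⟨heD, ?_⟩
      have hadjyz : GD.Adj y (Sym2.Mem.other' hye) := by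
        rw [hGDadj]
        constructor
        · rw [Sym2.other_spec' hye]; exact heD
        · have hG := hDG e heD
          rw [← Sym2.other_spec' hye, SimpleGraph.mem_edgeSet] at hG
          exact hG.ne
      intro w hwe
      have hw2 : w ∈ s(y, Sym2.Mem.other' hye) := by
        rw [Sym2.other_spec' hye]; exact hwe
      rcases Sym2.mem_iff.1 hw2 with rfl | rfl
      · exact hry
      · exact hry.trans hadjyz.reachable
    have hswap : ∀ P Q : Finset (Sym2 V), MatchIn G A P → MatchIn G A Q →
        (∀ e, e ∈ P → e ∉ Q → e ∈ D) →
        MatchIn G A ((P \ EK) ∪ (Q ∩ EK)) := by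
      intro P Q hP hQ hPQD
      have key : ∀ e f, e ∈ P \ EK → f ∈ Q ∩ EK → ∀ w, w ∈ e → w ∈ f → False := by
        intro e f heP hfQ w hwe hwf
        rw [Finset.mem_sdiff] at heP
        rw [Finset.mem_inter] at hfQ
        by_cases heQ : e ∈ Q
        · have hef : e = f := hQ.1.eq_of_shared heQ hfQ.1 hwe hwf
          exact heP.2 (hef ▸ hfQ.2)
        · have heD : e ∈ D := hPQD e heP.1 heQ
          have hfEK := hfQ.2
          rw [hEK, Finset.mem_filter] at hfEK
          exact heP.2 (hclosure e heD w hwe (hfEK.2 w hwf))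
      refine ⟨⟨?_, ?_⟩, ?_⟩
      · intro e he
        rcases Finset.mem_union.1 (Finset.mem_coe.1 he) with he | he
        · exact hP.1.1 (Finset.mem_coe.2 (Finset.mem_sdiff.1 he).1)
        · exact hQ.1.1 (Finset.mem_coe.2 (Finset.mem_inter.1 he).1)
      · intro e he f hf hnef w hw
        rw [Finset.mem_coe, Finset.mem_union] at he hf
        rcases he with he | he <;> rcases hf with hf | hf
        · exact hnef (hP.1.eq_of_shared (Finset.mem_sdiff.1 he).1
            (Finset.mem_sdiff.1 hf).1 hw.1 hw.2)
        · exact key e f he hf w hw.1 hw.2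
        · exact key f e hf he w hw.2 hw.1
        · exact hnef (hQ.1.eq_of_shared (Finset.mem_inter.1 he).1
            (Finset.mem_inter.1 hf).1 hw.1 hw.2)
      · intro e he w hw
        rcases Finset.mem_union.1 he with he | he
        · exact hP.2 e (Finset.mem_sdiff.1 he).1 w hw
        · exact hQ.2 e (Finset.mem_inter.1 he).1 w hw
    have hNmatch := hswap M M' hM hM'A (fun e heM heM' => (hDmem e).2 (Or.inl ⟨heM, heM'⟩))
    have hN'match := hswap M' M hM'A hM (fun e heM' heM => (hDmem e).2 (Or.inr ⟨heM', heM⟩))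
    have hdisj1 : Disjoint (M \ EK) (M' ∩ EK) := by
      rw [Finset.disjoint_left]
      intro e he1 he2
      exact (Finset.mem_sdiff.1 he1).2 (Finset.mem_inter.1 he2).2
    have hdisj2 : Disjoint (M' \ EK) (M ∩ EK) := by
      rw [Finset.disjoint_left]
      intro e he1 he2
      exact (Finset.mem_sdiff.1 he1).2 (Finset.mem_inter.1 he2).2
    have hsd1 : (M \ EK).card = M.card - (M ∩ EK).card := by
      rw [← Finset.sdiff_inter_self_left M EK, Finset.card_sdiff_of_subset Finset.inter_subset_left]
    have hsd2 : (M' \ EK).card = M'.card - (M' ∩ EK).card := by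
      rw [← Finset.sdiff_inter_self_left M' EK, Finset.card_sdiff_of_subset Finset.inter_subset_left]
    have hcard1 : ((M \ EK) ∪ (M' ∩ EK)).card
        = M.card - (M ∩ EK).card + (M' ∩ EK).card := by
      rw [Finset.card_union_of_disjoint hdisj1, hsd1]
    have hcard2 : ((M' \ EK) ∪ (M ∩ EK)).card
        = M'.card - (M' ∩ EK).card + (M ∩ EK).card := by
      rw [Finset.card_union_of_disjoint hdisj2, hsd2]
    have hle1 := hmax _ hNmatch
    have hle2 := hmax _ hN'match
    have hMEK : (M ∩ EK).card ≤ M.card := Finset.card_le_card Finset.inter_subset_left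
    have hM'EK : (M' ∩ EK).card ≤ M'.card := Finset.card_le_card Finset.inter_subset_left
    have hcardN : ((M \ EK) ∪ (M' ∩ EK)).card = M.card := by omega
    have huvD : s(u,v) ∈ D := (hDmem _).2
      (Or.inl ⟨hvM, fun h => hucov' ⟨_, h, Sym2.mem_iff.2 (Or.inl rfl)⟩⟩)
    have huvEK : s(u,v) ∈ EK :=
      hclosure _ huvD u (Sym2.mem_iff.2 (Or.inl rfl)) (SimpleGraph.Reachable.refl u)
    have hNu : ¬ covered ((M \ EK) ∪ (M' ∩ EK)) u := by
      rintro ⟨e, he, hue⟩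
      rcases Finset.mem_union.1 he with he | he
      · rw [Finset.mem_sdiff] at he
        have heuv : e = s(u,v) := hM.1.eq_of_shared he.1 hvM hue (Sym2.mem_iff.2 (Or.inl rfl))
        exact he.2 (heuv ▸ huvEK)
      · exact hucov' ⟨e, (Finset.mem_inter.1 he).1, hue⟩
    have hNx : ¬ covered ((M \ EK) ∪ (M' ∩ EK)) x := by
      rintro ⟨e, he, hxe⟩
      rcases Finset.mem_union.1 he with he | he
      · exact hcx ⟨e, (Finset.mem_sdiff.1 he).1, hxe⟩
      · have heEK := (Finset.mem_inter.1 he).2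
        rw [hEK, Finset.mem_filter] at heEK
        exact hxur (heEK.2 x hxe)
    obtain ⟨hinsmatch, hinscard⟩ := hNmatch.insert hax huA hxA hNu hNx
    have hfin := hmax _ hinsmatch
    omega

end Crux

section NuBound
variable {V : Type*} [Fintype V] [DecidableEq V] {G : SimpleGraph V}

lemma dS_mono {x : V} {S T : Finset V} (h : S ⊆ T) : dS G x S ≤ dS G x T := by
  rw [dS_eq_card, dS_eq_card]
  exact Finset.card_le_card (Finset.filter_subset_filter _ h)

lemma nu_bound (d : ℕ) : ∀ (n : ℕ) (A : Finset V), A.card ≤ n →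
    (∀ v ∈ A, dS G v A ≤ d) →
    ∀ M, MatchIn G A M → (∀ M', MatchIn G A M' → M'.card ≤ M.card) →
    eIn G A ≤ M.card * (d+1) := by
  intro n
  induction n with
  | zero =>
    intro A hA _ M _ _
    have hAe : A = ∅ := Finset.card_eq_zero.1 (Nat.le_zero.1 hA)
    have : inF G A = ∅ := by
      rw [Finset.eq_empty_iff_forall_notMem]
      intro e he
      obtain ⟨x, _, _, _, hxA, _⟩ := inF_decomp he
      rw [hAe] at hxA
      exact absurd hxA (Finset.notMem_empty x)
    rw [eIn_eq_card, this]
    simp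
  | succ n ih =>
    intro A hA hdeg M hM hmax
    by_cases hheavy : ∃ u ∈ A, ∃ x₁ ∈ A, ∃ x₂ ∈ A, x₁ ≠ x₂ ∧ G.Adj u x₁ ∧ G.Adj u x₂ ∧
        ¬ covered M x₁ ∧ ¬ covered M x₂
    · obtain ⟨u, huA, x₁, hx₁A, x₂, hx₂A, hne, ha₁, ha₂, hc₁, hc₂⟩ := hheavy
      have hcrux := crux hM hmax huA hx₁A hx₂A hne ha₁ ha₂ hc₁ hc₂
      obtain ⟨M₂, hM₂, hmax₂⟩ := exists_max_matchIn (G := G) (A.erase u)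
      have h2 : M₂.card < M.card := hcrux M₂ hM₂
      have hcard : (A.erase u).card ≤ n := by
        rw [Finset.card_erase_of_mem huA]
        omega
      have hdeg2 : ∀ v ∈ A.erase u, dS G v (A.erase u) ≤ d := fun v hv =>
        le_trans (dS_mono (Finset.erase_subset _ _)) (hdeg v (Finset.mem_of_mem_erase hv))
      have hrec := ih (A.erase u) hcard hdeg2 M₂ hM₂ hmax₂
      have hsplit := eIn_erase (G := G) huA
      have hdu : dS G u A ≤ d := hdeg u huA
      have hstep : M₂.card * (d+1) + d + 1 ≤ M.card * (d+1) := by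
        have : M₂.card + 1 ≤ M.card := h2
        nlinarith
      omega
    · push_neg at hheavy
      apply count_light A d M hM hmax hdeg
      intro w hw
      by_contra hcard
      push_neg at hcard
      obtain ⟨x₁, hx₁, x₂, hx₂, hne⟩ := Finset.one_lt_card.1 hcard
      rw [Finset.mem_filter] at hx₁ hx₂
      rw [Finset.mem_filter] at hx₁ hx₂
      have hwA : w ∈ A := by
        obtain ⟨e, he, hwe⟩ := hw
        exact hM.2 e he w hwe
      exact hx₂.1.2 (hheavy w hwA x₁ hx₁.1.1 x₂ hx₂.1.1 hne hx₁.2 hx₂.2 hx₁.1.2)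

lemma exists_matchIn_card (A : Finset V) (d k : ℕ)
    (hdeg : ∀ v ∈ A, dS G v A ≤ d)
    (hE : ((k:ℤ) - 1) * ((d:ℤ)+1) < (eIn G A : ℤ)) :
    ∃ M, MatchIn G A M ∧ M.card = k := by
  obtain ⟨M, hM, hmax⟩ := exists_max_matchIn (G := G) A
  have h1 : eIn G A ≤ M.card * (d+1) := nu_bound d A.card A le_rfl hdeg M hM hmax
  have hk : k ≤ M.card := by
    by_contra h
    push_neg at h
    have hMk : (M.card : ℤ) ≤ (k:ℤ) - 1 := by
      have : (M.card : ℤ) < (k:ℤ) := by exact_mod_cast h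
      omega
    have h1' : (eIn G A : ℤ) ≤ (M.card : ℤ) * ((d:ℤ)+1) := by exact_mod_cast h1
    nlinarith
  obtain ⟨M₀, hsub, hcard⟩ := Finset.exists_subset_card_eq hk
  exact ⟨M₀, hM.mono hsub, hcard⟩

end NuBound

section Construction
variable {V : Type*} [Fintype V] [DecidableEq V] {G : SimpleGraph V}

lemma btwF_decomp {S T : Finset V} {e : Sym2 V} (he : e ∈ btwF G S T) :
    ∃ x y, e = s(x,y) ∧ G.Adj x y ∧ x ∈ S ∧ y ∈ T := by
  rw [btwF, Finset.mem_filter] at he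
  obtain ⟨heG, a, ha, b, hb, rfl⟩ := he
  rw [SimpleGraph.mem_edgeFinset, SimpleGraph.mem_edgeSet] at heG
  exact ⟨a, b, rfl, heG, ha, hb⟩

lemma eBtw_comm (S T : Finset V) : eBtw G S T = eBtw G T S := by
  rw [eBtw_eq_card, eBtw_eq_card]
  congr 1
  ext e
  simp only [btwF, Finset.mem_filter]
  constructor
  · rintro ⟨he, a, ha, b, hb, rfl⟩
    exact ⟨he, b, hb, a, ha, Sym2.eq_swap⟩
  · rintro ⟨he, a, ha, b, hb, rfl⟩
    exact ⟨he, b, hb, a, ha, Sym2.eq_swap⟩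

-- keep / kill lemmas
lemma keep_in {C : Finset V} {S' : Finset (Sym2 V)} (h : S' ⊆ inF G C) :
    S'.filter (fun e => ∀ v ∈ e, v ∈ C) = S' := by
  apply Finset.filter_true_of_mem
  intro e he
  exact (Finset.mem_filter.1 (h he)).2

lemma kill_in_in {C C'' : Finset V} {S' : Finset (Sym2 V)} (h : S' ⊆ inF G C)
    (hd : Disjoint C C'') : S'.filter (fun e => ∀ v ∈ e, v ∈ C'') = ∅ := by
  apply Finset.filter_false_of_mem
  intro e he hall
  obtain ⟨x, y, rfl, _, hx, _⟩ := inF_decomp (h he)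
  exact Finset.disjoint_left.1 hd hx (hall x (Sym2.mem_iff.2 (Or.inl rfl)))

lemma kill_in_btw_left {C S T : Finset V} {S' : Finset (Sym2 V)} (h : S' ⊆ inF G C)
    (hd : Disjoint C S) :
    S'.filter (fun e => ∃ a ∈ S, ∃ b ∈ T, e = s(a,b)) = ∅ := by
  apply Finset.filter_false_of_mem
  intro e he hex
  obtain ⟨a, ha, b, hb, rfl⟩ := hex
  have := (Finset.mem_filter.1 (h he)).2 a (Sym2.mem_iff.2 (Or.inl rfl))
  exact Finset.disjoint_left.1 hd this ha

lemma kill_in_btw_right {C S T : Finset V} {S' : Finset (Sym2 V)} (h : S' ⊆ inF G C)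
    (hd : Disjoint C T) :
    S'.filter (fun e => ∃ a ∈ S, ∃ b ∈ T, e = s(a,b)) = ∅ := by
  apply Finset.filter_false_of_mem
  intro e he hex
  obtain ⟨a, ha, b, hb, rfl⟩ := hex
  have := (Finset.mem_filter.1 (h he)).2 b (Sym2.mem_iff.2 (Or.inr rfl))
  exact Finset.disjoint_left.1 hd this hb

lemma keep_btw {S T S₀ T₀ : Finset V} {S' : Finset (Sym2 V)} (h : S' ⊆ btwF G S T)
    (hS : S ⊆ S₀) (hT : T ⊆ T₀) :
    S'.filter (fun e => ∃ a ∈ S₀, ∃ b ∈ T₀, e = s(a,b)) = S' := by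
  apply Finset.filter_true_of_mem
  intro e he
  obtain ⟨x, y, rfl, _, hx, hy⟩ := btwF_decomp (h he)
  exact ⟨x, hS hx, y, hT hy, rfl⟩

lemma keep_btw_rev {S T S₀ T₀ : Finset V} {S' : Finset (Sym2 V)} (h : S' ⊆ btwF G S T)
    (hS : T ⊆ S₀) (hT : S ⊆ T₀) :
    S'.filter (fun e => ∃ a ∈ S₀, ∃ b ∈ T₀, e = s(a,b)) = S' := by
  apply Finset.filter_true_of_mem
  intro e he
  obtain ⟨x, y, rfl, _, hx, hy⟩ := btwF_decomp (h he)
  exact ⟨y, hS hy, x, hT hx, Sym2.eq_swap⟩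

lemma kill_btw_btw {S T S₀ T₀ : Finset V} {S' : Finset (Sym2 V)} (h : S' ⊆ btwF G S T)
    (hd1 : Disjoint S S₀) (hd2 : Disjoint T S₀) :
    S'.filter (fun e => ∃ a ∈ S₀, ∃ b ∈ T₀, e = s(a,b)) = ∅ := by
  apply Finset.filter_false_of_mem
  intro e he hex
  obtain ⟨x, y, rfl, _, hx, hy⟩ := btwF_decomp (h he)
  obtain ⟨a, ha, b, hb, heq⟩ := hex
  rw [Sym2.eq_iff] at heq
  rcases heq with ⟨rfl, rfl⟩ | ⟨rfl, rfl⟩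
  · exact Finset.disjoint_left.1 hd1 hx ha
  · exact Finset.disjoint_left.1 hd2 hy ha

lemma kill_btw_in {S T C : Finset V} {S' : Finset (Sym2 V)} (h : S' ⊆ btwF G S T)
    (hd : Disjoint T C) : S'.filter (fun e => ∀ v ∈ e, v ∈ C) = ∅ := by
  apply Finset.filter_false_of_mem
  intro e he hall
  obtain ⟨x, y, rfl, _, _, hy⟩ := btwF_decomp (h he)
  exact Finset.disjoint_left.1 hd hy (hall y (Sym2.mem_iff.2 (Or.inr rfl)))

lemma btw_classes_disjoint {S T S₀ T₀ : Finset V} {S' S'' : Finset (Sym2 V)}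
    (h : S' ⊆ btwF G S T) (h' : S'' ⊆ btwF G S₀ T₀)
    (hd1 : Disjoint S S₀) (hd2 : Disjoint T S₀) : Disjoint S' S'' := by
  rw [Finset.disjoint_left]
  intro e he he'
  obtain ⟨x, y, rfl, _, hx, hy⟩ := btwF_decomp (h he)
  obtain ⟨a, b, heq, _, ha, hb⟩ := btwF_decomp (h' he')
  rw [Sym2.eq_iff] at heq
  rcases heq with ⟨rfl, rfl⟩ | ⟨rfl, rfl⟩
  · exact Finset.disjoint_left.1 hd1 hx ha
  · exact Finset.disjoint_left.1 hd2 hy ha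

lemma in_btw_disjoint {C S T : Finset V} {S' S'' : Finset (Sym2 V)}
    (h : S' ⊆ inF G C) (h' : S'' ⊆ btwF G S T) (hd : Disjoint C T) : Disjoint S' S'' := by
  rw [Finset.disjoint_left]
  intro e he he'
  obtain ⟨x, y, rfl, _, hx, hy⟩ := inF_decomp (h he)
  obtain ⟨a, b, heq, _, ha, hb⟩ := btwF_decomp (h' he')
  rw [Sym2.eq_iff] at heq
  rcases heq with ⟨rfl, rfl⟩ | ⟨rfl, rfl⟩
  · exact Finset.disjoint_left.1 hd hy hb
  · exact Finset.disjoint_left.1 hd hx hb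

lemma edgeFinset_fromEdgeSet {E' : Finset (Sym2 V)} (h : E' ⊆ G.edgeFinset) :
    (SimpleGraph.fromEdgeSet (↑E' : Set (Sym2 V))).edgeFinset = E' := by
  have hset : (SimpleGraph.fromEdgeSet (↑E' : Set (Sym2 V))).edgeSet = ↑E' := by
    rw [SimpleGraph.edgeSet_fromEdgeSet]
    apply sdiff_eq_left.2
    rw [Set.disjoint_left]
    intro e he hdiag
    have heG := h (Finset.mem_coe.1 he)
    rw [SimpleGraph.mem_edgeFinset] at heG
    exact (SimpleGraph.not_isDiag_of_mem_edgeSet G heG) hdiag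
  ext e
  rw [SimpleGraph.mem_edgeFinset, hset, Finset.mem_coe]

lemma fromEdgeSet_le_graph {E' : Finset (Sym2 V)} (h : E' ⊆ G.edgeFinset) :
    SimpleGraph.fromEdgeSet (↑E' : Set (Sym2 V)) ≤ G := by
  intro a b hadj
  rw [SimpleGraph.fromEdgeSet_adj] at hadj
  have := h (Finset.mem_coe.1 hadj.1)
  rw [SimpleGraph.mem_edgeFinset, SimpleGraph.mem_edgeSet] at this
  exact this

lemma side_piece (G : SimpleGraph V) (A B : Finset V) (v : ℤ)
    (h1 : -(eIn G B : ℤ) ≤ v) (h2 : v ≤ (eIn G A : ℤ)) :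
    ∃ (C : Finset V) (S : Finset (Sym2 V)), S ⊆ inF G C ∧
      ((C = A ∧ (S.card : ℤ) = v) ∨ (C = B ∧ (S.card : ℤ) = -v)) := by
  by_cases h : 0 ≤ v
  · have hle : v.toNat ≤ (inF G A).card := by
      rw [← eIn_eq_card]
      omega
    obtain ⟨S, hS, hcard⟩ := Finset.exists_subset_card_eq hle
    exact ⟨A, S, hS, Or.inl ⟨rfl, by rw [hcard]; omega⟩⟩
  · have hle : (-v).toNat ≤ (inF G B).card := by
      rw [← eIn_eq_card]
      omega
    obtain ⟨S, hS, hcard⟩ := Finset.exists_subset_card_eq hle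
    exact ⟨B, S, hS, Or.inr ⟨rfl, by rw [hcard]; omega⟩⟩

end Construction

lemma inF_def {V : Type*} [Fintype V] [DecidableEq V] (G : SimpleGraph V) (S : Finset V) :
    inF G S = G.edgeFinset.filter (fun e => ∀ v ∈ e, v ∈ S) := rfl

lemma btwF_def {V : Type*} [Fintype V] [DecidableEq V] (G : SimpleGraph V) (S T : Finset V) :
    btwF G S T = G.edgeFinset.filter (fun e => ∃ a ∈ S, ∃ b ∈ T, e = s(a, b)) := rfl

set_option maxHeartbeats 4000000 in
lemma arith_core (EA1 EB1 EA2 EB2 X Y P Q : ℤ)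
    (hEA1 : 0 ≤ EA1) (hEB1 : 0 ≤ EB1) (hEA2 : 0 ≤ EA2) (hEB2 : 0 ≤ EB2)
    (hX : 0 ≤ X) (hP : 0 ≤ P) (hPY : P ≤ Y) (hQ : 0 ≤ Q)
    (hS1 : 0 ≤ 2*EA1-2*EB1+X+P-Y-Q) (hS2 : 0 ≤ 2*EA2-2*EB2+X+Y-P-Q) :
    (∃ a b : ℤ, -EA1 ≤ a ∧ a ≤ EB1 ∧ -EA2 ≤ b ∧ b ≤ EB2 ∧
      -Q ≤ a+b ∧ a+b ≤ X-Q ∧ -P ≤ b-a ∧ b-a ≤ Y-P) ∨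
    ((2*EA1-2*EB1+X+P-Y-Q = 0 ∨ 2*EA1-2*EB1+X+P-Y-Q + 1 ≤ 2*EA1) ∧
     (2*EA2-2*EB2+X+Y-P-Q = 0 ∨ 2*EA2-2*EB2+X+Y-P-Q + 1 ≤ 2*EA2)) := by
  set p : ℤ := min (min (X-Q) (EB1+EB2)) (min (2*EB1+(Y-P)) (2*EB2+P)) with hp
  by_cases h1 : (-Q ≤ p) ∧
      max (-EA1) (max (p-EB2) ((p-(Y-P)+1)/2)) ≤ min EB1 (min (p+EA2) ((p+P)/2))
  · exact Or.inl ⟨max (-EA1) (max (p-EB2) ((p-(Y-P)+1)/2)),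
      p - max (-EA1) (max (p-EB2) ((p-(Y-P)+1)/2)),
      by omega, by omega, by omega, by omega, by omega, by omega, by omega, by omega⟩
  · by_cases h2 : (-Q ≤ p-1) ∧
        max (-EA1) (max ((p-1)-EB2) (((p-1)-(Y-P)+1)/2)) ≤
          min EB1 (min ((p-1)+EA2) (((p-1)+P)/2))
    · exact Or.inl ⟨max (-EA1) (max ((p-1)-EB2) (((p-1)-(Y-P)+1)/2)),
        (p-1) - max (-EA1) (max ((p-1)-EB2) (((p-1)-(Y-P)+1)/2)),
        by omega, by omega, by omega, by omega, by omega, by omega, by omega, by omega⟩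
    · exact Or.inr (by omega)

lemma kill_btw_in_left {V : Type*} [Fintype V] [DecidableEq V] {G : SimpleGraph V}
    {S T C : Finset V} {S' : Finset (Sym2 V)} (h : S' ⊆ btwF G S T)
    (hd : Disjoint S C) : S'.filter (fun e => ∀ v ∈ e, v ∈ C) = ∅ := by
  apply Finset.filter_false_of_mem
  intro e he hall
  obtain ⟨x, y, rfl, _, hx, _⟩ := btwF_decomp (h he)
  exact Finset.disjoint_left.1 hd hx (hall x (Sym2.mem_iff.2 (Or.inl rfl)))

lemma sideE (D dd k EA : ℤ) (hD : 20 ≤ D) (hdle : 2*dd ≤ D) (hdge : D ≤ 2*dd+1)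
    (h2k : 2*k ≤ D) (hk : 0 ≤ k) (h : D*k+1 ≤ 2*EA) : (k-1)*(dd+1) < EA := by
  nlinarith [mul_nonneg hk (by linarith : (0:ℤ) ≤ D+2-(2*dd+2))]

lemma sideQ (D k EA : ℤ) (hD : 20 ≤ D) (hk : 0 ≤ k) (h : D*k+1 ≤ 2*EA) :
    20*k+1 ≤ 2*EA := by
  nlinarith

set_option maxHeartbeats 2000000 in
/-- Lemma: a `D`-balanced graph either contains suitable matchings inside `A1` and `A2`,
or it has a spanning `D`-balanced subgraph whose edges lie in
`G[C1] ∪ G[C2] ∪ G[A1 ∪ B1, A2]` for some `C1 ∈ {A1,B1}`, `C2 ∈ {A2,B2}`. -/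
theorem remove_edges {V : Type*} [Fintype V] [DecidableEq V]
    (D : ℕ) (hD : 20 ≤ D)
    (G : SimpleGraph V) (A1 B1 A2 B2 : Finset V)
    (h12 : Disjoint A1 B1) (h13 : Disjoint A1 A2) (h14 : Disjoint A1 B2)
    (h23 : Disjoint B1 A2) (h24 : Disjoint B1 B2) (h34 : Disjoint A2 B2)
    (hcover : A1 ∪ B1 ∪ A2 ∪ B2 = Finset.univ)
    (hsize1 : B1.card ≤ A1.card) (hsize1' : 2 * (A1.card - B1.card) ≤ D)
    (hsize2 : B2.card ≤ A2.card) (hsize2' : 2 * (A2.card - B2.card) ≤ D)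
    (hAB : eBtw G A1 B2 ≤ eBtw G B1 A2)
    (hdeg1 : ∀ v ∈ A1, 2 * dS G v A1 ≤ D)
    (hdeg2 : ∀ v ∈ A2, 2 * dS G v A2 ≤ D)
    (hbal : IsBalancedWrt G (D : ℤ) A1 B1 A2 B2) :
    (∃ M1 M2 : Finset (Sym2 V),
      IsMatchingIn G M1 ∧ (∀ e ∈ M1, ∀ v ∈ e, v ∈ A1) ∧
        M1.card = A1.card - B1.card ∧
        ((A1.card : ℤ) - B1.card ≤ ⌈(eIn G A1 : ℚ) / 5 - 1/4⌉) ∧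
      IsMatchingIn G M2 ∧ (∀ e ∈ M2, ∀ v ∈ e, v ∈ A2) ∧
        M2.card = A2.card - B2.card ∧
        ((A2.card : ℤ) - B2.card ≤ ⌈(eIn G A2 : ℚ) / 5 - 1/4⌉)) ∨
    (∃ C1 C2 : Finset V, (C1 = A1 ∨ C1 = B1) ∧ (C2 = A2 ∨ C2 = B2) ∧
      ∃ G' : SimpleGraph V, G' ≤ G ∧ IsBalancedWrt G' (D : ℤ) A1 B1 A2 B2 ∧
        ∀ e ∈ G'.edgeSet,
          (∀ v ∈ e, v ∈ C1) ∨ (∀ v ∈ e, v ∈ C2) ∨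
          (∃ a ∈ A1 ∪ B1, ∃ b ∈ A2, e = s(a, b))) := by
  classical
  obtain ⟨hbal1, hbal2⟩ := hbal
  rw [eBtw_union_right G h13 h14 h34, eBtw_union_right G h23 h24 h34] at hbal1
  rw [eBtw_union_right G h13.symm h23.symm h12, eBtw_union_right G h14.symm h24.symm h12,
    eBtw_comm (G := G) A2 A1, eBtw_comm (G := G) A2 B1, eBtw_comm (G := G) B2 A1,
    eBtw_comm (G := G) B2 B1] at hbal2
  push_cast at hbal1 hbal2
  have hk1 : (0:ℤ) ≤ (A1.card : ℤ) - B1.card := by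
    have : (B1.card : ℤ) ≤ A1.card := by exact_mod_cast hsize1
    omega
  have hk2 : (0:ℤ) ≤ (A2.card : ℤ) - B2.card := by
    have : (B2.card : ℤ) ≤ A2.card := by exact_mod_cast hsize2
    omega
  have hDk1 : (0:ℤ) ≤ (D:ℤ) * ((A1.card : ℤ) - B1.card) :=
    mul_nonneg (by positivity) hk1
  have hDk2 : (0:ℤ) ≤ (D:ℤ) * ((A2.card : ℤ) - B2.card) :=
    mul_nonneg (by positivity) hk2
  have harith := arith_core (eIn G A1) (eIn G B1) (eIn G A2) (eIn G B2)
    (eBtw G A1 A2) (eBtw G B1 A2) (eBtw G A1 B2) (eBtw G B1 B2)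
    (by positivity) (by positivity) (by positivity) (by positivity)
    (by positivity) (by positivity) (by exact_mod_cast hAB) (by positivity)
    (by linarith) (by linarith)
  rcases harith with ⟨a, b, ha1, ha2, hb1, hb2, hab1, hab2, hba1, hba2⟩ |
    ⟨hcase1, hcase2⟩
  · -- branch (ii) : remove edges
    right
    obtain ⟨C1, S1', hS1sub, hS1spec⟩ :=
      side_piece G A1 B1 ((eIn G A1 : ℤ) - eIn G B1 + a) (by omega) (by omega)
    obtain ⟨C2, S2', hS2sub, hS2spec⟩ :=
      side_piece G A2 B2 ((eIn G A2 : ℤ) - eIn G B2 + b) (by omega) (by omega)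
    have hxle : ((eBtw G A1 A2 : ℤ) - eBtw G B1 B2 - (a+b)).toNat ≤ (btwF G A1 A2).card := by
      rw [← eBtw_eq_card]
      omega
    obtain ⟨SX, hSXsub, hSXcard⟩ := Finset.exists_subset_card_eq hxle
    have hyle : ((eBtw G B1 A2 : ℤ) - eBtw G A1 B2 - (b - a)).toNat
        ≤ (btwF G B1 A2).card := by
      rw [← eBtw_eq_card]
      omega
    obtain ⟨SY, hSYsub, hSYcard⟩ := Finset.exists_subset_card_eq hyle
    have hSXc : (SX.card : ℤ) = (eBtw G A1 A2 : ℤ) - eBtw G B1 B2 - (a+b) := by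
      rw [hSXcard]; omega
    have hSYc : (SY.card : ℤ) = (eBtw G B1 A2 : ℤ) - eBtw G A1 B2 - (b-a) := by
      rw [hSYcard]; omega
    have hC1or : C1 = A1 ∨ C1 = B1 := by
      rcases hS1spec with ⟨h, _⟩ | ⟨h, _⟩
      exacts [Or.inl h, Or.inr h]
    have hC2or : C2 = A2 ∨ C2 = B2 := by
      rcases hS2spec with ⟨h, _⟩ | ⟨h, _⟩
      exacts [Or.inl h, Or.inr h]
    have hdC1A2 : Disjoint C1 A2 := by rcases hC1or with rfl | rfl; exacts [h13, h23]
    have hdC1B2 : Disjoint C1 B2 := by rcases hC1or with rfl | rfl; exacts [h14, h24]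
    have hdC2A1 : Disjoint C2 A1 := by rcases hC2or with rfl | rfl; exacts [h13.symm, h14.symm]
    have hdC2B1 : Disjoint C2 B1 := by rcases hC2or with rfl | rfl; exacts [h23.symm, h24.symm]
    set E' : Finset (Sym2 V) := S1' ∪ S2' ∪ SX ∪ SY with hE'
    have hsubG : E' ⊆ G.edgeFinset := by
      intro e he
      rw [hE'] at he
      rcases Finset.mem_union.1 he with he | he
      · rcases Finset.mem_union.1 he with he | he
        · rcases Finset.mem_union.1 he with he | he
          · exact (Finset.mem_filter.1 (hS1sub he)).1
          · exact (Finset.mem_filter.1 (hS2sub he)).1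
        · exact (Finset.mem_filter.1 (hSXsub he)).1
      · exact (Finset.mem_filter.1 (hSYsub he)).1
    set G' := SimpleGraph.fromEdgeSet (↑E' : Set (Sym2 V)) with hG'
    have hset : G'.edgeSet = (↑E' : Set (Sym2 V)) := by
      rw [hG', SimpleGraph.edgeSet_fromEdgeSet]
      apply sdiff_eq_left.2
      rw [Set.disjoint_left]
      intro e he hdiag
      have heG := hsubG (Finset.mem_coe.1 he)
      rw [SimpleGraph.mem_edgeFinset] at heG
      exact (SimpleGraph.not_isDiag_of_mem_edgeSet G heG) hdiag
    have cIn : ∀ (T : Finset V), inF G' T =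
        ((S1'.filter (fun e => ∀ v ∈ e, v ∈ T) ∪ S2'.filter (fun e => ∀ v ∈ e, v ∈ T)) ∪
          SX.filter (fun e => ∀ v ∈ e, v ∈ T)) ∪ SY.filter (fun e => ∀ v ∈ e, v ∈ T) := by
      intro T
      have h0 : inF G' T = E'.filter (fun e => ∀ v ∈ e, v ∈ T) := by
        ext e
        simp only [inF_def, Finset.mem_filter, SimpleGraph.mem_edgeFinset, hset,
          Finset.mem_coe]
      rw [h0, hE', Finset.filter_union, Finset.filter_union, Finset.filter_union]
    have cBtw : ∀ (S T : Finset V), btwF G' S T =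
        ((S1'.filter (fun e => ∃ a ∈ S, ∃ b ∈ T, e = s(a,b)) ∪
          S2'.filter (fun e => ∃ a ∈ S, ∃ b ∈ T, e = s(a,b))) ∪
          SX.filter (fun e => ∃ a ∈ S, ∃ b ∈ T, e = s(a,b))) ∪
          SY.filter (fun e => ∃ a ∈ S, ∃ b ∈ T, e = s(a,b)) := by
      intro S T
      have h0 : btwF G' S T = E'.filter (fun e => ∃ a ∈ S, ∃ b ∈ T, e = s(a,b)) := by
        ext e
        simp only [btwF_def, Finset.mem_filter, SimpleGraph.mem_edgeFinset, hset,
          Finset.mem_coe]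
      rw [h0, hE', Finset.filter_union, Finset.filter_union, Finset.filter_union]
    -- side-1 internal counts
    have hkey1 : (eIn G' A1 : ℤ) - (eIn G' B1 : ℤ) = (eIn G A1 : ℤ) - eIn G B1 + a := by
      rcases hS1spec with ⟨h, hcard⟩ | ⟨h, hcard⟩ <;> rw [h] at hS1sub
      · have e1 : eIn G' A1 = S1'.card := by
          rw [eIn_eq_card, cIn A1, keep_in hS1sub, kill_in_in hS2sub hdC2A1,
            kill_btw_in hSXsub h13.symm, kill_btw_in hSYsub h13.symm]
          simp
        have e2 : eIn G' B1 = 0 := by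
          rw [eIn_eq_card, cIn B1, kill_in_in hS1sub h12, kill_in_in hS2sub hdC2B1,
            kill_btw_in hSXsub h23.symm, kill_btw_in hSYsub h23.symm]
          simp
        rw [e1, e2]
        push_cast
        linarith [hcard]
      · have e1 : eIn G' A1 = 0 := by
          rw [eIn_eq_card, cIn A1, kill_in_in hS1sub h12.symm, kill_in_in hS2sub hdC2A1,
            kill_btw_in hSXsub h13.symm, kill_btw_in hSYsub h13.symm]
          simp
        have e2 : eIn G' B1 = S1'.card := by
          rw [eIn_eq_card, cIn B1, keep_in hS1sub, kill_in_in hS2sub hdC2B1,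
            kill_btw_in hSXsub h23.symm, kill_btw_in hSYsub h23.symm]
          simp
        rw [e1, e2]
        push_cast
        linarith [hcard]
    have hkey2 : (eIn G' A2 : ℤ) - (eIn G' B2 : ℤ) = (eIn G A2 : ℤ) - eIn G B2 + b := by
      rcases hS2spec with ⟨h, hcard⟩ | ⟨h, hcard⟩ <;> rw [h] at hS2sub
      · have e1 : eIn G' A2 = S2'.card := by
          rw [eIn_eq_card, cIn A2, kill_in_in hS1sub hdC1A2, keep_in hS2sub,
            kill_btw_in_left hSXsub h13, kill_btw_in_left hSYsub h23]
          simp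
        have e2 : eIn G' B2 = 0 := by
          rw [eIn_eq_card, cIn B2, kill_in_in hS1sub hdC1B2, kill_in_in hS2sub h34,
            kill_btw_in_left hSXsub h14, kill_btw_in_left hSYsub h24]
          simp
        rw [e1, e2]
        push_cast
        linarith [hcard]
      · have e1 : eIn G' A2 = 0 := by
          rw [eIn_eq_card, cIn A2, kill_in_in hS1sub hdC1A2, kill_in_in hS2sub h34.symm,
            kill_btw_in_left hSXsub h13, kill_btw_in_left hSYsub h23]
          simp
        have e2 : eIn G' B2 = S2'.card := by
          rw [eIn_eq_card, cIn B2, kill_in_in hS1sub hdC1B2, keep_in hS2sub,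
            kill_btw_in_left hSXsub h14, kill_btw_in_left hSYsub h24]
          simp
        rw [e1, e2]
        push_cast
        linarith [hcard]
    -- cross counts
    have hkeyX : (eBtw G' A1 (A2 ∪ B2) : ℤ) = (eBtw G A1 A2 : ℤ) - eBtw G B1 B2 - (a+b) := by
      have e1 : eBtw G' A1 (A2 ∪ B2) = SX.card := by
        rw [eBtw_eq_card, cBtw A1 (A2 ∪ B2),
          kill_in_btw_right hS1sub (Finset.disjoint_union_right.2 ⟨hdC1A2, hdC1B2⟩),
          kill_in_btw_left hS2sub hdC2A1,
          keep_btw hSXsub (le_refl A1) Finset.subset_union_left,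
          kill_btw_btw hSYsub h12.symm h13.symm]
        simp
      rw [e1, hSXc]
    have hkeyY : (eBtw G' B1 (A2 ∪ B2) : ℤ) = (eBtw G B1 A2 : ℤ) - eBtw G A1 B2 - (b-a) := by
      have e1 : eBtw G' B1 (A2 ∪ B2) = SY.card := by
        rw [eBtw_eq_card, cBtw B1 (A2 ∪ B2),
          kill_in_btw_right hS1sub (Finset.disjoint_union_right.2
            ⟨hdC1A2, hdC1B2⟩),
          kill_in_btw_left hS2sub hdC2B1,
          kill_btw_btw hSXsub h12 h23.symm,
          keep_btw hSYsub (le_refl B1) Finset.subset_union_left]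
        simp
      rw [e1, hSYc]
    have hkeyXY : (eBtw G' A2 (A1 ∪ B1) : ℤ) = (SX.card : ℤ) + SY.card := by
      have e1 : eBtw G' A2 (A1 ∪ B1) = (SX ∪ SY).card := by
        rw [eBtw_eq_card, cBtw A2 (A1 ∪ B1),
          kill_in_btw_left hS1sub hdC1A2,
          kill_in_btw_right hS2sub (Finset.disjoint_union_right.2 ⟨hdC2A1, hdC2B1⟩),
          keep_btw_rev hSXsub (le_refl A2) Finset.subset_union_left,
          keep_btw_rev hSYsub (le_refl A2) Finset.subset_union_right]
        simp
      rw [e1, Finset.card_union_of_disjoint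
        (btw_classes_disjoint hSXsub hSYsub h12 h23.symm)]
      push_cast
      ring
    have hkeyB2 : (eBtw G' B2 (A1 ∪ B1) : ℤ) = 0 := by
      have e1 : eBtw G' B2 (A1 ∪ B1) = (∅ : Finset (Sym2 V)).card := by
        rw [eBtw_eq_card, cBtw B2 (A1 ∪ B1),
          kill_in_btw_left hS1sub hdC1B2,
          kill_in_btw_right hS2sub (Finset.disjoint_union_right.2 ⟨hdC2A1, hdC2B1⟩),
          kill_btw_btw hSXsub h14 h34,
          kill_btw_btw hSYsub h24 h34]
        simp
      rw [e1]
      simp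
    refine ⟨C1, C2, hC1or, hC2or, G', ?_, ⟨?_, ?_⟩, ?_⟩
    · rw [hG']
      exact fromEdgeSet_le_graph hsubG
    · linarith [hkey1, hkeyX, hkeyY, hbal1]
    · linarith [hkey2, hkeyXY, hkeyB2, hSXc, hSYc, hbal2]
    · intro e he
      have heE : e ∈ E' := by
        rw [hset] at he
        exact Finset.mem_coe.1 he
      rw [hE'] at heE
      rcases Finset.mem_union.1 heE with he' | he'
      · rcases Finset.mem_union.1 he' with he'' | he''
        · rcases Finset.mem_union.1 he'' with h1 | h1
          · exact Or.inl (fun v hv => (Finset.mem_filter.1 (hS1sub h1)).2 v hv)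
          · exact Or.inr (Or.inl (fun v hv => (Finset.mem_filter.1 (hS2sub h1)).2 v hv))
        · obtain ⟨x, y, rfl, _, hx, hy⟩ := btwF_decomp (hSXsub he'')
          exact Or.inr (Or.inr ⟨x, Finset.mem_union_left _ hx, y, hy, rfl⟩)
      · obtain ⟨x, y, rfl, _, hx, hy⟩ := btwF_decomp (hSYsub he')
        exact Or.inr (Or.inr ⟨x, Finset.mem_union_right _ hx, y, hy, rfl⟩)
  · -- branch (i) : matchings
    left
    have hd2 : ∀ v ∈ A1, dS G v A1 ≤ D / 2 := fun v hv => by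
      have := hdeg1 v hv; omega
    have hd2' : ∀ v ∈ A2, dS G v A2 ≤ D / 2 := fun v hv => by
      have := hdeg2 v hv; omega
    set k1 := A1.card - B1.card with hk1def
    set k2 := A2.card - B2.card with hk2def
    have hk1cast : (k1 : ℤ) = (A1.card : ℤ) - B1.card := by
      rw [hk1def, Nat.cast_sub hsize1]
    have hk2cast : (k2 : ℤ) = (A2.card : ℤ) - B2.card := by
      rw [hk2def, Nat.cast_sub hsize2]
    have hk1nn : (0:ℤ) ≤ (k1:ℤ) := by positivity
    have hk2nn : (0:ℤ) ≤ (k2:ℤ) := by positivity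
    have hD20 : (20:ℤ) ≤ (D:ℤ) := by exact_mod_cast hD
    have hdle : 2 * ((D/2 : ℕ):ℤ) ≤ (D:ℤ) := by
      have : 2 * (D/2) ≤ D := by omega
      exact_mod_cast this
    have hdge : (D:ℤ) ≤ 2 * ((D/2 : ℕ):ℤ) + 1 := by
      have : D ≤ 2 * (D/2) + 1 := by omega
      exact_mod_cast this
    have h2k1 : 2 * (k1:ℤ) ≤ (D:ℤ) := by
      rw [hk1def]
      exact_mod_cast hsize1'
    have h2k2 : 2 * (k2:ℤ) ≤ (D:ℤ) := by
      rw [hk2def]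
      exact_mod_cast hsize2'
    have hcase1' : (k1:ℤ) = 0 ∨ (D:ℤ)*(k1:ℤ) + 1 ≤ 2 * eIn G A1 := by
      rcases hcase1 with h | h
      · left
        have h0 : (D:ℤ) * ((A1.card:ℤ) - B1.card) = 0 := by linarith
        rcases mul_eq_zero.1 h0 with h0 | h0
        · exfalso; omega
        · omega
      · right
        rw [hk1cast]
        linarith
    have hcase2' : (k2:ℤ) = 0 ∨ (D:ℤ)*(k2:ℤ) + 1 ≤ 2 * eIn G A2 := by
      rcases hcase2 with h | h
      · left
        have h0 : (D:ℤ) * ((A2.card:ℤ) - B2.card) = 0 := by linarith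
        rcases mul_eq_zero.1 h0 with h0 | h0
        · exfalso; omega
        · omega
      · right
        rw [hk2cast]
        linarith
    have hEA1nn : (0:ℤ) ≤ (eIn G A1 : ℤ) := by positivity
    have hEA2nn : (0:ℤ) ≤ (eIn G A2 : ℤ) := by positivity
    have h0d : (0:ℤ) ≤ ((D/2 : ℕ):ℤ) := by positivity
    have hE1 : ((k1:ℤ) - 1) * (((D/2 : ℕ):ℤ) + 1) < (eIn G A1 : ℤ) := by
      rcases hcase1' with h | h
      · rw [h]
        linarith
      · exact sideE (D:ℤ) ((D/2:ℕ):ℤ) (k1:ℤ) _ hD20 hdle hdge h2k1 hk1nn h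
    have hE2 : ((k2:ℤ) - 1) * (((D/2 : ℕ):ℤ) + 1) < (eIn G A2 : ℤ) := by
      rcases hcase2' with h | h
      · rw [h]
        linarith
      · exact sideE (D:ℤ) ((D/2:ℕ):ℤ) (k2:ℤ) _ hD20 hdle hdge h2k2 hk2nn h
    obtain ⟨M1, hM1, hM1card⟩ := exists_matchIn_card (G := G) A1 (D/2) k1 hd2 hE1
    obtain ⟨M2, hM2, hM2card⟩ := exists_matchIn_card (G := G) A2 (D/2) k2 hd2' hE2
    have hceil1 : (A1.card : ℤ) - B1.card ≤ ⌈(eIn G A1 : ℚ) / 5 - 1/4⌉ := by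
      rw [← hk1cast]
      have hlt : ((k1:ℤ) - 1 : ℤ) < ⌈(eIn G A1 : ℚ) / 5 - 1/4⌉ := by
        rw [Int.lt_ceil]
        have hEq : (0:ℚ) ≤ (eIn G A1 : ℚ) := by positivity
        by_cases hk0 : (k1:ℤ) = 0
        · have hk0' : (k1:ℚ) = 0 := by exact_mod_cast hk0
          push_cast
          rw [hk0']
          linarith
        · have h : (D:ℤ)*(k1:ℤ) + 1 ≤ 2 * eIn G A1 := by
            rcases hcase1' with h | h
            · exact absurd h hk0
            · exact h
          have hq := sideQ (D:ℤ) (k1:ℤ) _ hD20 hk1nn h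
          have hq' : 20 * (k1:ℚ) + 1 ≤ 2 * (eIn G A1 : ℚ) := by exact_mod_cast hq
          have hk1q : (1:ℚ) ≤ (k1:ℚ) := by
            have h1 : (1:ℤ) ≤ (k1:ℤ) := by omega
            exact_mod_cast h1
          push_cast
          linarith
      omega
    have hceil2 : (A2.card : ℤ) - B2.card ≤ ⌈(eIn G A2 : ℚ) / 5 - 1/4⌉ := by
      rw [← hk2cast]
      have hlt : ((k2:ℤ) - 1 : ℤ) < ⌈(eIn G A2 : ℚ) / 5 - 1/4⌉ := by
        rw [Int.lt_ceil]
        have hEq : (0:ℚ) ≤ (eIn G A2 : ℚ) := by positivity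
        by_cases hk0 : (k2:ℤ) = 0
        · have hk0' : (k2:ℚ) = 0 := by exact_mod_cast hk0
          push_cast
          rw [hk0']
          linarith
        · have h : (D:ℤ)*(k2:ℤ) + 1 ≤ 2 * eIn G A2 := by
            rcases hcase2' with h | h
            · exact absurd h hk0
            · exact h
          have hq := sideQ (D:ℤ) (k2:ℤ) _ hD20 hk2nn h
          have hq' : 20 * (k2:ℚ) + 1 ≤ 2 * (eIn G A2 : ℚ) := by exact_mod_cast hq
          have hk2q : (1:ℚ) ≤ (k2:ℚ) := by
            have h1 : (1:ℤ) ≤ (k2:ℤ) := by omega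
            exact_mod_cast h1
          push_cast
          linarith
      omega
    exact ⟨M1, M2, hM1.1, hM1.2, hM1card, hceil1, hM2.1, hM2.2, hM2card, hceil2⟩
end

section
/- Let G be a bipartite graph with vertex classes V and W such that Δ(G) ≤ Δ, and let M be a matching in G with e(M) ≤ ⌈e(G)/Δ⌉. Then there exists a matching M' in G such that e(M') = ⌈e(G)/Δ⌉ and every vertex covered by M is also covered by M'. -/
/-- The number of neighbours of `v` in the graph `P` (its degree). -/
noncomputable def pdeg {V : Type*} (P : SimpleGraph V) (v : V) : ℕ :=
  {u | P.Adj v u}.ncard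

set_option maxHeartbeats 2000000 in
/-- In a bipartite graph `G` with classes `Vs`, `Ws` and `Δ(G) ≤ Δ`, any matching `M`
with `e(M) ≤ ⌈e(G)/Δ⌉` extends to a matching `M'` of size exactly `⌈e(G)/Δ⌉`
covering all vertices covered by `M`. -/
theorem matching_extend {α : Type*} [Fintype α] [DecidableEq α]
    (G : SimpleGraph α) (Vs Ws : Finset α)
    (hdisj : Disjoint Vs Ws) (hcover : Vs ∪ Ws = Finset.univ)
    (hbip : ∀ a b : α, G.Adj a b → (a ∈ Vs ∧ b ∈ Ws) ∨ (a ∈ Ws ∧ b ∈ Vs))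
    (Δ : ℕ) (hΔ : ∀ v, pdeg G v ≤ Δ)
    (M : Finset (Sym2 α)) (hM : IsMatchingIn G M)
    (hMcard : (M.card : ℤ) ≤ ⌈(G.edgeSet.ncard : ℚ) / Δ⌉) :
    ∃ M' : Finset (Sym2 α), IsMatchingIn G M' ∧
      (M'.card : ℤ) = ⌈(G.edgeSet.ncard : ℚ) / Δ⌉ ∧
      ∀ v : α, (∃ e ∈ M, v ∈ e) → (∃ e' ∈ M', v ∈ e') := by
  classical
  obtain ⟨hMsub, hMpair⟩ := hM
  have hdisj' : ∀ a : α, a ∈ Vs → a ∈ Ws → False := fun a h1 h2 =>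
    Finset.disjoint_left.mp hdisj h1 h2
  -- the partner function of the matching M
  set cov : α → Prop := fun a => ∃ e ∈ M, a ∈ e with hcovdef
  have hpex : ∀ a, cov a → ∃ b, s(a, b) ∈ M := by
    rintro a ⟨e, he, hae⟩
    exact ⟨Sym2.Mem.other' hae, by rwa [Sym2.other_spec' hae]⟩
  set p : α → α := fun a => if h : ∃ b, s(a, b) ∈ M then h.choose else a with hpdef
  have hpM : ∀ a, cov a → s(a, p a) ∈ M := by
    intro a ha
    have h := hpex a ha
    simp only [hpdef, dif_pos h]
    exact h.choose_spec
  have hpcov : ∀ a, cov a → cov (p a) := fun a ha =>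
    ⟨_, hpM a ha, Sym2.mem_mk_right _ _⟩
  have hedge_unique : ∀ e ∈ M, ∀ f ∈ M, ∀ v : α, v ∈ e → v ∈ f → e = f := by
    intro e he f hf v hv hvf
    by_contra hne
    exact hMpair he hf hne v ⟨hv, hvf⟩
  have hpp : ∀ a, cov a → p (p a) = a := by
    intro a ha
    have h1 := hpM a ha
    have h2 := hpM (p a) (hpcov a ha)
    have h3 := hedge_unique _ h1 _ h2 (p a) (Sym2.mem_mk_right _ _) (Sym2.mem_mk_left _ _)
    rw [Sym2.eq_iff] at h3
    rcases h3 with ⟨h4, h5⟩ | ⟨h4, h5⟩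
    · rw [← h5, ← h4]
    · exact h4.symm
  have hpinj : ∀ a, cov a → ∀ b, cov b → p a = p b → a = b := by
    intro a ha b hb h
    rw [← hpp a ha, ← hpp b hb, h]
  have hpadj : ∀ a, cov a → G.Adj a (p a) := fun a ha =>
    G.mem_edgeSet.mp (hMsub (Finset.mem_coe.mpr (hpM a ha)))
  -- degrees
  have hdeg : ∀ v, G.degree v ≤ Δ := by
    intro v
    have h := hΔ v
    rwa [pdeg, show {u | G.Adj v u} = G.neighborSet v from rfl,
      Set.ncard_eq_toFinset_card', Set.toFinset_card,
      SimpleGraph.card_neighborSet_eq_degree] at h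
  have hE : G.edgeSet.ncard = G.edgeFinset.card := by
    rw [Set.ncard_eq_toFinset_card']
    unfold SimpleGraph.edgeFinset
    congr
  set E := G.edgeFinset with hEdef
  -- edge counting: if every edge meets X then e(G) ≤ Δ * |X|
  have hcount : ∀ X : Finset α, (∀ ed ∈ E, ∃ x ∈ X, x ∈ ed) → E.card ≤ Δ * X.card := by
    intro X hX
    have hsub : E ⊆ X.biUnion (fun x => G.incidenceFinset x) := by
      intro ed hed
      obtain ⟨x, hx, hxe⟩ := hX ed hed
      refine Finset.mem_biUnion.mpr ⟨x, hx, ?_⟩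
      rw [SimpleGraph.mem_incidenceFinset]
      exact ⟨SimpleGraph.mem_edgeFinset.mp hed, hxe⟩
    calc E.card ≤ (X.biUnion (fun x => G.incidenceFinset x)).card := Finset.card_le_card hsub
      _ ≤ ∑ x ∈ X, (G.incidenceFinset x).card := Finset.card_biUnion_le
      _ ≤ ∑ _x ∈ X, Δ := Finset.sum_le_sum (fun x _ => by
          rw [SimpleGraph.card_incidenceFinset_eq_degree]; exact hdeg x)
      _ = Δ * X.card := by rw [Finset.sum_const, smul_eq_mul, mul_comm]
  set n := Vs.card with hn
  set m := Ws.card with hm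
  set e := E.card with hedef
  have hEe : (G.edgeSet.ncard : ℚ) = (e : ℚ) := by rw [hE]
  -- every edge meets Vs, and meets Ws
  have hmeet : ∀ ed ∈ E, ∀ X : Finset α, (Vs ⊆ X ∨ Ws ⊆ X) → (∃ x ∈ X, x ∈ ed) := by
    intro ed hed X hx
    induction ed using Sym2.ind with
    | _ a b =>
      have hadj : G.Adj a b := SimpleGraph.mem_edgeFinset.mp hed
      rcases hbip a b hadj with ⟨h1, h2⟩ | ⟨h1, h2⟩ <;> rcases hx with hx | hx
      · exact ⟨a, hx h1, Sym2.mem_mk_left _ _⟩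
      · exact ⟨b, hx h2, Sym2.mem_mk_right _ _⟩
      · exact ⟨b, hx h2, Sym2.mem_mk_right _ _⟩
      · exact ⟨a, hx h1, Sym2.mem_mk_left _ _⟩
  have heVn : e ≤ Δ * n := hcount Vs (fun ed hed => hmeet ed hed Vs (Or.inl subset_rfl))
  have heWm : e ≤ Δ * m := hcount Ws (fun ed hed => hmeet ed hed Ws (Or.inr subset_rfl))
  rw [hEe] at hMcard ⊢
  -- the trivial case Δ = 0
  rcases Nat.eq_zero_or_pos Δ with hΔ0 | hΔpos
  · subst hΔ0
    have he0 : e = 0 := by omega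
    have hM0 : M = ∅ := by
      have := hMcard
      rw [he0] at this
      simp only [Nat.cast_zero, Nat.cast_ofNat, CharP.cast_eq_zero, zero_div] at this
      have hc : (M.card : ℤ) ≤ 0 := by simpa using this
      have : M.card = 0 := by exact_mod_cast le_antisymm hc (by positivity)
      exact Finset.card_eq_zero.mp this
    refine ⟨∅, ⟨by simp, by simp⟩, ?_, ?_⟩
    · rw [he0]; simp
    · intro v hv; rw [hM0] at hv; simp at hv
  -- main case
  have hΔQ : (0 : ℚ) < (Δ : ℚ) := by exact_mod_cast hΔpos
  set r : ℤ := ⌈(e : ℚ) / (Δ : ℚ)⌉ with hr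
  have hr0 : 0 ≤ r := Int.ceil_nonneg (by positivity)
  set k : ℕ := r.toNat with hkdef
  have hkr : (k : ℤ) = r := Int.toNat_of_nonneg hr0
  have hceil_le : ∀ z : ℕ, (e : ℕ) ≤ Δ * z → k ≤ z := by
    intro z hz
    have h1 : (e : ℚ) / (Δ : ℚ) ≤ (z : ℚ) := by
      rw [div_le_iff₀ hΔQ]
      have : (e : ℚ) ≤ (Δ : ℚ) * (z : ℚ) := by exact_mod_cast hz
      linarith
    have h2 : r ≤ (z : ℤ) := Int.ceil_le.mpr (by exact_mod_cast h1)
    omega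
  have hkn : k ≤ n := hceil_le n heVn
  have hkm : k ≤ m := hceil_le m heWm
  have hMk : M.card ≤ k := by
    have : (M.card : ℤ) ≤ r := hMcard
    omega
  -- covered vertices on each side
  set S : Finset α := Vs.filter cov with hSdef
  set T : Finset α := Ws.filter cov with hTdef
  have hpT : ∀ a ∈ S, p a ∈ T := by
    intro a ha
    rw [hSdef, Finset.mem_filter] at ha
    obtain ⟨haV, hacov⟩ := ha
    have hadj := hpadj a hacov
    rw [hTdef, Finset.mem_filter]
    rcases hbip a (p a) hadj with ⟨h1, h2⟩ | ⟨h1, h2⟩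
    · exact ⟨h2, hpcov a hacov⟩
    · exact absurd h1 (fun h => hdisj' a haV h)
  have hpS : ∀ a ∈ T, p a ∈ S := by
    intro a ha
    rw [hTdef, Finset.mem_filter] at ha
    obtain ⟨haW, hacov⟩ := ha
    have hadj := hpadj a hacov
    rw [hSdef, Finset.mem_filter]
    rcases hbip a (p a) hadj with ⟨h1, h2⟩ | ⟨h1, h2⟩
    · exact absurd haW (fun h => hdisj' a h1 h)
    · exact ⟨h2, hpcov a hacov⟩
  have hTM : T.card ≤ M.card := by
    apply Finset.card_le_card_of_injOn (fun a => s(a, p a))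
    · intro a ha
      rw [hTdef, Finset.mem_coe, Finset.mem_filter] at ha
      exact hpM a ha.2
    · intro a ha b hb hab
      simp only [Sym2.eq_iff] at hab
      rcases hab with ⟨h1, _⟩ | ⟨h1, h2⟩
      · exact h1
      · exfalso
        have haT : a ∈ T := ha
        have hbT : b ∈ T := hb
        have := hpS b hbT
        rw [← h1] at this
        rw [hSdef, Finset.mem_filter] at this
        rw [hTdef, Finset.mem_filter] at haT
        exact hdisj' a this.1 haT.1
  have hTk : T.card ≤ k := le_trans hTM hMk
  -- neighborhoods land in Ws
  have hnbrW : ∀ a ∈ Vs, ∀ b ∈ G.neighborFinset a, b ∈ Ws := by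
    intro a ha b hb
    rw [SimpleGraph.mem_neighborFinset] at hb
    rcases hbip a b hb with ⟨h1, h2⟩ | ⟨h1, h2⟩
    · exact h2
    · exact absurd h1 (fun h => hdisj' a ha h)
  -- the Hall family
  set tt : ({x // x ∈ Vs} ⊕ Fin (m - k)) → Finset (α ⊕ Fin (n - k)) := fun x =>
    Sum.elim
      (fun v : {x // x ∈ Vs} => (G.neighborFinset (v : α)).image Sum.inl ∪
        (if (v : α) ∈ S then (∅ : Finset (α ⊕ Fin (n - k))) else Finset.univ.image Sum.inr))
      (fun _ => (Ws \ T).image Sum.inl) x with htt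
  have hhall : ∀ A : Finset ({x // x ∈ Vs} ⊕ Fin (m - k)), A.card ≤ (A.biUnion tt).card := by
    intro A
    set NB := A.biUnion tt with hNBdef
    set AV : Finset {x // x ∈ Vs} := Finset.univ.filter (fun v => Sum.inl v ∈ A) with hAVdef
    set A1 : Finset α := AV.image Subtype.val with hA1def
    have hA1V : A1 ⊆ Vs := by
      intro a ha
      rw [hA1def, Finset.mem_image] at ha
      obtain ⟨v, _, rfl⟩ := ha
      exact v.2
    have hA1card : A1.card = AV.card := Finset.card_image_of_injective _ Subtype.val_injective
    set A2 : Finset (Fin (m - k)) := Finset.univ.filter (fun c => Sum.inr c ∈ A) with hA2def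
    have hAcard : A.card = AV.card + A2.card := by
      have hAeq : A = AV.image Sum.inl ∪ A2.image Sum.inr := by
        ext x
        cases x with
        | inl v => simp [hAVdef, hA2def]
        | inr c => simp [hAVdef, hA2def]
      have hdis : Disjoint (AV.image Sum.inl) (A2.image Sum.inr) := by
        rw [Finset.disjoint_left]
        rintro x hx hx'
        rw [Finset.mem_image] at hx hx'
        obtain ⟨v, _, rfl⟩ := hx
        obtain ⟨c, _, hc⟩ := hx'
        cases hc
      rw [hAeq, Finset.card_union_of_disjoint hdis,
        Finset.card_image_of_injective _ Sum.inl_injective,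
        Finset.card_image_of_injective _ Sum.inr_injective]
    set P : Finset α := A1.biUnion (fun a => G.neighborFinset a) with hPdef
    set NBa : Finset α := Finset.univ.filter (fun a => Sum.inl a ∈ NB) with hNBadef
    set NBc : Finset (Fin (n - k)) := Finset.univ.filter (fun c => Sum.inr c ∈ NB) with hNBcdef
    have hNBcard : NBa.card + NBc.card ≤ NB.card := by
      have hsub : NBa.image Sum.inl ∪ NBc.image Sum.inr ⊆ NB := by
        intro x hx
        rw [Finset.mem_union] at hx
        rcases hx with hx | hx <;> rw [Finset.mem_image] at hx
        · obtain ⟨a, ha, rfl⟩ := hx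
          exact (Finset.mem_filter.mp ha).2
        · obtain ⟨c, hc, rfl⟩ := hx
          exact (Finset.mem_filter.mp hc).2
      have hdis : Disjoint (NBa.image Sum.inl) (NBc.image Sum.inr) := by
        rw [Finset.disjoint_left]
        rintro x hx hx'
        rw [Finset.mem_image] at hx hx'
        obtain ⟨a, _, rfl⟩ := hx
        obtain ⟨c, _, hc⟩ := hx'
        cases hc
      calc NBa.card + NBc.card = (NBa.image Sum.inl ∪ NBc.image Sum.inr).card := by
            rw [Finset.card_union_of_disjoint hdis,
              Finset.card_image_of_injective _ Sum.inl_injective,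
              Finset.card_image_of_injective _ Sum.inr_injective]
        _ ≤ NB.card := Finset.card_le_card hsub
    have hPNB : P ⊆ NBa := by
      intro b hb
      rw [hNBadef, Finset.mem_filter]
      refine ⟨Finset.mem_univ _, ?_⟩
      rw [hPdef, Finset.mem_biUnion] at hb
      obtain ⟨a, ha, hb⟩ := hb
      rw [hA1def, Finset.mem_image] at ha
      obtain ⟨v, hv, rfl⟩ := ha
      rw [hNBdef]
      refine Finset.mem_biUnion.mpr ⟨Sum.inl v, (Finset.mem_filter.mp hv).2, ?_⟩
      simp only [htt, Sum.elim_inl]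
      exact Finset.mem_union_left _ (Finset.mem_image_of_mem _ hb)
    have hcovS : ∀ a ∈ S, cov a := fun a ha => (Finset.mem_filter.mp ha).2
    have hcovT : ∀ a ∈ T, cov a := fun a ha => (Finset.mem_filter.mp ha).2
    have hA1S_PT : ∀ a ∈ A1, a ∈ S → p a ∈ P ∩ T := by
      intro a ha haS
      refine Finset.mem_inter.mpr ⟨?_, hpT a haS⟩
      rw [hPdef, Finset.mem_biUnion]
      refine ⟨a, ha, ?_⟩
      rw [SimpleGraph.mem_neighborFinset]
      exact hpadj a (hcovS a haS)
    have hB1 : A1 ⊆ S → A1.card ≤ (P ∩ T).card := by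
      intro h1
      apply Finset.card_le_card_of_injOn p
      · intro a ha
        exact hA1S_PT a ha (h1 ha)
      · intro a ha b hb hab
        exact hpinj a (hcovS _ (h1 ha)) b (hcovS _ (h1 hb)) hab
    have hB2 : T.card ≤ (P ∩ T).card + (Vs \ A1).card := by
      have hmaps : ∀ a ∈ T, (if p a ∈ A1 then a else p a) ∈ (P ∩ T) ∪ (Vs \ A1) := by
        intro a ha
        by_cases hpa : p a ∈ A1
        · simp only [if_pos hpa]
          apply Finset.mem_union_left
          refine Finset.mem_inter.mpr ⟨?_, ha⟩
          rw [hPdef, Finset.mem_biUnion]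
          refine ⟨p a, hpa, ?_⟩
          rw [SimpleGraph.mem_neighborFinset]
          exact (hpadj a (hcovT a ha)).symm
        · simp only [if_neg hpa]
          apply Finset.mem_union_right
          rw [Finset.mem_sdiff]
          exact ⟨(Finset.mem_filter.mp (hpS a ha)).1, hpa⟩
      have hinj : Set.InjOn (fun a => if p a ∈ A1 then a else p a) ↑T := by
        intro a ha b hb hab
        have ha' : a ∈ T := ha
        have hb' : b ∈ T := hb
        simp only at hab
        by_cases hpa : p a ∈ A1 <;> by_cases hpb : p b ∈ A1
        · rwa [if_pos hpa, if_pos hpb] at hab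
        · rw [if_pos hpa, if_neg hpb] at hab
          exfalso
          have h1 : a ∈ Ws := (Finset.mem_filter.mp ha').1
          have h2 : p b ∈ Vs := (Finset.mem_filter.mp (hpS b hb')).1
          rw [← hab] at h2
          exact hdisj' a h2 h1
        · rw [if_neg hpa, if_pos hpb] at hab
          exfalso
          have h1 : b ∈ Ws := (Finset.mem_filter.mp hb').1
          have h2 : p a ∈ Vs := (Finset.mem_filter.mp (hpS a ha')).1
          rw [hab] at h2
          exact hdisj' b h2 h1
        · rw [if_neg hpa, if_neg hpb] at hab
          exact hpinj a (hcovT a ha') b (hcovT b hb') hab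
      calc T.card ≤ ((P ∩ T) ∪ (Vs \ A1)).card :=
            Finset.card_le_card_of_injOn _ hmaps hinj
        _ ≤ (P ∩ T).card + (Vs \ A1).card := Finset.card_union_le _ _
    have hB3 : k ≤ P.card + (n - A1.card) := by
      apply hceil_le
      have hXmeet : ∀ ed ∈ E, ∃ x ∈ P ∪ (Vs \ A1), x ∈ ed := by
        intro ed hed
        induction ed using Sym2.ind with
        | _ a b =>
          have hadj : G.Adj a b := SimpleGraph.mem_edgeFinset.mp hed
          rcases hbip a b hadj with ⟨h1, h2⟩ | ⟨h1, h2⟩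
          · by_cases ha : a ∈ A1
            · refine ⟨b, Finset.mem_union_left _ ?_, Sym2.mem_mk_right _ _⟩
              rw [hPdef, Finset.mem_biUnion]
              exact ⟨a, ha, by rwa [SimpleGraph.mem_neighborFinset]⟩
            · exact ⟨a, Finset.mem_union_right _ (Finset.mem_sdiff.mpr ⟨h1, ha⟩),
                Sym2.mem_mk_left _ _⟩
          · by_cases hb : b ∈ A1
            · refine ⟨a, Finset.mem_union_left _ ?_, Sym2.mem_mk_left _ _⟩
              rw [hPdef, Finset.mem_biUnion]
              refine ⟨b, hb, ?_⟩
              rw [SimpleGraph.mem_neighborFinset]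
              exact hadj.symm
            · exact ⟨b, Finset.mem_union_right _ (Finset.mem_sdiff.mpr ⟨h2, hb⟩),
                Sym2.mem_mk_right _ _⟩
      have h1 := hcount _ hXmeet
      have h2 : (P ∪ (Vs \ A1)).card ≤ P.card + (Vs \ A1).card := Finset.card_union_le _ _
      have h3 : (Vs \ A1).card = n - A1.card := Finset.card_sdiff_of_subset hA1V
      calc e ≤ Δ * (P ∪ (Vs \ A1)).card := h1
        _ ≤ Δ * (P.card + (n - A1.card)) := Nat.mul_le_mul_left _ (by omega)
    have hB4 : A2.Nonempty → (Ws \ T) ⊆ NBa := by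
      rintro ⟨c, hc⟩ b hb
      rw [hNBadef, Finset.mem_filter]
      refine ⟨Finset.mem_univ _, ?_⟩
      rw [hNBdef]
      refine Finset.mem_biUnion.mpr ⟨Sum.inr c, (Finset.mem_filter.mp hc).2, ?_⟩
      simp only [htt, Sum.elim_inr]
      exact Finset.mem_image_of_mem _ hb
    have hB5 : ¬ A1 ⊆ S → NBc = Finset.univ := by
      intro h1
      obtain ⟨a, ha, haS⟩ := Finset.not_subset.mp h1
      rw [hA1def, Finset.mem_image] at ha
      obtain ⟨v, hv, rfl⟩ := ha
      ext c
      simp only [hNBcdef, Finset.mem_filter, Finset.mem_univ, true_and, iff_true]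
      rw [hNBdef]
      refine Finset.mem_biUnion.mpr ⟨Sum.inl v, (Finset.mem_filter.mp hv).2, ?_⟩
      simp only [htt, Sum.elim_inl]
      apply Finset.mem_union_right
      rw [if_neg haS]
      exact Finset.mem_image_of_mem _ (Finset.mem_univ c)
    have hB6 : A2.card ≤ m - k := by
      have := Finset.card_le_univ A2
      simpa using this
    have hPTdisj : Disjoint (P ∩ T) (Ws \ T) := by
      rw [Finset.disjoint_left]
      intro x hx hx'
      exact (Finset.mem_sdiff.mp hx').2 (Finset.mem_inter.mp hx).2
    have hTW : T ⊆ Ws := Finset.filter_subset _ _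
    have hWTcard : (Ws \ T).card = m - T.card := Finset.card_sdiff_of_subset hTW
    have hTm : T.card ≤ m := Finset.card_le_card hTW
    have hA1n : A1.card ≤ n := Finset.card_le_card hA1V
    by_cases h2 : A2.Nonempty
    · have hWT := hB4 h2
      have hNBa1 : (P ∩ T).card + (Ws \ T).card ≤ NBa.card := by
        rw [← Finset.card_union_of_disjoint hPTdisj]
        exact Finset.card_le_card
          (Finset.union_subset (Finset.inter_subset_left.trans hPNB) hWT)
      by_cases h1 : A1 ⊆ S
      · have hb1 := hB1 h1
        omega
      · have hb5 := hB5 h1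
        have hNBccard : NBc.card = n - k := by rw [hb5]; simp
        have hb2 := hB2
        have h3 : (Vs \ A1).card = n - A1.card := Finset.card_sdiff_of_subset hA1V
        omega
    · have hA2card : A2.card = 0 := by
        rw [Finset.not_nonempty_iff_eq_empty] at h2
        rw [h2]
        rfl
      by_cases h1 : A1 ⊆ S
      · have hb1 := hB1 h1
        have hle : (P ∩ T).card ≤ NBa.card :=
          Finset.card_le_card (Finset.inter_subset_left.trans hPNB)
        omega
      · have hb5 := hB5 h1
        have hNBccard : NBc.card = n - k := by rw [hb5]; simp
        have hPcard : P.card ≤ NBa.card := Finset.card_le_card hPNB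
        omega
  obtain ⟨f, hfinj, hft⟩ := (Finset.all_card_le_biUnion_card_iff_exists_injective tt).mp hhall
  have hfW : ∀ v : {x // x ∈ Vs}, ∀ w : α, f (Sum.inl v) = Sum.inl w →
      w ∈ G.neighborFinset (v : α) := by
    intro v w hw
    have h := hft (Sum.inl v)
    rw [hw] at h
    simp only [htt, Sum.elim_inl, Finset.mem_union] at h
    rcases h with h | h
    · rw [Finset.mem_image] at h
      obtain ⟨w', hw', hww⟩ := h
      rwa [← Sum.inl_injective hww]
    · exfalso
      by_cases hvS : (v : α) ∈ S
      · rw [if_pos hvS] at h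
        simp at h
      · rw [if_neg hvS, Finset.mem_image] at h
        obtain ⟨c, _, hc⟩ := h
        cases hc
  have hfB : ∀ b : Fin (m - k), ∃ w ∈ Ws \ T, f (Sum.inr b) = Sum.inl w := by
    intro b
    have h := hft (Sum.inr b)
    simp only [htt, Sum.elim_inr, Finset.mem_image] at h
    obtain ⟨w, hw, hww⟩ := h
    exact ⟨w, hw, hww.symm⟩
  have hfS : ∀ v : {x // x ∈ Vs}, (v : α) ∈ S → ∃ w, f (Sum.inl v) = Sum.inl w := by
    intro v hvS
    have h := hft (Sum.inl v)
    simp only [htt, Sum.elim_inl, if_pos hvS, Finset.union_empty, Finset.mem_image] at h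
    obtain ⟨w, _, hw⟩ := h
    exact ⟨w, hw.symm⟩
  set R : Finset (α ⊕ Fin (n - k)) := Ws.image Sum.inl ∪ Finset.univ.image Sum.inr with hRdef
  have hRdisj : Disjoint (Ws.image Sum.inl)
      ((Finset.univ : Finset (Fin (n - k))).image Sum.inr) := by
    rw [Finset.disjoint_left]
    rintro x hx hx'
    rw [Finset.mem_image] at hx hx'
    obtain ⟨a, _, rfl⟩ := hx
    obtain ⟨c, _, hc⟩ := hx'
    cases hc
  have hRcard : R.card = m + (n - k) := by
    rw [hRdef, Finset.card_union_of_disjoint hRdisj,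
      Finset.card_image_of_injective _ Sum.inl_injective,
      Finset.card_image_of_injective _ Sum.inr_injective]
    simp
    exact hm.symm
  have hfR : ∀ x, f x ∈ R := by
    intro x
    cases x with
    | inl v =>
      rcases hv : f (Sum.inl v) with w | c
      · have hw := hfW v w hv
        rw [hRdef]
        exact Finset.mem_union_left _ (Finset.mem_image_of_mem _ (hnbrW _ v.2 _ hw))
      · rw [hRdef]
        exact Finset.mem_union_right _ (Finset.mem_image_of_mem _ (Finset.mem_univ c))
    | inr b =>
      obtain ⟨w, hw, hww⟩ := hfB b
      rw [hww, hRdef]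
      exact Finset.mem_union_left _ (Finset.mem_image_of_mem _ (Finset.mem_sdiff.mp hw).1)
  have hcards : R.card ≤ (Finset.univ : Finset ({x // x ∈ Vs} ⊕ Fin (m - k))).card := by
    rw [hRcard, Finset.card_univ, Fintype.card_sum, Fintype.card_coe, Fintype.card_fin]
    omega
  have hsurj : ∀ y ∈ R, ∃ x, f x = y := by
    intro y hy
    obtain ⟨x, _, hxy⟩ := Finset.surj_on_of_inj_on_of_card_le (s := Finset.univ) (t := R)
      (fun x _ => f x) (fun x _ => hfR x) (fun a b _ _ h => hfinj h) hcards y hy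
    exact ⟨x, hxy.symm⟩
  set D : Finset {x // x ∈ Vs} := Finset.univ.filter (fun v => (f (Sum.inl v)).isLeft) with hDdef
  set wfun : {x // x ∈ Vs} → α := fun v => Sum.elim id (fun _ => (v : α)) (f (Sum.inl v))
    with hwdef
  have hfD : ∀ v ∈ D, f (Sum.inl v) = Sum.inl (wfun v) := by
    intro v hv
    rw [hDdef, Finset.mem_filter] at hv
    obtain ⟨w, hw⟩ := Sum.isLeft_iff.mp hv.2
    simp only [hwdef, hw, Sum.elim_inl, id]
  have hDS : ∀ v : {x // x ∈ Vs}, (v : α) ∈ S → v ∈ D := by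
    intro v hvS
    obtain ⟨w, hw⟩ := hfS v hvS
    rw [hDdef, Finset.mem_filter]
    refine ⟨Finset.mem_univ _, ?_⟩
    rw [hw]
    rfl
  have hadjD : ∀ v ∈ D, G.Adj (v : α) (wfun v) := by
    intro v hv
    have h := hfW v (wfun v) (hfD v hv)
    rwa [SimpleGraph.mem_neighborFinset] at h
  have hwW : ∀ v ∈ D, wfun v ∈ Ws := by
    intro v hv
    rcases hbip _ _ (hadjD v hv) with ⟨h1, h2⟩ | ⟨h1, h2⟩
    · exact h2
    · exact absurd h1 (fun h => hdisj' _ v.2 h)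
  have himg : (((Finset.univ : Finset (Fin (n - k))).image Sum.inr :
      Finset (α ⊕ Fin (n - k)))).card = n - k := by
    rw [Finset.card_image_of_injective _ Sum.inr_injective]
    simp
  set Dc : Finset {x // x ∈ Vs} :=
    Finset.univ.filter (fun v => ¬ (f (Sum.inl v)).isLeft) with hDcdef
  have hDc1 : Dc.card ≤ n - k := by
    rw [← himg]
    apply Finset.card_le_card_of_injOn (fun v => f (Sum.inl v))
    · intro v hv
      rw [hDcdef, Finset.mem_coe, Finset.mem_filter] at hv
      obtain ⟨c, hc⟩ := Sum.isRight_iff.mp (Sum.not_isLeft.mp hv.2)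
      show f (Sum.inl v) ∈ _
      rw [hc]
      exact Finset.mem_image_of_mem _ (Finset.mem_univ c)
    · intro a _ b _ hab
      exact Sum.inl_injective (hfinj hab)
  have hDc2 : n - k ≤ Dc.card := by
    rw [← himg]
    apply Finset.card_le_card_of_surjOn (fun v => f (Sum.inl v))
    intro y hy
    simp only [Finset.coe_image, Finset.coe_univ, Set.image_univ, Set.mem_range] at hy
    obtain ⟨c, rfl⟩ := hy
    have hcR : (Sum.inr c : α ⊕ Fin (n - k)) ∈ R := by
      rw [hRdef]
      exact Finset.mem_union_right _ (Finset.mem_image_of_mem _ (Finset.mem_univ c))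
    obtain ⟨x, hx⟩ := hsurj _ hcR
    cases x with
    | inl v =>
      refine ⟨v, ?_, hx⟩
      rw [Finset.mem_coe, hDcdef, Finset.mem_filter]
      refine ⟨Finset.mem_univ _, ?_⟩
      rw [hx]
      simp
    | inr b =>
      obtain ⟨w, _, hww⟩ := hfB b
      rw [hww] at hx
      exact absurd hx (by simp)
  have hDcard : D.card = k := by
    have h1 := Finset.card_filter_add_card_filter_not
      (s := (Finset.univ : Finset {x // x ∈ Vs}))
      (p := fun v => (f (Sum.inl v)).isLeft)
    have h2 : (Finset.univ : Finset {x // x ∈ Vs}).card = n := by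
      rw [Finset.card_univ, Fintype.card_coe]
    rw [← hDdef] at h1
    rw [← hDcdef] at h1
    omega
  set M' : Finset (Sym2 α) := D.image (fun v : {x // x ∈ Vs} => s((v : α), wfun v)) with hM'def
  have hM'inj : Set.InjOn (fun v : {x // x ∈ Vs} => s((v : α), wfun v)) ↑D := by
    intro a ha b hb hab
    simp only [Sym2.eq_iff] at hab
    rcases hab with ⟨h1, h2⟩ | ⟨h1, h2⟩
    · exact Subtype.ext h1
    · exfalso
      refine hdisj' (a : α) a.2 ?_
      rw [h1]
      exact hwW b hb
  have hM'card : M'.card = k := by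
    rw [hM'def, Finset.card_image_of_injOn hM'inj, hDcard]
  have hM'sub : ↑M' ⊆ G.edgeSet := by
    intro ed hed
    rw [Finset.mem_coe, hM'def, Finset.mem_image] at hed
    obtain ⟨v, hv, rfl⟩ := hed
    exact G.mem_edgeSet.mpr (hadjD v hv)
  have hM'pair : (M' : Set (Sym2 α)).Pairwise fun e f => ∀ v : α, ¬ (v ∈ e ∧ v ∈ f) := by
    intro e1 he1 e2 he2 hne v hv
    rw [Finset.mem_coe, hM'def, Finset.mem_image] at he1 he2
    obtain ⟨a, ha, rfl⟩ := he1
    obtain ⟨b, hb, rfl⟩ := he2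
    obtain ⟨hv1, hv2⟩ := hv
    have hne' : a ≠ b := fun h => hne (by rw [h])
    rw [Sym2.mem_iff] at hv1 hv2
    rcases hv1 with h1 | h1 <;> subst h1 <;> rcases hv2 with h2 | h2
    · exact hne' (Subtype.ext h2)
    · exact hdisj' _ a.2 (h2 ▸ hwW b hb)
    · refine hdisj' _ b.2 ?_
      rw [← h2]
      exact hwW a ha
    · refine hne' (Subtype.ext ?_)
      have heq : f (Sum.inl a) = f (Sum.inl b) := by
        rw [hfD a ha, hfD b hb, h2]
      have := hfinj heq
      exact congrArg (fun x : {x // x ∈ Vs} ⊕ Fin (m - k) =>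
        Sum.elim Subtype.val (fun _ => (a : α)) x) this
  have hcov' : ∀ v : α, cov v → ∃ e' ∈ M', v ∈ e' := by
    intro v hv
    have hvu : v ∈ Vs ∪ Ws := by
      rw [hcover]
      exact Finset.mem_univ v
    rw [Finset.mem_union] at hvu
    rcases hvu with hvV | hvW
    · have hvS : v ∈ S := Finset.mem_filter.mpr ⟨hvV, hv⟩
      have hvD : (⟨v, hvV⟩ : {x // x ∈ Vs}) ∈ D := hDS _ hvS
      refine ⟨s(v, wfun ⟨v, hvV⟩), ?_, Sym2.mem_mk_left _ _⟩
      rw [hM'def]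
      exact Finset.mem_image_of_mem _ hvD
    · have hvT : v ∈ T := Finset.mem_filter.mpr ⟨hvW, hv⟩
      have hvR : (Sum.inl v : α ⊕ Fin (n - k)) ∈ R := by
        rw [hRdef]
        exact Finset.mem_union_left _ (Finset.mem_image_of_mem _ hvW)
      obtain ⟨x, hx⟩ := hsurj _ hvR
      cases x with
      | inr b =>
        obtain ⟨w, hw, hww⟩ := hfB b
        rw [hww] at hx
        have hwv : w = v := Sum.inl_injective hx
        rw [hwv] at hw
        exact absurd hvT (Finset.mem_sdiff.mp hw).2
      | inl u =>
        have huD : u ∈ D := by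
          rw [hDdef, Finset.mem_filter]
          refine ⟨Finset.mem_univ _, ?_⟩
          rw [hx]
          rfl
        have hwu : wfun u = v := by
          have h := hfD u huD
          rw [hx] at h
          exact (Sum.inl_injective h).symm
        refine ⟨s((u : α), wfun u), ?_, ?_⟩
        · rw [hM'def]
          exact Finset.mem_image_of_mem _ huD
        · rw [hwu]
          exact Sym2.mem_mk_right _ _
  refine ⟨M', ⟨hM'sub, hM'pair⟩, ?_, fun v hv => hcov' v hv⟩
  rw [hM'card, hkr]
end

section
/- Let G be a bipartite graph with vertex classes U and V ∪ W, where V and W are disjoint, and suppose Δ(G) ≤ Δ. Let b_V and b_W be non-negative integers such that b_V + b_W ≤ ⌈e(G)/Δ⌉, b_V ≤ ⌈e(U,V)/Δ⌉ and b_W ≤ ⌈e(U,W)/Δ⌉. Then G contains a matching M having exactly b_V edges between U and V and exactly b_W edges between U and W. -/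
namespace SpreadMatching

variable {α : Type*} [DecidableEq α]

/-- A set of pairs that is injective in both coordinates. -/
def PairMatching (M : Finset (α × α)) : Prop :=
  (∀ p ∈ M, ∀ q ∈ M, p.1 = q.1 → p = q) ∧ (∀ p ∈ M, ∀ q ∈ M, p.2 = q.2 → p = q)

lemma PairMatching.subset {M N : Finset (α × α)} (h : N ⊆ M) (hM : PairMatching M) :
    PairMatching N :=
  ⟨fun p hp q hq => hM.1 p (h hp) q (h hq), fun p hp q hq => hM.2 p (h hp) q (h hq)⟩

lemma PairMatching.card_fst {M : Finset (α × α)} (hM : PairMatching M) :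
    (M.image Prod.fst).card = M.card :=
  Finset.card_image_of_injOn fun p hp q hq h => hM.1 p hp q hq h

lemma PairMatching.card_snd {M : Finset (α × α)} (hM : PairMatching M) :
    (M.image Prod.snd).card = M.card :=
  Finset.card_image_of_injOn fun p hp q hq h => hM.2 p hp q hq h

/-- Exchange lemma: a matching can be enlarged inside the union with a bigger matching,
adding at most one new first-coordinate. -/
lemma ex1 : ∀ (n : ℕ) (M N : Finset (α × α)), M.card = n → PairMatching M →
    PairMatching N → M.card < N.card →
    ∃ M' : Finset (α × α), PairMatching M' ∧ M' ⊆ M ∪ N ∧ M'.card = M.card + 1 ∧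
      ∃ a, M'.image Prod.fst ⊆ insert a (M.image Prod.fst) := by
  intro n
  induction n using Nat.strong_induction_on with
  | _ n ih =>
    intro M N hn hM hN hlt
    -- find b in snd-support of N not in snd-support of M
    have hcards : (M.image Prod.snd).card < (N.image Prod.snd).card := by
      rw [hM.card_snd, hN.card_snd]; exact hlt
    obtain ⟨b, hbN, hbM⟩ := Finset.not_subset.1 (fun hsub => absurd (Finset.card_le_card hsub)
      (not_le.2 hcards))
    obtain ⟨q, hqN, hq2⟩ := Finset.mem_image.1 hbN
    set a := q.1 with ha
    have hqab : q = (a, b) := by rw [ha, ← hq2]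
    by_cases haM : a ∈ M.image Prod.fst
    · -- a is matched in M to b₁
      obtain ⟨m, hmM, hm1⟩ := Finset.mem_image.1 haM
      have hmb : m.2 ≠ b := fun h => hbM (Finset.mem_image.2 ⟨m, hmM, h⟩)
      set M₀ := M.erase m with hM₀
      set N₀ := N.erase q with hN₀
      have hM₀card : M₀.card = n - 1 := by rw [hM₀, Finset.card_erase_of_mem hmM, hn]
      have hn1 : 1 ≤ n := by rw [← hn]; exact Finset.card_pos.2 ⟨m, hmM⟩
      have hM₀lt : M₀.card < N₀.card := by
        rw [hM₀card, hN₀, Finset.card_erase_of_mem hqN]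
        omega
      obtain ⟨M₀', hM₀'pm, hM₀'sub, hM₀'card, a', hM₀'fst⟩ :=
        ih (n-1) (by omega) M₀ N₀ hM₀card (hM.subset (Finset.erase_subset _ _))
          (hN.subset (Finset.erase_subset _ _)) hM₀lt
      -- a is not a first coordinate of M₀ ∪ N₀
      have hafst : ∀ p ∈ M₀ ∪ N₀, p.1 ≠ a := by
        intro p hp hpa
        rcases Finset.mem_union.1 hp with hp | hp
        · have := hM.1 p (Finset.mem_of_mem_erase hp) m hmM (by rw [hpa, hm1])
          exact (Finset.ne_of_mem_erase hp) this
        · have := hN.1 p (Finset.mem_of_mem_erase hp) q hqN (by rw [hpa])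
          exact (Finset.ne_of_mem_erase hp) this
      have hbsnd : ∀ p ∈ M₀ ∪ N₀, p.2 ≠ b := by
        intro p hp hpb
        rcases Finset.mem_union.1 hp with hp | hp
        · exact hbM (Finset.mem_image.2 ⟨p, Finset.mem_of_mem_erase hp, hpb⟩)
        · have := hN.2 p (Finset.mem_of_mem_erase hp) q hqN (by rw [hpb, hq2])
          exact (Finset.ne_of_mem_erase hp) this
      refine ⟨insert (a, b) M₀', ⟨?_, ?_⟩, ?_, ?_, a', ?_⟩
      · intro p hp r hr h1
        rcases Finset.mem_insert.1 hp with rfl | hp <;>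
          rcases Finset.mem_insert.1 hr with rfl | hr
        · rfl
        · exact absurd (h1.symm) (hafst r (hM₀'sub hr))
        · exact absurd h1 (hafst p (hM₀'sub hp))
        · exact hM₀'pm.1 p hp r hr h1
      · intro p hp r hr h2
        rcases Finset.mem_insert.1 hp with rfl | hp <;>
          rcases Finset.mem_insert.1 hr with rfl | hr
        · rfl
        · exact absurd (h2.symm) (hbsnd r (hM₀'sub hr))
        · exact absurd h2 (hbsnd p (hM₀'sub hp))
        · exact hM₀'pm.2 p hp r hr h2
      · intro p hp
        rcases Finset.mem_insert.1 hp with rfl | hp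
        · exact Finset.mem_union_right _ (by rw [← hqab]; exact hqN)
        · rcases Finset.mem_union.1 (hM₀'sub hp) with h | h
          · exact Finset.mem_union_left _ (Finset.mem_of_mem_erase h)
          · exact Finset.mem_union_right _ (Finset.mem_of_mem_erase h)
      · have hnotmem : (a, b) ∉ M₀' := fun h => hafst (a, b) (hM₀'sub h) rfl
        rw [Finset.card_insert_of_notMem hnotmem]
        omega
      · intro x hx
        obtain ⟨p, hp, hp1⟩ := Finset.mem_image.1 hx
        rcases Finset.mem_insert.1 hp with rfl | hp
        · refine Finset.mem_insert.2 (Or.inr ?_)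
          exact Finset.mem_image.2 ⟨m, hmM, by rw [hm1]; exact hp1⟩
        · have := hM₀'fst (Finset.mem_image.2 ⟨p, hp, hp1⟩)
          rcases Finset.mem_insert.1 this with rfl | h
          · exact Finset.mem_insert_self _ _
          · obtain ⟨r, hr, hr1⟩ := Finset.mem_image.1 h
            exact Finset.mem_insert.2 (Or.inr (Finset.mem_image.2
              ⟨r, Finset.mem_of_mem_erase hr, hr1⟩))
    · -- a is unmatched in M: just add (a,b)
      have habM : (a, b) ∉ M := fun h => haM (Finset.mem_image.2 ⟨(a,b), h, rfl⟩)
      refine ⟨insert (a, b) M, ⟨?_, ?_⟩, ?_, ?_, a, ?_⟩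
      · intro p hp r hr h1
        rcases Finset.mem_insert.1 hp with rfl | hp <;>
          rcases Finset.mem_insert.1 hr with rfl | hr
        · rfl
        · exact absurd (Finset.mem_image.2 ⟨r, hr, h1.symm⟩) haM
        · exact absurd (Finset.mem_image.2 ⟨p, hp, h1⟩) haM
        · exact hM.1 p hp r hr h1
      · intro p hp r hr h2
        rcases Finset.mem_insert.1 hp with rfl | hp <;>
          rcases Finset.mem_insert.1 hr with rfl | hr
        · rfl
        · exact absurd (Finset.mem_image.2 ⟨r, hr, h2.symm⟩) hbM
        · exact absurd (Finset.mem_image.2 ⟨p, hp, h2⟩) hbM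
        · exact hM.2 p hp r hr h2
      · intro p hp
        rcases Finset.mem_insert.1 hp with rfl | hp
        · exact Finset.mem_union_right _ (by rw [← hqab]; exact hqN)
        · exact Finset.mem_union_left _ hp
      · rw [Finset.card_insert_of_notMem habM]
      · intro x hx
        obtain ⟨p, hp, hp1⟩ := Finset.mem_image.1 hx
        rcases Finset.mem_insert.1 hp with rfl | hp
        · exact Finset.mem_insert.2 (Or.inl hp1.symm)
        · exact Finset.mem_insert_of_mem (Finset.mem_image.2 ⟨p, hp, hp1⟩)


/-- Rebalancing step: move one unit of the matching from `P₁` into `P₂`. -/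
lemma step (P₁ P₂ : Finset (α × α)) (hsnd : ∀ p ∈ P₁, ∀ q ∈ P₂, p.2 ≠ q.2)
    (M N : Finset (α × α)) (hM : PairMatching M) (hMsub : M ⊆ P₁ ∪ P₂)
    (hN : PairMatching N) (hNsub : N ⊆ P₂)
    (hlt : (M ∩ P₂).card < N.card) (hpos : 1 ≤ (M ∩ P₁).card) :
    ∃ M', PairMatching M' ∧ M' ⊆ P₁ ∪ P₂ ∧
      (M' ∩ P₁).card = (M ∩ P₁).card - 1 ∧ (M' ∩ P₂).card = (M ∩ P₂).card + 1 := by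
  classical
  set M₁ := M ∩ P₁ with hM₁
  set M₂ := M ∩ P₂ with hM₂
  have hM₁sub : M₁ ⊆ M := Finset.inter_subset_left
  have hM₂sub : M₂ ⊆ M := Finset.inter_subset_left
  obtain ⟨M₂', hM₂'pm, hM₂'sub, hM₂'card, a, hM₂'fst⟩ :=
    ex1 M₂.card M₂ N rfl (hM.subset hM₂sub) hN hlt
  have hM₂'P₂ : M₂' ⊆ P₂ := fun p hp => by
    rcases Finset.mem_union.1 (hM₂'sub hp) with h | h
    · exact Finset.mem_of_mem_inter_right h
    · exact hNsub h
  -- remove the (at most one) edge of M₁ touching a, and possibly one more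
  set M₁' := M₁.filter (fun q => ¬ q.1 = a) with hM₁'
  have hM₁'card : M₁.card - 1 ≤ M₁'.card := by
    have h1 : (M₁.filter (fun q => q.1 = a)).card ≤ 1 := by
      refine Finset.card_le_one.2 ?_
      intro p hp q hq
      rw [Finset.mem_filter] at hp hq
      exact hM.1 p (hM₁sub hp.1) q (hM₁sub hq.1) (by rw [hp.2, hq.2])
    have h2 : M₁.filter (fun q => ¬ q.1 = a) = M₁ \ M₁.filter (fun q => q.1 = a) :=
      Finset.filter_not _ _
    rw [hM₁', h2, Finset.card_sdiff_of_subset (Finset.filter_subset _ _)]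
    omega
  obtain ⟨M₁'', hM₁''sub, hM₁''card⟩ := Finset.exists_subset_card_eq
    (s := M₁') (n := M₁.card - 1) hM₁'card
  have hM₁''P₁ : M₁'' ⊆ P₁ := fun p hp =>
    Finset.mem_of_mem_inter_right (Finset.mem_of_mem_filter _ (hM₁''sub hp))
  have hM₁''M : M₁'' ⊆ M := fun p hp =>
    Finset.mem_of_mem_inter_left (Finset.mem_of_mem_filter _ (hM₁''sub hp))
  have hM₁''a : ∀ p ∈ M₁'', p.1 ≠ a := fun p hp =>
    (Finset.mem_filter.1 (hM₁''sub hp)).2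
  -- cross fst-disjointness
  have hcross1 : ∀ p ∈ M₁'', ∀ q ∈ M₂', p.1 ≠ q.1 := by
    intro p hp q hq h
    rcases Finset.mem_insert.1 (hM₂'fst (Finset.mem_image_of_mem _ hq)) with h' | h'
    · exact hM₁''a p hp (h.trans h')
    · obtain ⟨r, hr, hr1⟩ := Finset.mem_image.1 h'
      have : p = r := hM.1 p (hM₁''M hp) r (hM₂sub hr) (by rw [h, hr1])
      subst this
      exact hsnd p (hM₁''P₁ hp) p (Finset.mem_of_mem_inter_right hr) rfl
  have hcross2 : ∀ p ∈ M₁'', ∀ q ∈ M₂', p.2 ≠ q.2 := fun p hp q hq =>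
    hsnd p (hM₁''P₁ hp) q (hM₂'P₂ hq)
  have hdisj : Disjoint M₁'' M₂' := by
    rw [Finset.disjoint_left]
    intro p hp hp'
    exact hcross2 p hp p hp' rfl
  refine ⟨M₁'' ∪ M₂', ⟨?_, ?_⟩, ?_, ?_, ?_⟩
  · intro p hp q hq h
    rcases Finset.mem_union.1 hp with hp | hp <;> rcases Finset.mem_union.1 hq with hq | hq
    · exact hM.1 p (hM₁''M hp) q (hM₁''M hq) h
    · exact absurd h (hcross1 p hp q hq)
    · exact absurd h.symm (hcross1 q hq p hp)
    · exact hM₂'pm.1 p hp q hq h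
  · intro p hp q hq h
    rcases Finset.mem_union.1 hp with hp | hp <;> rcases Finset.mem_union.1 hq with hq | hq
    · exact hM.2 p (hM₁''M hp) q (hM₁''M hq) h
    · exact absurd h (hcross2 p hp q hq)
    · exact absurd h.symm (hcross2 q hq p hp)
    · exact hM₂'pm.2 p hp q hq h
  · intro p hp
    rcases Finset.mem_union.1 hp with hp | hp
    · exact Finset.mem_union_left _ (hM₁''P₁ hp)
    · exact Finset.mem_union_right _ (hM₂'P₂ hp)
  · have : (M₁'' ∪ M₂') ∩ P₁ = M₁'' := by
      ext p
      simp only [Finset.mem_inter, Finset.mem_union]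
      constructor
      · rintro ⟨hp | hp, hpP⟩
        · exact hp
        · exact absurd rfl (hsnd p hpP p (hM₂'P₂ hp))
      · intro hp
        exact ⟨Or.inl hp, hM₁''P₁ hp⟩
    rw [this, hM₁''card]
  · have : (M₁'' ∪ M₂') ∩ P₂ = M₂' := by
      ext p
      simp only [Finset.mem_inter, Finset.mem_union]
      constructor
      · rintro ⟨hp | hp, hpP⟩
        · exact absurd rfl (hsnd p (hM₁''P₁ hp) p hpP)
        · exact hp
      · intro hp
        exact ⟨Or.inr hp, hM₂'P₂ hp⟩
    rw [this, hM₂'card]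

/-- Repeatedly rebalance until the `P₁`-part has size exactly `b₁`. -/
lemma drive (P₁ P₂ : Finset (α × α)) (hsnd : ∀ p ∈ P₁, ∀ q ∈ P₂, p.2 ≠ q.2)
    (b₁ b₂ : ℕ) (N : Finset (α × α)) (hN : PairMatching N) (hNsub : N ⊆ P₂)
    (hNcard : N.card = b₂) :
    ∀ (k : ℕ) (M : Finset (α × α)), PairMatching M → M ⊆ P₁ ∪ P₂ →
      (M ∩ P₁).card = b₁ + k → (M ∩ P₁).card + (M ∩ P₂).card = b₁ + b₂ →
      ∃ M', PairMatching M' ∧ M' ⊆ P₁ ∪ P₂ ∧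
        (M' ∩ P₁).card = b₁ ∧ (M' ∩ P₂).card = b₂ := by
  intro k
  induction k with
  | zero =>
    intro M hM hMsub h1 h2
    exact ⟨M, hM, hMsub, by omega, by omega⟩
  | succ k ih =>
    intro M hM hMsub h1 h2
    obtain ⟨M', hM'pm, hM'sub, hc1, hc2⟩ := step P₁ P₂ hsnd M N hM hMsub hN hNsub
      (by omega) (by omega)
    exact ih M' hM'pm hM'sub (by omega) (by omega)

lemma count_snd (Q : Finset (α × α)) (Δ : ℕ)
    (hsnd : ∀ x, (Q.filter (fun q => q.2 = x)).card ≤ Δ) (T : Finset α) :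
    (Q.filter fun q => q.2 ∈ T).card ≤ Δ * T.card := by
  classical
  have hsub : Q.filter (fun q => q.2 ∈ T) ⊆ T.biUnion (fun x => Q.filter fun q => q.2 = x) := by
    intro q hq
    rw [Finset.mem_filter] at hq
    exact Finset.mem_biUnion.2 ⟨q.2, hq.2, Finset.mem_filter.2 ⟨hq.1, rfl⟩⟩
  calc (Q.filter fun q => q.2 ∈ T).card ≤ _ := Finset.card_le_card hsub
    _ ≤ ∑ x ∈ T, (Q.filter fun q => q.2 = x).card := Finset.card_biUnion_le
    _ ≤ ∑ _x ∈ T, Δ := Finset.sum_le_sum (fun x _ => hsnd x)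
    _ = Δ * T.card := by rw [Finset.sum_const, smul_eq_mul, mul_comm]

lemma count_fst (Q : Finset (α × α)) (Δ : ℕ)
    (hfst : ∀ u, (Q.filter (fun q => q.1 = u)).card ≤ Δ) (T : Finset α) :
    (Q.filter fun q => q.1 ∈ T).card ≤ Δ * T.card := by
  classical
  have hsub : Q.filter (fun q => q.1 ∈ T) ⊆ T.biUnion (fun x => Q.filter fun q => q.1 = x) := by
    intro q hq
    rw [Finset.mem_filter] at hq
    exact Finset.mem_biUnion.2 ⟨q.1, hq.2, Finset.mem_filter.2 ⟨hq.1, rfl⟩⟩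
  calc (Q.filter fun q => q.1 ∈ T).card ≤ _ := Finset.card_le_card hsub
    _ ≤ ∑ x ∈ T, (Q.filter fun q => q.1 = x).card := Finset.card_biUnion_le
    _ ≤ ∑ _x ∈ T, Δ := Finset.sum_le_sum (fun x _ => hfst x)
    _ = Δ * T.card := by rw [Finset.sum_const, smul_eq_mul, mul_comm]

/-- A bipartite (pair) graph with degrees at most `Δ` and more than `Δ*(b-1)` edges
contains a matching of size `b`. -/
lemma hall_matching (Q : Finset (α × α)) (Δ b : ℕ)
    (hfst : ∀ u, (Q.filter (fun q => q.1 = u)).card ≤ Δ)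
    (hsnd : ∀ x, (Q.filter (fun q => q.2 = x)).card ≤ Δ)
    (hb : Δ * (b - 1) < Q.card ∨ b = 0) :
    ∃ N, N ⊆ Q ∧ PairMatching N ∧ N.card = b := by
  classical
  rcases eq_or_ne b 0 with rfl | hb0
  · exact ⟨∅, Finset.empty_subset _, ⟨by simp, by simp⟩, rfl⟩
  have hb1 : 1 ≤ b := Nat.one_le_iff_ne_zero.2 hb0
  have hQ : Δ * (b - 1) < Q.card := by tauto
  set A := Q.image Prod.fst with hA
  have hQfull : Q.filter (fun q => q.1 ∈ A) = Q :=
    Finset.filter_true_of_mem (fun q hq => Finset.mem_image_of_mem _ hq)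
  have hQA : Q.card ≤ Δ * A.card := by
    conv_lhs => rw [← hQfull]
    exact count_fst Q Δ hfst A
  have hΔpos : 0 < Δ := by
    rcases Nat.eq_zero_or_pos Δ with rfl | h
    · rw [Nat.zero_mul] at hQ hQA; omega
    · exact h
  have hbA : b ≤ A.card := by
    have : Δ * (b - 1) < Δ * A.card := lt_of_lt_of_le hQ hQA
    have := Nat.lt_of_mul_lt_mul_left this
    omega
  set d := A.card - b with hd
  set r : α → Finset α := fun u => (Q.filter fun q => q.1 = u).image Prod.snd with hr
  set r' : {x // x ∈ A} → Finset (α ⊕ Fin d) :=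
    fun u => ((r u.1).image Sum.inl) ∪ ((Finset.univ : Finset (Fin d)).image Sum.inr) with hr'
  have hall : ∀ S : Finset {x // x ∈ A}, S.card ≤ (S.biUnion r').card := by
    intro S
    rcases S.eq_empty_or_nonempty with rfl | ⟨a₀, ha₀⟩
    · simp
    set S' := S.image Subtype.val with hS'
    have hS'card : S'.card = S.card := Finset.card_image_of_injective _ Subtype.val_injective
    have hS'A : S' ⊆ A := by
      intro x hx
      obtain ⟨a, _, rfl⟩ := Finset.mem_image.1 hx
      exact a.2
    set NS := S'.biUnion r with hNS
    have hsub : (NS.image Sum.inl ∪ (Finset.univ : Finset (Fin d)).image Sum.inr)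
        ⊆ S.biUnion r' := by
      intro y hy
      rcases Finset.mem_union.1 hy with hy | hy
      · obtain ⟨x, hx, rfl⟩ := Finset.mem_image.1 hy
        obtain ⟨u, hu, hxu⟩ := Finset.mem_biUnion.1 hx
        obtain ⟨a, haS, rfl⟩ := Finset.mem_image.1 hu
        exact Finset.mem_biUnion.2 ⟨a, haS,
          Finset.mem_union_left _ (Finset.mem_image_of_mem _ hxu)⟩
      · exact Finset.mem_biUnion.2 ⟨a₀, ha₀, Finset.mem_union_right _ hy⟩
    have hdisj : Disjoint (NS.image (Sum.inl : α → α ⊕ Fin d))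
        ((Finset.univ : Finset (Fin d)).image Sum.inr) := by
      rw [Finset.disjoint_left]
      intro y hy hy'
      obtain ⟨x, _, rfl⟩ := Finset.mem_image.1 hy
      obtain ⟨z, _, hz⟩ := Finset.mem_image.1 hy'
      exact Sum.inl_ne_inr hz.symm
    have hcardunion : (NS.image Sum.inl ∪
        (Finset.univ : Finset (Fin d)).image Sum.inr).card = NS.card + d := by
      rw [Finset.card_union_of_disjoint hdisj,
        Finset.card_image_of_injective _ Sum.inl_injective,
        Finset.card_image_of_injective _ Sum.inr_injective]
      simp
    -- counting
    have c1 : Q.filter (fun q => q.1 ∈ S') ⊆ Q.filter (fun q => q.2 ∈ NS) := by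
      intro q hq
      rw [Finset.mem_filter] at hq ⊢
      refine ⟨hq.1, Finset.mem_biUnion.2 ⟨q.1, hq.2, ?_⟩⟩
      exact Finset.mem_image.2 ⟨q, Finset.mem_filter.2 ⟨hq.1, rfl⟩, rfl⟩
    have c2 : Q.filter (fun q => ¬ q.1 ∈ S') ⊆ Q.filter (fun q => q.1 ∈ A \ S') := by
      intro q hq
      rw [Finset.mem_filter] at hq ⊢
      exact ⟨hq.1, Finset.mem_sdiff.2 ⟨Finset.mem_image_of_mem _ hq.1, hq.2⟩⟩
    have hc1 : (Q.filter (fun q => q.1 ∈ S')).card ≤ Δ * NS.card :=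
      le_trans (Finset.card_le_card c1) (count_snd Q Δ hsnd NS)
    have hc2 : (Q.filter (fun q => ¬ q.1 ∈ S')).card ≤ Δ * (A.card - S'.card) := by
      refine le_trans (Finset.card_le_card c2) ?_
      have := count_fst Q Δ hfst (A \ S')
      rwa [Finset.card_sdiff_of_subset hS'A] at this
    have htot : (Q.filter (fun q => q.1 ∈ S')).card
        + (Q.filter (fun q => ¬ q.1 ∈ S')).card = Q.card :=
      Finset.card_filter_add_card_filter_not _
    have hkey : Δ * (b - 1) < Δ * (NS.card + (A.card - S'.card)) := by
      rw [Nat.mul_add]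
      omega
    have hkey2 := Nat.lt_of_mul_lt_mul_left hkey
    have hS'leA : S'.card ≤ A.card := Finset.card_le_card hS'A
    have : S.card ≤ NS.card + d := by omega
    exact le_trans this (by rw [← hcardunion]; exact Finset.card_le_card hsub)
  obtain ⟨f, hfinj, hfr⟩ := (Finset.all_card_le_biUnion_card_iff_exists_injective r').1 hall
  set T := (Finset.univ : Finset {x // x ∈ A}).filter (fun a => (f a).isLeft) with hT
  set Tc := (Finset.univ : Finset {x // x ∈ A}) \ T with hTcdef
  have hnotleft : ∀ a ∈ Tc, ¬ (f a).isLeft := by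
    intro a ha
    have := (Finset.mem_sdiff.1 ha).2
    simp only [hT, Finset.mem_filter, Finset.mem_univ, true_and] at this
    exact fun h => this h
  have hTc : Tc.card ≤ d := by
    have h1 : (Tc.image f).card = Tc.card :=
      Finset.card_image_of_injective _ hfinj
    have h2 : Tc.image f ⊆ (Finset.univ : Finset (Fin d)).image Sum.inr := by
      intro y hy
      obtain ⟨a, haTc, rfl⟩ := Finset.mem_image.1 hy
      have hR : (f a).isRight := Sum.not_isLeft.1 (hnotleft a haTc)
      obtain ⟨y, hy'⟩ := Sum.isRight_iff.1 hR
      rw [hy']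
      exact Finset.mem_image_of_mem _ (Finset.mem_univ _)
    have h3 : ((Finset.univ : Finset (Fin d)).image (Sum.inr : Fin d → α ⊕ Fin d)).card = d := by
      rw [Finset.card_image_of_injective _ Sum.inr_injective]; simp
    calc Tc.card = (Tc.image f).card := h1.symm
      _ ≤ _ := Finset.card_le_card h2
      _ = d := h3
  have huniv : (Finset.univ : Finset {x // x ∈ A}).card = A.card := by
    rw [Finset.card_univ, Fintype.card_coe]
  have hTcard : b ≤ T.card := by
    have hsd : Tc.card = (Finset.univ : Finset {x // x ∈ A}).card - T.card := by
      rw [hTcdef, Finset.card_sdiff_of_subset (Finset.subset_univ T)]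
    have hle : T.card ≤ (Finset.univ : Finset {x // x ∈ A}).card :=
      Finset.card_le_card (Finset.subset_univ T)
    omega
  have hkeyT : ∀ a ∈ T, ∃ x : α, f a = Sum.inl x ∧ ((a : α), x) ∈ Q := by
    intro a haT
    have hleft : (f a).isLeft := (Finset.mem_filter.1 haT).2
    obtain ⟨x, hx⟩ := Sum.isLeft_iff.1 hleft
    refine ⟨x, hx, ?_⟩
    have := hfr a
    rw [hx] at this
    rcases Finset.mem_union.1 this with h | h
    · obtain ⟨z, hz, hz'⟩ := Finset.mem_image.1 h
      obtain ⟨q, hq, hq2⟩ := Finset.mem_image.1 hz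
      rw [Finset.mem_filter] at hq
      have : q = ((a : α), x) := by
        apply Prod.ext
        · exact hq.2
        · rw [hq2]; exact Sum.inl_injective hz'
      rw [← this]; exact hq.1
    · obtain ⟨z, _, hz⟩ := Finset.mem_image.1 h
      exact absurd hz (by simp)
  set g : {x // x ∈ A} → α × α := fun a => ((a : α), ((f a).getLeft?).getD (a : α)) with hg
  have hgood : ∀ a ∈ T, g a ∈ Q ∧ Sum.inl (g a).2 = f a := by
    intro a haT
    obtain ⟨x, hx, hxQ⟩ := hkeyT a haT
    have : (g a).2 = x := by rw [hg]; simp [hx]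
    constructor
    · have : g a = ((a : α), x) := by rw [hg]; simp [hx]
      rw [this]; exact hxQ
    · rw [this, hx]
  set N₀ := T.image g with hN₀
  have hN₀Q : N₀ ⊆ Q := by
    intro p hp
    obtain ⟨a, haT, rfl⟩ := Finset.mem_image.1 hp
    exact (hgood a haT).1
  have hginj : Set.InjOn g T := by
    intro a ha a' ha' h
    have : (a : α) = (a' : α) := congrArg Prod.fst h
    exact Subtype.ext this
  have hN₀card : N₀.card = T.card := Finset.card_image_of_injOn hginj
  have hN₀pm : PairMatching N₀ := by
    constructor
    · intro p hp q hq h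
      obtain ⟨a, haT, rfl⟩ := Finset.mem_image.1 hp
      obtain ⟨a', haT', rfl⟩ := Finset.mem_image.1 hq
      have haa : a = a' := Subtype.ext h
      rw [haa]
    · intro p hp q hq h
      obtain ⟨a, haT, rfl⟩ := Finset.mem_image.1 hp
      obtain ⟨a', haT', rfl⟩ := Finset.mem_image.1 hq
      have h2 : f a = f a' := by
        rw [← (hgood a haT).2, ← (hgood a' haT').2, h]
      rw [hfinj h2]
  obtain ⟨N, hNsub, hNcard⟩ := Finset.exists_subset_card_eq
    (s := N₀) (n := b) (by omega)
  exact ⟨N, hNsub.trans hN₀Q, hN₀pm.subset hNsub, hNcard⟩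

lemma ceil_bound (e Δ b : ℕ) (h : (b : ℤ) ≤ ⌈(e : ℚ) / (Δ : ℚ)⌉) :
    Δ * (b - 1) < e ∨ b = 0 := by
  rcases eq_or_ne b 0 with rfl | hb0
  · exact Or.inr rfl
  refine Or.inl ?_
  have hb1 : 1 ≤ b := Nat.one_le_iff_ne_zero.2 hb0
  have hΔ : Δ ≠ 0 := by
    rintro rfl
    rw [Nat.cast_zero, div_zero, Int.ceil_zero] at h
    omega
  have h2 : ((b : ℤ) - 1) < ⌈(e : ℚ) / (Δ : ℚ)⌉ := by omega
  have h3 : (((b : ℤ) - 1 : ℤ) : ℚ) < (e : ℚ) / (Δ : ℚ) := Int.lt_ceil.1 h2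
  have hΔpos : (0 : ℚ) < (Δ : ℚ) := by
    exact_mod_cast Nat.pos_of_ne_zero hΔ
  rw [lt_div_iff₀ hΔpos] at h3
  have h5 : ((Δ * (b - 1) : ℕ) : ℚ) < (e : ℚ) := by
    rw [Nat.cast_mul, Nat.cast_sub hb1]
    push_cast at h3 ⊢
    linarith
  exact_mod_cast h5

end SpreadMatching


/-- In a bipartite graph with classes `U` and `Vs ∪ Ws` and maximum degree at most `Δ`,
one can find a matching with exactly `bV` edges between `U` and `Vs` and exactly
`bW` edges between `U` and `Ws`. -/
theorem spread_matching {α : Type*} [Fintype α] [DecidableEq α]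
    (G : SimpleGraph α) (U Vs Ws : Finset α)
    (hUV : Disjoint U Vs) (hUW : Disjoint U Ws) (hVW : Disjoint Vs Ws)
    (hcover : U ∪ Vs ∪ Ws = Finset.univ)
    (hbip : ∀ a b : α, G.Adj a b →
      (a ∈ U ∧ b ∈ Vs ∪ Ws) ∨ (b ∈ U ∧ a ∈ Vs ∪ Ws))
    (Δ : ℕ) (hΔ : ∀ v, pdeg G v ≤ Δ)
    (bV bW : ℕ)
    (hsum : ((bV : ℤ) + bW ≤ ⌈(G.edgeSet.ncard : ℚ) / Δ⌉))
    (hbV : (bV : ℤ) ≤ ⌈(eBtw G U Vs : ℚ) / Δ⌉)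
    (hbW : (bW : ℤ) ≤ ⌈(eBtw G U Ws : ℚ) / Δ⌉) :
    ∃ M : Finset (Sym2 α), IsMatchingIn G M ∧
      {e ∈ (M : Set (Sym2 α)) | ∃ a ∈ U, ∃ b ∈ Vs, e = s(a, b)}.ncard = bV ∧
      {e ∈ (M : Set (Sym2 α)) | ∃ a ∈ U, ∃ b ∈ Ws, e = s(a, b)}.ncard = bW := by
  classical
  set mk : α × α → Sym2 α := fun q => s(q.1, q.2) with hmk
  have hdisjU : ∀ x, x ∈ U → x ∈ Vs ∪ Ws → False := by
    intro x hxU hx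
    rcases Finset.mem_union.1 hx with h | h
    · exact Finset.disjoint_left.1 hUV hxU h
    · exact Finset.disjoint_left.1 hUW hxU h
  set Q : Finset (α × α) := (U ×ˢ (Vs ∪ Ws)).filter (fun q => G.Adj q.1 q.2) with hQdef
  have memQ : ∀ q : α × α, q ∈ Q ↔ q.1 ∈ U ∧ q.2 ∈ Vs ∪ Ws ∧ G.Adj q.1 q.2 := by
    intro q
    simp only [hQdef, Finset.mem_filter, Finset.mem_product, Finset.mem_union]
    tauto
  set QV := Q.filter (fun q => q.2 ∈ Vs) with hQV
  set QW := Q.filter (fun q => q.2 ∈ Ws) with hQW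
  have hQVQ : QV ⊆ Q := Finset.filter_subset _ _
  have hQWQ : QW ⊆ Q := Finset.filter_subset _ _
  have hQsplit : QV ∪ QW = Q := by
    ext q
    simp only [hQV, hQW, Finset.mem_union, Finset.mem_filter]
    constructor
    · rintro (⟨h, _⟩ | ⟨h, _⟩) <;> exact h
    · intro hq
      rcases Finset.mem_union.1 ((memQ q).1 hq).2.1 with h | h
      · exact Or.inl ⟨hq, h⟩
      · exact Or.inr ⟨hq, h⟩
  have hinj : Set.InjOn mk ↑Q := by
    intro p hp q hq h
    have hp' := (memQ p).1 (Finset.mem_coe.1 hp)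
    have hq' := (memQ q).1 (Finset.mem_coe.1 hq)
    have h' : s(p.1, p.2) = s(q.1, q.2) := h
    rcases Sym2.eq_iff.1 h' with ⟨h1, h2⟩ | ⟨h1, h2⟩
    · exact Prod.ext h1 h2
    · exact (hdisjU p.1 hp'.1 (by rw [h1]; exact hq'.2.1)).elim
  -- edge counts
  have hEV : {e ∈ G.edgeSet | ∃ a ∈ U, ∃ b ∈ Vs, e = s(a, b)} = ↑(QV.image mk) := by
    ext e
    simp only [Set.mem_setOf_eq, Finset.coe_image, Set.mem_image, Finset.mem_coe]
    constructor
    · rintro ⟨he, a, ha, b, hb, rfl⟩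
      refine ⟨(a, b), ?_, rfl⟩
      rw [hQV, Finset.mem_filter]
      exact ⟨(memQ (a, b)).2 ⟨ha, Finset.mem_union_left _ hb,
        (SimpleGraph.mem_edgeSet G).1 he⟩, hb⟩
    · rintro ⟨q, hq, rfl⟩
      rw [hQV, Finset.mem_filter] at hq
      have h1 := (memQ q).1 hq.1
      exact ⟨(SimpleGraph.mem_edgeSet G).2 h1.2.2, q.1, h1.1, q.2, hq.2, rfl⟩
  have hEW : {e ∈ G.edgeSet | ∃ a ∈ U, ∃ b ∈ Ws, e = s(a, b)} = ↑(QW.image mk) := by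
    ext e
    simp only [Set.mem_setOf_eq, Finset.coe_image, Set.mem_image, Finset.mem_coe]
    constructor
    · rintro ⟨he, a, ha, b, hb, rfl⟩
      refine ⟨(a, b), ?_, rfl⟩
      rw [hQW, Finset.mem_filter]
      exact ⟨(memQ (a, b)).2 ⟨ha, Finset.mem_union_right _ hb,
        (SimpleGraph.mem_edgeSet G).1 he⟩, hb⟩
    · rintro ⟨q, hq, rfl⟩
      rw [hQW, Finset.mem_filter] at hq
      have h1 := (memQ q).1 hq.1
      exact ⟨(SimpleGraph.mem_edgeSet G).2 h1.2.2, q.1, h1.1, q.2, hq.2, rfl⟩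
  have hEG : G.edgeSet = ↑(Q.image mk) := by
    ext e
    induction e with
    | _ x y =>
      simp only [SimpleGraph.mem_edgeSet, Finset.coe_image, Set.mem_image, Finset.mem_coe]
      constructor
      · intro hadj
        rcases hbip x y hadj with ⟨hx, hy⟩ | ⟨hy, hx⟩
        · exact ⟨(x, y), (memQ _).2 ⟨hx, hy, hadj⟩, rfl⟩
        · exact ⟨(y, x), (memQ _).2 ⟨hy, hx, hadj.symm⟩, Sym2.eq_swap⟩
      · rintro ⟨q, hq, heq⟩
        have h1 := (memQ q).1 hq
        have h2 : s(q.1, q.2) = s(x, y) := heq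
        rcases Sym2.eq_iff.1 h2 with ⟨h3, h4⟩ | ⟨h3, h4⟩
        · rw [← h3, ← h4]; exact h1.2.2
        · rw [← h3, ← h4]; exact h1.2.2.symm
  have hEVcard : eBtw G U Vs = QV.card := by
    rw [eBtw, hEV, Set.ncard_coe_finset,
      Finset.card_image_of_injOn (hinj.mono (Finset.coe_subset.2 hQVQ))]
  have hEWcard : eBtw G U Ws = QW.card := by
    rw [eBtw, hEW, Set.ncard_coe_finset,
      Finset.card_image_of_injOn (hinj.mono (Finset.coe_subset.2 hQWQ))]
  have hEGcard : G.edgeSet.ncard = Q.card := by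
    rw [hEG, Set.ncard_coe_finset, Finset.card_image_of_injOn hinj]
  -- degree bounds
  have hdegfst : ∀ u, (Q.filter (fun q => q.1 = u)).card ≤ Δ := by
    intro u
    have hinj2 : Set.InjOn Prod.snd (↑(Q.filter (fun q => q.1 = u)) : Set (α × α)) := by
      intro p hp q hq h
      rw [Finset.mem_coe, Finset.mem_filter] at hp hq
      exact Prod.ext (hp.2.trans hq.2.symm) h
    have hsub : ↑((Q.filter (fun q => q.1 = u)).image Prod.snd) ⊆ {x | G.Adj u x} := by
      intro x hx
      obtain ⟨q, hq, rfl⟩ := Finset.mem_image.1 (Finset.mem_coe.1 hx)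
      rw [Finset.mem_filter] at hq
      have h1 := (memQ q).1 hq.1
      rw [Set.mem_setOf_eq, ← hq.2]
      exact h1.2.2
    calc (Q.filter (fun q => q.1 = u)).card
        = ((Q.filter (fun q => q.1 = u)).image Prod.snd).card :=
          (Finset.card_image_of_injOn hinj2).symm
      _ = (↑((Q.filter (fun q => q.1 = u)).image Prod.snd) : Set α).ncard :=
          (Set.ncard_coe_finset _).symm
      _ ≤ {x | G.Adj u x}.ncard := Set.ncard_le_ncard hsub (Set.toFinite _)
      _ ≤ Δ := hΔ u
  have hdegsnd : ∀ x, (Q.filter (fun q => q.2 = x)).card ≤ Δ := by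
    intro x
    have hinj2 : Set.InjOn Prod.fst (↑(Q.filter (fun q => q.2 = x)) : Set (α × α)) := by
      intro p hp q hq h
      rw [Finset.mem_coe, Finset.mem_filter] at hp hq
      exact Prod.ext h (hp.2.trans hq.2.symm)
    have hsub : ↑((Q.filter (fun q => q.2 = x)).image Prod.fst) ⊆ {y | G.Adj x y} := by
      intro y hy
      obtain ⟨q, hq, rfl⟩ := Finset.mem_image.1 (Finset.mem_coe.1 hy)
      rw [Finset.mem_filter] at hq
      have h1 := (memQ q).1 hq.1
      rw [Set.mem_setOf_eq, ← hq.2]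
      exact h1.2.2.symm
    calc (Q.filter (fun q => q.2 = x)).card
        = ((Q.filter (fun q => q.2 = x)).image Prod.fst).card :=
          (Finset.card_image_of_injOn hinj2).symm
      _ = (↑((Q.filter (fun q => q.2 = x)).image Prod.fst) : Set α).ncard :=
          (Set.ncard_coe_finset _).symm
      _ ≤ {y | G.Adj x y}.ncard := Set.ncard_le_ncard hsub (Set.toFinite _)
      _ ≤ Δ := hΔ x
  have hdegfstV : ∀ u, (QV.filter (fun q => q.1 = u)).card ≤ Δ := fun u =>
    le_trans (Finset.card_le_card (Finset.filter_subset_filter _ hQVQ)) (hdegfst u)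
  have hdegsndV : ∀ x, (QV.filter (fun q => q.2 = x)).card ≤ Δ := fun x =>
    le_trans (Finset.card_le_card (Finset.filter_subset_filter _ hQVQ)) (hdegsnd x)
  have hdegfstW : ∀ u, (QW.filter (fun q => q.1 = u)).card ≤ Δ := fun u =>
    le_trans (Finset.card_le_card (Finset.filter_subset_filter _ hQWQ)) (hdegfst u)
  have hdegsndW : ∀ x, (QW.filter (fun q => q.2 = x)).card ≤ Δ := fun x =>
    le_trans (Finset.card_le_card (Finset.filter_subset_filter _ hQWQ)) (hdegsnd x)
  -- the three matchings from Hall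
  obtain ⟨K, hKQ, hKpm, hKcard⟩ := SpreadMatching.hall_matching Q Δ (bV + bW) hdegfst hdegsnd
    (SpreadMatching.ceil_bound Q.card Δ (bV + bW) (by rw [← hEGcard]; push_cast; exact hsum))
  obtain ⟨NV, hNVsub, hNVpm, hNVcard⟩ := SpreadMatching.hall_matching QV Δ bV hdegfstV hdegsndV
    (SpreadMatching.ceil_bound QV.card Δ bV (by rw [← hEVcard]; exact hbV))
  obtain ⟨NW, hNWsub, hNWpm, hNWcard⟩ := SpreadMatching.hall_matching QW Δ bW hdegfstW hdegsndW
    (SpreadMatching.ceil_bound QW.card Δ bW (by rw [← hEWcard]; exact hbW))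
  -- rebalance
  have hsndVW : ∀ p ∈ QV, ∀ q ∈ QW, p.2 ≠ q.2 := by
    intro p hp q hq h
    rw [hQV, Finset.mem_filter] at hp
    rw [hQW, Finset.mem_filter] at hq
    exact Finset.disjoint_left.1 hVW hp.2 (h ▸ hq.2)
  have hKsub' : K ⊆ QV ∪ QW := by rw [hQsplit]; exact hKQ
  have hdisjQVW : Disjoint QV QW := Finset.disjoint_left.2 fun p hp hq =>
    hsndVW p hp p hq rfl
  have hKcount : (K ∩ QV).card + (K ∩ QW).card = bV + bW := by
    rw [← Finset.card_union_of_disjoint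
      (Finset.disjoint_of_subset_left Finset.inter_subset_right
        (Finset.disjoint_of_subset_right Finset.inter_subset_right hdisjQVW)),
      ← Finset.inter_union_distrib_left, hQsplit, Finset.inter_eq_left.2 hKQ, hKcard]
  obtain ⟨Mp, hMppm, hMpsub, hMpV, hMpW⟩ :
      ∃ Mp, SpreadMatching.PairMatching Mp ∧ Mp ⊆ QV ∪ QW ∧ (Mp ∩ QV).card = bV ∧ (Mp ∩ QW).card = bW := by
    rcases le_or_gt bV (K ∩ QV).card with h | h
    · exact SpreadMatching.drive QV QW hsndVW bV bW NW hNWpm hNWsub hNWcard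
        ((K ∩ QV).card - bV) K hKpm hKsub' (by omega) (by omega)
    · obtain ⟨Mp, h1, h2, h3, h4⟩ := SpreadMatching.drive QW QV
        (fun p hp q hq hh => hsndVW q hq p hp hh.symm) bW bV NV hNVpm hNVsub hNVcard
        ((K ∩ QW).card - bW) K hKpm (by rw [Finset.union_comm]; exact hKsub')
        (by omega) (by omega)
      exact ⟨Mp, h1, by rw [Finset.union_comm]; exact h2, h4, h3⟩
  have hMpQ : Mp ⊆ Q := by rw [← hQsplit]; exact hMpsub
  -- build the Sym2 matching
  refine ⟨Mp.image mk, ⟨?_, ?_⟩, ?_, ?_⟩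
  · intro e he
    obtain ⟨q, hq, rfl⟩ := Finset.mem_image.1 (Finset.mem_coe.1 he)
    exact (SimpleGraph.mem_edgeSet G).2 ((memQ q).1 (hMpQ hq)).2.2
  · intro e he f hf hne v hv
    obtain ⟨p, hp, rfl⟩ := Finset.mem_image.1 (Finset.mem_coe.1 he)
    obtain ⟨q, hq, rfl⟩ := Finset.mem_image.1 (Finset.mem_coe.1 hf)
    have hpQ := (memQ p).1 (hMpQ hp)
    have hqQ := (memQ q).1 (hMpQ hq)
    have hv1 : v = p.1 ∨ v = p.2 := Sym2.mem_iff.1 hv.1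
    have hv2 : v = q.1 ∨ v = q.2 := Sym2.mem_iff.1 hv.2
    rcases hv1 with rfl | rfl <;> rcases hv2 with h | h
    · exact hne (by rw [hMppm.1 p hp q hq h])
    · exact hdisjU p.1 hpQ.1 (by rw [h]; exact hqQ.2.1)
    · exact hdisjU q.1 hqQ.1 (by rw [← h]; exact hpQ.2.1)
    · exact hne (by rw [hMppm.2 p hp q hq h])
  · have hset : {e ∈ (↑(Mp.image mk) : Set (Sym2 α)) | ∃ a ∈ U, ∃ b ∈ Vs, e = s(a, b)}
        = ↑((Mp ∩ QV).image mk) := by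
      ext e
      simp only [Set.mem_setOf_eq, Finset.coe_image, Set.mem_image, Finset.mem_coe]
      constructor
      · rintro ⟨⟨q, hq, rfl⟩, a, ha, b, hb, heq⟩
        refine ⟨q, Finset.mem_inter.2 ⟨hq, ?_⟩, rfl⟩
        have hqQ := (memQ q).1 (hMpQ hq)
        have h2 : s(q.1, q.2) = s(a, b) := heq
        rcases Sym2.eq_iff.1 h2 with ⟨h3, h4⟩ | ⟨h3, h4⟩
        · rw [hQV, Finset.mem_filter]
          exact ⟨hMpQ hq, by rw [h4]; exact hb⟩
        · exact (hdisjU q.1 hqQ.1 (Finset.mem_union_left _ (by rw [h3]; exact hb))).elim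
      · rintro ⟨q, hq, rfl⟩
        rcases Finset.mem_inter.1 hq with ⟨hq1, hq2⟩
        have hqQ := (memQ q).1 (hMpQ hq1)
        exact ⟨⟨q, hq1, rfl⟩, q.1, hqQ.1, q.2, (Finset.mem_filter.1 hq2).2, rfl⟩
    rw [hset, Set.ncard_coe_finset, Finset.card_image_of_injOn
      (hinj.mono (Finset.coe_subset.2 (Finset.inter_subset_right.trans hQVQ))), hMpV]
  · have hset : {e ∈ (↑(Mp.image mk) : Set (Sym2 α)) | ∃ a ∈ U, ∃ b ∈ Ws, e = s(a, b)}
        = ↑((Mp ∩ QW).image mk) := by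
      ext e
      simp only [Set.mem_setOf_eq, Finset.coe_image, Set.mem_image, Finset.mem_coe]
      constructor
      · rintro ⟨⟨q, hq, rfl⟩, a, ha, b, hb, heq⟩
        refine ⟨q, Finset.mem_inter.2 ⟨hq, ?_⟩, rfl⟩
        have hqQ := (memQ q).1 (hMpQ hq)
        have h2 : s(q.1, q.2) = s(a, b) := heq
        rcases Sym2.eq_iff.1 h2 with ⟨h3, h4⟩ | ⟨h3, h4⟩
        · rw [hQW, Finset.mem_filter]
          exact ⟨hMpQ hq, by rw [h4]; exact hb⟩
        · exact (hdisjU q.1 hqQ.1 (Finset.mem_union_right _ (by rw [h3]; exact hb))).elim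
      · rintro ⟨q, hq, rfl⟩
        rcases Finset.mem_inter.1 hq with ⟨hq1, hq2⟩
        have hqQ := (memQ q).1 (hMpQ hq1)
        exact ⟨⟨q, hq1, rfl⟩, q.1, hqQ.1, q.2, (Finset.mem_filter.1 hq2).2, rfl⟩
    rw [hset, Set.ncard_coe_finset, Finset.card_image_of_injOn
      (hinj.mono (Finset.coe_subset.2 (Finset.inter_subset_right.trans hQWQ))), hMpW]
end

section
/- There exist η0 ∈ (0,1) and a function Δ0 : (0,1) → ℕ such that the following holds for all 0 < η ≤ η0 and all integers Δ ≥ Δ0(η). Let G be a graph whose vertex set is partitioned into U and V, with Δ(G) ≤ ηΔ. Let M be a matching consisting of edges between U and V, and suppose that e(U) ≤ e(V) ≤ ηΔ². Then there exist matchings M_U in G[U] and M_V in G[V] such that: (i) P := M ∪ M_U ∪ M_V is a path system; (ii) e(M_U) ≤ ⌈e(U)/Δ⌉, with equality if e(U) ≥ √η·Δ, and e(M_V) ≤ ⌈e(V)/Δ⌉, with equality if e(V) ≥ √η·Δ; (iii) if M is non-empty, then P contains a path with one endpoint in U and one endpoint in V. -/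
/-- `P` is a path system: a vertex-disjoint union of paths, i.e. every vertex has
degree at most 2 and there are no cycles. -/
def IsPathSystem {V : Type*} (P : SimpleGraph V) : Prop :=
  (∀ v, pdeg P v ≤ 2) ∧ P.IsAcyclic

/-- The path system `P` contains a path with one endpoint in `S` and the
other endpoint in `T`. -/
def HasPathBetween {V : Type*} (P : SimpleGraph V) (S T : Finset V) : Prop :=
  ∃ u ∈ S, ∃ w ∈ T, pdeg P u = 1 ∧ pdeg P w = 1 ∧ P.Reachable u w

open SimpleGraph Finset

section Helpers

variable {α : Type} [DecidableEq α]

/-- Greedy matching extraction. -/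
lemma greedy_matching (D : ℕ) :
    ∀ (m : ℕ) (A : Finset (Sym2 α)),
      (∀ e ∈ A, ¬ e.IsDiag) →
      (∀ v : α, (A.filter (fun e => v ∈ e)).card ≤ D) →
      2 * D * m < A.card + 2 * D →
      ∃ N, N ⊆ A ∧ N.card = m ∧
        (↑N : Set (Sym2 α)).Pairwise (fun e f => ∀ v : α, ¬ (v ∈ e ∧ v ∈ f)) := by
  intro m
  induction m with
  | zero => exact fun A _ _ _ => ⟨∅, by simp, by simp, by simp⟩
  | succ m ih =>
    intro A hdiag hdegA hcard
    have h1 : 2 * D * m < A.card := by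
      have : 2 * D * m + 2 * D < A.card + 2 * D := by
        calc 2 * D * m + 2 * D = 2 * D * (m + 1) := by ring
        _ < A.card + 2 * D := hcard
      exact lt_of_add_lt_add_right this
    obtain ⟨e, he⟩ := Finset.card_pos.mp ((Nat.zero_le _).trans_lt h1)
    obtain ⟨a, b, rfl⟩ : ∃ a b, e = s(a, b) := by
      induction e using Sym2.ind with | _ x y => exact ⟨x, y, rfl⟩
    set A' := A.filter (fun f => a ∉ f ∧ b ∉ f) with hA'
    have hsplit : A'.card + (A.filter (fun f => ¬ (a ∉ f ∧ b ∉ f))).card = A.card :=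
      Finset.card_filter_add_card_filter_not _
    have hneg : (A.filter (fun f => ¬ (a ∉ f ∧ b ∉ f))).card ≤ 2 * D := by
      have hsub : A.filter (fun f => ¬ (a ∉ f ∧ b ∉ f)) ⊆
          A.filter (fun f => a ∈ f) ∪ A.filter (fun f => b ∈ f) := by
        intro f hf
        simp only [Finset.mem_filter, not_and_or, not_not] at hf
        rcases hf with ⟨hfA, h | h⟩ <;> simp [Finset.mem_union, Finset.mem_filter, hfA, h]
      calc (A.filter (fun f => ¬ (a ∉ f ∧ b ∉ f))).card
          ≤ (A.filter (fun f => a ∈ f) ∪ A.filter (fun f => b ∈ f)).card :=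
            Finset.card_le_card hsub
        _ ≤ (A.filter (fun f => a ∈ f)).card + (A.filter (fun f => b ∈ f)).card :=
            Finset.card_union_le _ _
        _ ≤ D + D := Nat.add_le_add (hdegA a) (hdegA b)
        _ = 2 * D := by ring
    have hcard' : 2 * D * m < A'.card + 2 * D := by omega
    obtain ⟨N, hNsub, hNcard, hNpair⟩ := ih A'
      (fun f hf => hdiag f (Finset.filter_subset _ _ hf))
      (fun v => le_trans (Finset.card_le_card
        (Finset.filter_subset_filter _ (Finset.filter_subset _ _))) (hdegA v))
      hcard'
    have hemem : s(a, b) ∉ N := by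
      intro hmem
      have := hNsub hmem
      rw [hA', Finset.mem_filter] at this
      exact this.2.1 (Sym2.mem_mk_left a b)
    refine ⟨insert s(a, b) N, ?_, ?_, ?_⟩
    · exact Finset.insert_subset he (hNsub.trans (Finset.filter_subset _ _))
    · rw [Finset.card_insert_of_notMem hemem, hNcard]
    · rw [Finset.coe_insert, Set.pairwise_insert]
      refine ⟨hNpair, fun f hf _ => ?_⟩
      have hf' := hNsub (Finset.mem_coe.mp hf)
      rw [hA', Finset.mem_filter] at hf'
      obtain ⟨_, haf, hbf⟩ := hf'
      constructor
      · rintro v ⟨hv1, hv2⟩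
        rcases Sym2.mem_iff.mp hv1 with rfl | rfl
        exacts [haf hv2, hbf hv2]
      · rintro v ⟨hv1, hv2⟩
        rcases Sym2.mem_iff.mp hv2 with rfl | rfl
        exacts [haf hv1, hbf hv1]

/-- Every vertex on a cycle has two distinct incident edges of the cycle. -/
lemma cycle_two_edges {G : SimpleGraph α} {x a : α} (c : G.Walk a a) (hc : c.IsCycle)
    (hx : x ∈ c.support) :
    ∃ y z : α, y ≠ z ∧ s(x, y) ∈ c.edges ∧ s(x, z) ∈ c.edges := by
  have key : ∀ (c' : G.Walk x x), c'.IsCycle →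
      ∃ y z : α, y ≠ z ∧ s(x, y) ∈ c'.edges ∧ s(x, z) ∈ c'.edges := by
    intro c' hc'
    cases c' with
    | nil => exact absurd hc' (SimpleGraph.Walk.IsCycle.not_of_nil)
    | @cons _ b _ h p =>
      have h1 : s(x, b) ∈ (SimpleGraph.Walk.cons h p).edges := by
        simp [SimpleGraph.Walk.edges_cons]
      have hcyc := (SimpleGraph.Walk.cons_isCycle_iff p h).mp hc'
      obtain ⟨z, hz⟩ : ∃ z, s(x, z) ∈ p.edges := by
        cases hrev : p.reverse with
        | nil => exact absurd h (G.irrefl)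
        | @cons _ z _ h' q =>
          refine ⟨z, ?_⟩
          have : s(x, z) ∈ p.reverse.edges := by
            rw [hrev]; simp [SimpleGraph.Walk.edges_cons]
          rwa [SimpleGraph.Walk.edges_reverse, List.mem_reverse] at this
      refine ⟨b, z, ?_, h1, by simp [SimpleGraph.Walk.edges_cons, hz]⟩
      rintro rfl
      exact hcyc.2 hz
  obtain ⟨y, z, hyz, h1, h2⟩ := key (c.rotate x hx) (hc.rotate hx)
  rw [(c.rotate_edges x hx).perm.mem_iff] at h1 h2
  exact ⟨y, z, hyz, h1, h2⟩




lemma card_filter_mem_le [Fintype α] (G : SimpleGraph α) [DecidableRel G.Adj]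
    (A : Finset (Sym2 α)) (hA : A ⊆ G.edgeFinset) (v : α) :
    (A.filter (fun e => v ∈ e)).card ≤ G.degree v := by
  rw [← SimpleGraph.card_incidenceFinset_eq_degree]
  apply Finset.card_le_card
  intro e he
  rw [Finset.mem_filter] at he
  rw [SimpleGraph.mem_incidenceFinset]
  exact ⟨SimpleGraph.mem_edgeFinset.mp (hA he.1), he.2⟩

lemma card_filter_touch_le [Fintype α] (G : SimpleGraph α) [DecidableRel G.Adj]
    (A : Finset (Sym2 α)) (hA : A ⊆ G.edgeFinset) (T : Finset α) (D : ℕ)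
    (hD : ∀ v, G.degree v ≤ D) :
    (A.filter (fun e => ∃ v ∈ T, v ∈ e)).card ≤ T.card * D := by
  have hsub : A.filter (fun e => ∃ v ∈ T, v ∈ e) ⊆
      T.biUnion (fun v => A.filter (fun e => v ∈ e)) := by
    intro e he
    rw [Finset.mem_filter] at he
    obtain ⟨heA, v, hvT, hve⟩ := he
    exact Finset.mem_biUnion.mpr ⟨v, hvT, Finset.mem_filter.mpr ⟨heA, hve⟩⟩
  calc (A.filter (fun e => ∃ v ∈ T, v ∈ e)).card
      ≤ (T.biUnion (fun v => A.filter (fun e => v ∈ e))).card := Finset.card_le_card hsub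
    _ ≤ ∑ v ∈ T, (A.filter (fun e => v ∈ e)).card := Finset.card_biUnion_le
    _ ≤ T.card • D := Finset.sum_le_card_nsmul _ _ _
        (fun v _ => le_trans (card_filter_mem_le G A hA v) (hD v))
    _ = T.card * D := smul_eq_mul ..

lemma matching_eq_of {N : Finset (Sym2 α)}
    (hp : (↑N : Set (Sym2 α)).Pairwise (fun e f => ∀ v : α, ¬ (v ∈ e ∧ v ∈ f)))
    {x y z : α} (h1 : s(x, y) ∈ N) (h2 : s(x, z) ∈ N) : y = z := by
  by_cases he : s(x, y) = s(x, z)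
  · exact Sym2.congr_right.mp he
  · exact absurd ⟨Sym2.mem_mk_left x y, Sym2.mem_mk_left x z⟩
      (hp (Finset.mem_coe.mpr h1) (Finset.mem_coe.mpr h2) he x)

lemma matching_filter_card_le_one {N : Finset (Sym2 α)}
    (hp : (↑N : Set (Sym2 α)).Pairwise (fun e f => ∀ v : α, ¬ (v ∈ e ∧ v ∈ f))) (v : α) :
    (N.filter (fun e => v ∈ e)).card ≤ 1 := by
  rw [Finset.card_le_one]
  intro e he f hf
  rw [Finset.mem_filter] at he hf
  by_contra hne
  exact hp (Finset.mem_coe.mpr he.1) (Finset.mem_coe.mpr hf.1) hne v ⟨he.2, hf.2⟩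

lemma pdeg_eq_degree [Fintype α] (G : SimpleGraph α) [DecidableRel G.Adj] (v : α) :
    pdeg G v = G.degree v := by
  show (G.neighborSet v).ncard = _
  rw [Set.ncard_eq_toFinset_card', ← SimpleGraph.neighborFinset_def]
  rfl

lemma pdeg_le_card_filter [Fintype α] (P : SimpleGraph α) (E : Finset (Sym2 α))
    (hP : ∀ x y, P.Adj x y ↔ s(x, y) ∈ E) (v : α) :
    pdeg P v ≤ (E.filter (fun e => v ∈ e)).card := by
  have hinj : Set.InjOn (fun u => s(v, u)) {u | P.Adj v u} :=
    fun u1 _ u2 _ h => Sym2.congr_right.mp h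
  have himg : (fun u => s(v, u)) '' {u | P.Adj v u} ⊆ ↑(E.filter (fun e => v ∈ e)) := by
    rintro e ⟨u, hu, rfl⟩
    rw [Finset.mem_coe, Finset.mem_filter]
    exact ⟨(hP v u).mp hu, Sym2.mem_mk_left v u⟩
  calc pdeg P v = ((fun u => s(v, u)) '' {u | P.Adj v u}).ncard :=
      (Set.ncard_image_of_injOn hinj).symm
    _ ≤ (↑(E.filter (fun e => v ∈ e)) : Set (Sym2 α)).ncard :=
        Set.ncard_le_ncard himg ((E.filter (fun e => v ∈ e)).finite_toSet)
    _ = (E.filter (fun e => v ∈ e)).card := Set.ncard_coe_finset _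

end Helpers

set_option maxHeartbeats 1600000 in
/-- Given a sparse graph with vertex partition `U`, `Vv` and a matching `M` between
`U` and `Vv`, there are matchings `M_U` inside `U` and `M_V` inside `Vv` such that
`M ∪ M_U ∪ M_V` is a path system, of the right sizes, containing a `UV`-path if
`M ≠ ∅`. -/
theorem sparse_three_matchings :
    ∃ η0 : ℝ, η0 ∈ Set.Ioo (0 : ℝ) 1 ∧ ∃ Δ0 : ℝ → ℕ,
      ∀ η : ℝ, 0 < η → η ≤ η0 → ∀ Δ : ℕ, Δ0 η ≤ Δ →
      ∀ {α : Type} [Fintype α] [DecidableEq α], ∀ G : SimpleGraph α,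
      ∀ U Vv : Finset α, Disjoint U Vv → U ∪ Vv = Finset.univ →
        (∀ v, (pdeg G v : ℝ) ≤ η * Δ) →
      ∀ M : Finset (Sym2 α), IsMatchingIn G M →
        (∀ e ∈ M, ∃ a ∈ U, ∃ b ∈ Vv, e = s(a, b)) →
        eIn G U ≤ eIn G Vv → ((eIn G Vv : ℝ) ≤ η * Δ ^ 2) →
      ∃ MU MV : Finset (Sym2 α),
        IsMatchingIn G MU ∧ (∀ e ∈ MU, ∀ v ∈ e, v ∈ U) ∧
        IsMatchingIn G MV ∧ (∀ e ∈ MV, ∀ v ∈ e, v ∈ Vv) ∧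
        IsPathSystem (SimpleGraph.fromEdgeSet ((M ∪ MU ∪ MV : Finset (Sym2 α)) : Set (Sym2 α))) ∧
        ((MU.card : ℤ) ≤ ⌈(eIn G U : ℝ) / Δ⌉) ∧
        (Real.sqrt η * Δ ≤ (eIn G U : ℝ) → (MU.card : ℤ) = ⌈(eIn G U : ℝ) / Δ⌉) ∧
        ((MV.card : ℤ) ≤ ⌈(eIn G Vv : ℝ) / Δ⌉) ∧
        (Real.sqrt η * Δ ≤ (eIn G Vv : ℝ) → (MV.card : ℤ) = ⌈(eIn G Vv : ℝ) / Δ⌉) ∧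
        (M.Nonempty →
          HasPathBetween (SimpleGraph.fromEdgeSet ((M ∪ MU ∪ MV : Finset (Sym2 α)) : Set (Sym2 α))) U Vv) := by
  classical
  refine ⟨1/100, ⟨by norm_num, by norm_num⟩, fun _ => 1, ?_⟩
  intro η hη hη0 Δ hΔ α instF instD G U Vv hdisj huniv hdeg M hM hMcross hUV hVtop
  have hΔR : (1:ℝ) ≤ (Δ:ℝ) := by exact_mod_cast hΔ
  have hΔpos : (0:ℝ) < (Δ:ℝ) := by linarith
  set sq := Real.sqrt η with hs
  have hs_pos : 0 < sq := Real.sqrt_pos.mpr hη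
  have hs_sq : sq * sq = η := Real.mul_self_sqrt hη.le
  have hs10 : sq ≤ 1 / 10 := by nlinarith
  set Dn : ℕ := ⌊η * Δ⌋₊ with hDnd
  have hDnR : (Dn : ℝ) ≤ η * Δ := Nat.floor_le (by positivity)
  have hdegDn : ∀ v, G.degree v ≤ Dn := fun v =>
    Nat.le_floor (by rw [← pdeg_eq_degree]; exact hdeg v)
  -- edge sets
  set E_U := G.edgeFinset.filter (fun e => ∀ v ∈ e, v ∈ U) with hE_Ud
  set E_V := G.edgeFinset.filter (fun e => ∀ v ∈ e, v ∈ Vv) with hE_Vd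
  have heU : eIn G U = E_U.card := by
    rw [eIn, ← Set.ncard_coe_finset]
    congr 1
    ext e
    simp [hE_Ud, SimpleGraph.mem_edgeFinset, Set.mem_setOf_eq]
  have heV : eIn G Vv = E_V.card := by
    rw [eIn, ← Set.ncard_coe_finset]
    congr 1
    ext e
    simp [hE_Vd, SimpleGraph.mem_edgeFinset, Set.mem_setOf_eq]
  rw [heU, heV] at hUV ⊢
  have hEUsubE : E_U ⊆ G.edgeFinset := Finset.filter_subset _ _
  have hEVsubE : E_V ⊆ G.edgeFinset := Finset.filter_subset _ _
  -- reserved endpoints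
  obtain ⟨FU, FV, hFU1, hFV1, hstar⟩ :
      ∃ FU FV : Finset α, FU.card ≤ 1 ∧ FV.card ≤ 1 ∧
        (M.Nonempty → ∃ u0 v0 : α, u0 ∈ U ∧ v0 ∈ Vv ∧ s(u0, v0) ∈ M ∧ FU = {u0} ∧ FV = {v0}) := by
    by_cases hM0 : M.Nonempty
    · obtain ⟨e0, he0⟩ := hM0
      obtain ⟨u0, hu0, v0, hv0, he⟩ := hMcross e0 he0
      exact ⟨{u0}, {v0}, by simp, by simp, fun _ => ⟨u0, v0, hu0, hv0, he ▸ he0, rfl, rfl⟩⟩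
    · exact ⟨∅, ∅, by simp, by simp, fun h => absurd h hM0⟩
  -- allowed U-edges
  set A_U := E_U.filter (fun e => ∀ v ∈ e, v ∉ FU) with hA_Ud
  have hAUsubE : A_U ⊆ G.edgeFinset := (Finset.filter_subset _ _).trans hEUsubE
  have hAUcard : E_U.card ≤ A_U.card + 1 * Dn := by
    have hsplit := Finset.card_filter_add_card_filter_not
      (s := E_U) (p := fun e => ∀ v ∈ e, v ∉ FU)
    rw [← hA_Ud] at hsplit
    have hneg : (E_U.filter (fun e => ¬ ∀ v ∈ e, v ∉ FU)).card ≤ 1 * Dn := by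
      have hsub : E_U.filter (fun e => ¬ ∀ v ∈ e, v ∉ FU) ⊆
          E_U.filter (fun e => ∃ v ∈ FU, v ∈ e) := by
        intro e he
        rw [Finset.mem_filter] at he ⊢
        refine ⟨he.1, ?_⟩
        have h2 := he.2
        push_neg at h2
        obtain ⟨v, hv1, hv2⟩ := h2
        exact ⟨v, hv2, hv1⟩
      calc (E_U.filter (fun e => ¬ ∀ v ∈ e, v ∉ FU)).card
          ≤ (E_U.filter (fun e => ∃ v ∈ FU, v ∈ e)).card := Finset.card_le_card hsub
        _ ≤ FU.card * Dn := card_filter_touch_le G E_U hEUsubE FU Dn hdegDn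
        _ ≤ 1 * Dn := Nat.mul_le_mul_right _ hFU1
    omega
  have hdiagU : ∀ e ∈ A_U, ¬ e.IsDiag := fun e he =>
    G.not_isDiag_of_mem_edgeSet (SimpleGraph.mem_edgeFinset.mp (hAUsubE he))
  have hdegAU : ∀ v, (A_U.filter (fun e => v ∈ e)).card ≤ Dn := fun v =>
    (card_filter_mem_le G A_U hAUsubE v).trans (hdegDn v)
  -- ceiling for U
  set mUZ : ℤ := ⌈(E_U.card : ℝ) / (Δ : ℝ)⌉ with hmUZd
  set mU : ℕ := mUZ.toNat with hmUd
  have hmUnn : (0:ℤ) ≤ mUZ :=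
    Int.ceil_nonneg (div_nonneg (Nat.cast_nonneg _) (Nat.cast_nonneg _))
  have hmUcast : (mU : ℤ) = mUZ := Int.toNat_of_nonneg hmUnn
  have hmUR : (mU : ℝ) * Δ < (E_U.card : ℝ) + Δ := by
    have h2 := Int.ceil_lt_add_one ((E_U.card : ℝ) / (Δ : ℝ))
    rw [← hmUZd] at h2
    have h1 : ((mU : ℤ) : ℝ) = (mUZ : ℝ) := by exact_mod_cast hmUcast
    have h3 : (mU : ℝ) < (E_U.card : ℝ) / Δ + 1 := by
      push_cast at h1
      rw [h1]; exact h2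
    have h4 := mul_lt_mul_of_pos_right h3 hΔpos
    rwa [add_mul, one_mul, div_mul_cancel₀ _ (ne_of_gt hΔpos)] at h4
  -- matching in U
  obtain ⟨MU, hMUsubA, hMUcard_ex, hMUcard_le, hMUpair⟩ :
      ∃ MU, MU ⊆ A_U ∧ (sq * Δ ≤ (E_U.card : ℝ) → MU.card = mU) ∧ MU.card ≤ mU ∧
        (↑MU : Set (Sym2 α)).Pairwise (fun e f => ∀ v : α, ¬ (v ∈ e ∧ v ∈ f)) := by
    by_cases hexU : sq * Δ ≤ (E_U.card : ℝ)
    · have hEUpos : (0:ℝ) < (E_U.card : ℝ) := lt_of_lt_of_le (mul_pos hs_pos hΔpos) hexU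
      have hkey : 2 * Dn * mU < A_U.card + 2 * Dn := by
        rw [← Nat.cast_lt (α := ℝ)]
        push_cast
        have hA' : (E_U.card : ℝ) ≤ (A_U.card : ℝ) + 1 * Dn := by exact_mod_cast hAUcard
        have c1 : (Dn:ℝ) * mU ≤ (η*Δ) * mU := mul_le_mul_of_nonneg_right hDnR (Nat.cast_nonneg _)
        have c2 : (η*Δ) * (mU:ℝ) = η*((mU:ℝ)*Δ) := by ring
        have c3 : η*((mU:ℝ)*Δ) < η*((E_U.card:ℝ)+Δ) := by
          exact mul_lt_mul_of_pos_left hmUR hη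
        have c4 : η*(Δ:ℝ) ≤ sq*(E_U.card:ℝ) := by
          calc η*(Δ:ℝ) = sq*(sq*Δ) := by rw [← hs_sq]; ring
          _ ≤ sq*(E_U.card:ℝ) := mul_le_mul_of_nonneg_left hexU hs_pos.le
        have c5 : η*(E_U.card:ℝ) ≤ (1/100)*(E_U.card:ℝ) :=
          mul_le_mul_of_nonneg_right hη0 hEUpos.le
        have c6 : sq*(E_U.card:ℝ) ≤ (1/10)*(E_U.card:ℝ) :=
          mul_le_mul_of_nonneg_right hs10 hEUpos.le
        linarith [c1, c2, c3, c4, c5, c6, hDnR, hEUpos, hA']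
      obtain ⟨N, h1, h2, h3⟩ := greedy_matching Dn mU A_U hdiagU hdegAU hkey
      exact ⟨N, h1, fun _ => h2, h2.le, h3⟩
    · exact ⟨∅, by simp, fun h => absurd h hexU, by simp, by simp⟩
  have hMUin : ∀ e ∈ MU, ∀ v ∈ e, v ∈ U := by
    intro e he v hv
    have := hMUsubA he
    rw [hA_Ud, Finset.mem_filter, hE_Ud, Finset.mem_filter] at this
    exact this.1.2 v hv
  have hMUsubG : ↑MU ⊆ G.edgeSet := fun e he =>
    SimpleGraph.mem_edgeFinset.mp (hAUsubE (hMUsubA (Finset.mem_coe.mp he)))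
  -- bad V-vertices
  set S := Vv.filter (fun v => ∃ u, s(u, v) ∈ M ∧ ∃ e ∈ MU, u ∈ e) with hSd
  have hScard : S.card ≤ 2 * MU.card := by
    have h1 : S.card ≤ (MU.biUnion (fun e => Finset.univ.filter (fun v => v ∈ e))).card := by
      apply Finset.card_le_card_of_injOn
        (fun v => if h : ∃ u, s(u, v) ∈ M ∧ ∃ e ∈ MU, u ∈ e then h.choose else v)
      · intro v hv
        rw [Finset.mem_coe, hSd, Finset.mem_filter] at hv
        obtain ⟨hvV, hex⟩ := hv
        rw [Finset.mem_coe]; beta_reduce; rw [dif_pos hex]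
        obtain ⟨h1', e, he, hue⟩ := hex.choose_spec
        exact Finset.mem_biUnion.mpr ⟨e, he, Finset.mem_filter.mpr ⟨Finset.mem_univ _, hue⟩⟩
      · intro v1 hv1 v2 hv2 heq
        rw [Finset.mem_coe, hSd, Finset.mem_filter] at hv1 hv2
        have hex1 := hv1.2
        have hex2 := hv2.2
        simp only [dif_pos hex1, dif_pos hex2] at heq
        obtain ⟨hm1, _⟩ := hex1.choose_spec
        obtain ⟨hm2, _⟩ := hex2.choose_spec
        rw [heq] at hm1
        exact matching_eq_of hM.2 hm1 hm2
    have h2 : (MU.biUnion (fun e => Finset.univ.filter (fun v => v ∈ e))).card ≤ 2 * MU.card := by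
      calc (MU.biUnion (fun e => Finset.univ.filter (fun v => v ∈ e))).card
          ≤ ∑ e ∈ MU, (Finset.univ.filter (fun v => v ∈ e)).card := Finset.card_biUnion_le
        _ ≤ MU.card • 2 := Finset.sum_le_card_nsmul _ _ _ (by
            intro e he
            obtain ⟨a, b, rfl⟩ : ∃ a b, e = s(a, b) := by
              induction e using Sym2.ind with | _ x y => exact ⟨x, y, rfl⟩
            have hsub : Finset.univ.filter (fun v => v ∈ s(a, b)) ⊆ {a, b} := by
              intro v hv
              rw [Finset.mem_filter] at hv
              rcases Sym2.mem_iff.mp hv.2 with rfl | rfl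
              · exact Finset.mem_insert_self _ _
              · exact Finset.mem_insert_of_mem (Finset.mem_singleton_self _)
            exact (Finset.card_le_card hsub).trans
              ((Finset.card_insert_le _ _).trans (by simp)))
        _ = 2 * MU.card := by rw [smul_eq_mul, mul_comm]
    omega
  -- allowed V-edges
  set A_V := E_V.filter (fun e => ∀ v ∈ e, v ∉ FV ∪ S) with hA_Vd
  have hAVsubE : A_V ⊆ G.edgeFinset := (Finset.filter_subset _ _).trans hEVsubE
  have hAVcard : E_V.card ≤ A_V.card + (S.card + 1) * Dn := by
    have hsplit := Finset.card_filter_add_card_filter_not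
      (s := E_V) (p := fun e => ∀ v ∈ e, v ∉ FV ∪ S)
    rw [← hA_Vd] at hsplit
    have hneg : (E_V.filter (fun e => ¬ ∀ v ∈ e, v ∉ FV ∪ S)).card ≤ (S.card + 1) * Dn := by
      have hsub : E_V.filter (fun e => ¬ ∀ v ∈ e, v ∉ FV ∪ S) ⊆
          E_V.filter (fun e => ∃ v ∈ FV ∪ S, v ∈ e) := by
        intro e he
        rw [Finset.mem_filter] at he ⊢
        refine ⟨he.1, ?_⟩
        have h2 := he.2
        push_neg at h2
        obtain ⟨v, hv1, hv2⟩ := h2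
        exact ⟨v, hv2, hv1⟩
      calc (E_V.filter (fun e => ¬ ∀ v ∈ e, v ∉ FV ∪ S)).card
          ≤ (E_V.filter (fun e => ∃ v ∈ FV ∪ S, v ∈ e)).card := Finset.card_le_card hsub
        _ ≤ (FV ∪ S).card * Dn := card_filter_touch_le G E_V hEVsubE (FV ∪ S) Dn hdegDn
        _ ≤ (S.card + 1) * Dn := Nat.mul_le_mul_right _ (by
            calc (FV ∪ S).card ≤ FV.card + S.card := Finset.card_union_le _ _
              _ ≤ S.card + 1 := by omega)
    omega
  have hdiagV : ∀ e ∈ A_V, ¬ e.IsDiag := fun e he =>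
    G.not_isDiag_of_mem_edgeSet (SimpleGraph.mem_edgeFinset.mp (hAVsubE he))
  have hdegAV : ∀ v, (A_V.filter (fun e => v ∈ e)).card ≤ Dn := fun v =>
    (card_filter_mem_le G A_V hAVsubE v).trans (hdegDn v)
  -- ceiling for V
  set mVZ : ℤ := ⌈(E_V.card : ℝ) / (Δ : ℝ)⌉ with hmVZd
  set mV : ℕ := mVZ.toNat with hmVd
  have hmVnn : (0:ℤ) ≤ mVZ :=
    Int.ceil_nonneg (div_nonneg (Nat.cast_nonneg _) (Nat.cast_nonneg _))
  have hmVcast : (mV : ℤ) = mVZ := Int.toNat_of_nonneg hmVnn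
  have hmVR : (mV : ℝ) * Δ < (E_V.card : ℝ) + Δ := by
    have h2 := Int.ceil_lt_add_one ((E_V.card : ℝ) / (Δ : ℝ))
    rw [← hmVZd] at h2
    have h1 : ((mV : ℤ) : ℝ) = (mVZ : ℝ) := by exact_mod_cast hmVcast
    have h3 : (mV : ℝ) < (E_V.card : ℝ) / Δ + 1 := by
      push_cast at h1
      rw [h1]; exact h2
    have h4 := mul_lt_mul_of_pos_right h3 hΔpos
    rwa [add_mul, one_mul, div_mul_cancel₀ _ (ne_of_gt hΔpos)] at h4
  -- matching in V
  obtain ⟨MV, hMVsubA, hMVcard_ex, hMVcard_le, hMVpair⟩ :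
      ∃ MV, MV ⊆ A_V ∧ (sq * Δ ≤ (E_V.card : ℝ) → MV.card = mV) ∧ MV.card ≤ mV ∧
        (↑MV : Set (Sym2 α)).Pairwise (fun e f => ∀ v : α, ¬ (v ∈ e ∧ v ∈ f)) := by
    by_cases hexV : sq * Δ ≤ (E_V.card : ℝ)
    · have hEVpos : (0:ℝ) < (E_V.card : ℝ) := lt_of_lt_of_le (mul_pos hs_pos hΔpos) hexV
      have hkey : 2 * Dn * mV < A_V.card + 2 * Dn := by
        rw [← Nat.cast_lt (α := ℝ)]
        push_cast
        have hA' : (E_V.card : ℝ) ≤ (A_V.card : ℝ) + ((S.card : ℝ) + 1) * Dn := by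
          exact_mod_cast hAVcard
        have hUVR : (E_U.card : ℝ) ≤ (E_V.card : ℝ) := by exact_mod_cast hUV
        have hSR : (S.card : ℝ) ≤ 2 * (mU : ℝ) := by
          have : S.card ≤ 2 * mU := hScard.trans (by omega)
          exact_mod_cast this
        have d1 : (Dn:ℝ) * mV ≤ (η*Δ) * mV := mul_le_mul_of_nonneg_right hDnR (Nat.cast_nonneg _)
        have d2 : (η*Δ) * (mV:ℝ) = η*((mV:ℝ)*Δ) := by ring
        have d3 : η*((mV:ℝ)*Δ) < η*((E_V.card:ℝ)+Δ) := mul_lt_mul_of_pos_left hmVR hη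
        have d35 : ((S.card:ℝ)+1) * Dn ≤ (2*(mU:ℝ)+1) * (η*Δ) := by
          apply mul_le_mul (by linarith) hDnR (Nat.cast_nonneg _) (by positivity)
        have d4 : (2*(mU:ℝ)+1) * (η*Δ) = 2*(η*((mU:ℝ)*Δ)) + η*Δ := by ring
        have d5 : η*((mU:ℝ)*Δ) < η*((E_U.card:ℝ)+Δ) := mul_lt_mul_of_pos_left hmUR hη
        have d55 : η*(E_U.card:ℝ) ≤ η*(E_V.card:ℝ) := mul_le_mul_of_nonneg_left hUVR hη.le
        have d6 : η*(Δ:ℝ) ≤ sq*(E_V.card:ℝ) := by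
          calc η*(Δ:ℝ) = sq*(sq*Δ) := by rw [← hs_sq]; ring
          _ ≤ sq*(E_V.card:ℝ) := mul_le_mul_of_nonneg_left hexV hs_pos.le
        have d7 : η*(E_V.card:ℝ) ≤ (1/100)*(E_V.card:ℝ) :=
          mul_le_mul_of_nonneg_right hη0 hEVpos.le
        have d8 : sq*(E_V.card:ℝ) ≤ (1/10)*(E_V.card:ℝ) :=
          mul_le_mul_of_nonneg_right hs10 hEVpos.le
        linarith [d1, d2, d3, d35, d4, d5, d55, d6, d7, d8, hDnR, hEVpos, hA']
      obtain ⟨N, h1, h2, h3⟩ := greedy_matching Dn mV A_V hdiagV hdegAV hkey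
      exact ⟨N, h1, fun _ => h2, h2.le, h3⟩
    · exact ⟨∅, by simp, fun h => absurd h hexV, by simp, by simp⟩
  have hMVin : ∀ e ∈ MV, ∀ v ∈ e, v ∈ Vv := by
    intro e he v hv
    have := hMVsubA he
    rw [hA_Vd, Finset.mem_filter, hE_Vd, Finset.mem_filter] at this
    exact this.1.2 v hv
  have hMVavoid : ∀ e ∈ MV, ∀ v ∈ e, v ∉ FV ∪ S := by
    intro e he v hv
    have := hMVsubA he
    rw [hA_Vd, Finset.mem_filter] at this
    exact this.2 v hv
  have hMUavoid : ∀ e ∈ MU, ∀ v ∈ e, v ∉ FU := by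
    intro e he v hv
    have := hMUsubA he
    rw [hA_Ud, Finset.mem_filter] at this
    exact this.2 v hv
  have hMVsubG : ↑MV ⊆ G.edgeSet := fun e he =>
    SimpleGraph.mem_edgeFinset.mp (hAVsubE (hMVsubA (Finset.mem_coe.mp he)))
  -- the combined graph
  set Efin : Finset (Sym2 α) := M ∪ MU ∪ MV with hEfind
  set P := SimpleGraph.fromEdgeSet (↑Efin : Set (Sym2 α)) with hPd
  have hEsubG : ∀ e ∈ Efin, e ∈ G.edgeSet := by
    intro e he
    rcases Finset.mem_union.mp he with he' | he'
    · rcases Finset.mem_union.mp he' with he'' | he''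
      · exact hM.1 he''
      · exact hMUsubG he''
    · exact hMVsubG he'
  have hPadj : ∀ x y : α, P.Adj x y ↔ s(x, y) ∈ Efin := by
    intro x y
    rw [hPd, SimpleGraph.fromEdgeSet_adj]
    constructor
    · exact fun h => Finset.mem_coe.mp h.1
    · intro h
      refine ⟨h, fun heq => ?_⟩
      exact G.not_isDiag_of_mem_edgeSet (hEsubG _ h) (Sym2.mk_isDiag_iff.mpr heq)
  have hclassE : ∀ e ∈ Efin, e ∈ M ∨ e ∈ MU ∨ e ∈ MV := by
    intro e he
    rcases Finset.mem_union.mp he with he' | he'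
    · rcases Finset.mem_union.mp he' with he'' | he''
      · exact Or.inl he''
      · exact Or.inr (Or.inl he'')
    · exact Or.inr (Or.inr he')
  -- degree bound
  have hdeg2 : ∀ v, pdeg P v ≤ 2 := by
    intro v
    refine le_trans (pdeg_le_card_filter P Efin hPadj v) ?_
    have hsplit : Efin.filter (fun e => v ∈ e) =
        (M.filter (fun e => v ∈ e) ∪ MU.filter (fun e => v ∈ e)) ∪ MV.filter (fun e => v ∈ e) := by
      rw [hEfind, Finset.filter_union, Finset.filter_union]
    rw [hsplit]
    have hvUV : v ∈ U ∨ v ∈ Vv := by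
      have : v ∈ U ∪ Vv := huniv ▸ Finset.mem_univ v
      exact Finset.mem_union.mp this
    rcases hvUV with hv | hv
    · have hMV0 : MV.filter (fun e => v ∈ e) = ∅ := by
        rw [Finset.filter_eq_empty_iff]
        intro e he hve
        exact Finset.disjoint_left.mp hdisj hv (hMVin e he v hve)
      rw [hMV0, Finset.union_empty]
      calc ((M.filter (fun e => v ∈ e)) ∪ (MU.filter (fun e => v ∈ e))).card
          ≤ (M.filter (fun e => v ∈ e)).card + (MU.filter (fun e => v ∈ e)).card :=
            Finset.card_union_le _ _
        _ ≤ 1 + 1 := Nat.add_le_add (matching_filter_card_le_one hM.2 v)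
            (matching_filter_card_le_one hMUpair v)
        _ = 2 := rfl
    · have hMU0 : MU.filter (fun e => v ∈ e) = ∅ := by
        rw [Finset.filter_eq_empty_iff]
        intro e he hve
        exact Finset.disjoint_left.mp hdisj (hMUin e he v hve) hv
      rw [hMU0, Finset.union_empty]
      calc ((M.filter (fun e => v ∈ e)) ∪ (MV.filter (fun e => v ∈ e))).card
          ≤ (M.filter (fun e => v ∈ e)).card + (MV.filter (fun e => v ∈ e)).card :=
            Finset.card_union_le _ _
        _ ≤ 1 + 1 := Nat.add_le_add (matching_filter_card_le_one hM.2 v)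
            (matching_filter_card_le_one hMVpair v)
        _ = 2 := rfl
  -- acyclicity
  have hacyc : P.IsAcyclic := by
    intro a c hc
    have hedgeE : ∀ ⦃e⦄, e ∈ c.edges → e ∈ Efin := by
      intro e he
      have h1 := c.edges_subset_edgeSet he
      rw [hPd, SimpleGraph.edgeSet_fromEdgeSet] at h1
      exact Finset.mem_coe.mp h1.1
    have hclass : ∀ p q : α, s(p, q) ∈ c.edges → s(p, q) ∈ M ∨ s(p, q) ∈ MU ∨ s(p, q) ∈ MV :=
      fun p q h => hclassE _ (hedgeE h)
    have hUvert : ∀ y ∈ c.support, y ∈ U → ∃ w, s(y, w) ∈ MU := by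
      intro y hy hyU
      obtain ⟨w1, w2, hw, h1, h2⟩ := cycle_two_edges c hc hy
      have cls : ∀ w, s(y, w) ∈ c.edges → s(y, w) ∈ M ∨ s(y, w) ∈ MU := by
        intro w hw'
        rcases hclass y w hw' with h | h | h
        · exact Or.inl h
        · exact Or.inr h
        · exact absurd (hMVin _ h y (Sym2.mem_mk_left _ _))
            (Finset.disjoint_left.mp hdisj hyU)
      rcases cls w1 h1 with hA | hA
      · rcases cls w2 h2 with hB | hB
        · exact absurd (matching_eq_of hM.2 hA hB) hw
        · exact ⟨w2, hB⟩
      · exact ⟨w1, hA⟩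
    by_cases hxV : ∃ x ∈ c.support, x ∈ Vv
    · obtain ⟨x, hxs, hxVv⟩ := hxV
      have key : ∀ y z : α, s(x, y) ∈ c.edges → s(x, y) ∈ M → s(x, z) ∈ MV → False := by
        intro y z hxye hxyM hxzMV
        have hxnotS : x ∉ S :=
          fun hxS => hMVavoid _ hxzMV x (Sym2.mem_mk_left _ _) (Finset.mem_union_right _ hxS)
        have hyU : y ∈ U := by
          obtain ⟨a', ha'U, b', hb'V, heq⟩ := hMcross _ hxyM
          rcases Sym2.eq_iff.mp heq with ⟨rfl, rfl⟩ | ⟨rfl, rfl⟩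
          · exact absurd hxVv (Finset.disjoint_left.mp hdisj ha'U)
          · exact ha'U
        have hys : y ∈ c.support := SimpleGraph.Walk.snd_mem_support_of_mem_edges c hxye
        obtain ⟨w, hw⟩ := hUvert y hys hyU
        apply hxnotS
        rw [hSd, Finset.mem_filter]
        exact ⟨hxVv, y, by rwa [Sym2.eq_swap], s(y, w), hw, Sym2.mem_mk_left _ _⟩
      obtain ⟨w1, w2, hw, h1, h2⟩ := cycle_two_edges c hc hxs
      have cls : ∀ w, s(x, w) ∈ c.edges → s(x, w) ∈ M ∨ s(x, w) ∈ MV := by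
        intro w hw'
        rcases hclass x w hw' with h | h | h
        · exact Or.inl h
        · exact absurd hxVv
            (Finset.disjoint_left.mp hdisj (hMUin _ h x (Sym2.mem_mk_left _ _)))
        · exact Or.inr h
      rcases cls w1 h1 with hA | hA <;> rcases cls w2 h2 with hB | hB
      · exact hw (matching_eq_of hM.2 hA hB)
      · exact key w1 w2 h1 hA hB
      · exact key w2 w1 h2 hB hA
      · exact hw (matching_eq_of hMVpair hA hB)
    · push_neg at hxV
      have has : a ∈ c.support := c.start_mem_support
      obtain ⟨w1, w2, hw, h1, h2⟩ := cycle_two_edges c hc has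
      have cls : ∀ w, s(a, w) ∈ c.edges → s(a, w) ∈ MU := by
        intro w hw'
        have hwsup := SimpleGraph.Walk.snd_mem_support_of_mem_edges c hw'
        rcases hclass a w hw' with h | h | h
        · obtain ⟨a', ha'U, b', hb'V, heq⟩ := hMcross _ h
          rcases Sym2.eq_iff.mp heq with ⟨h1', h2'⟩ | ⟨h1', h2'⟩
          · exact absurd (h2' ▸ hb'V) (hxV w hwsup)
          · exact absurd (h1' ▸ hb'V) (hxV a has)
        · exact h
        · exact absurd (hMVin _ h a (Sym2.mem_mk_left _ _)) (hxV a has)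
      exact hw (matching_eq_of hMUpair (cls w1 h1) (cls w2 h2))
  -- assemble
  refine ⟨MU, MV, ⟨hMUsubG, hMUpair⟩, hMUin, ⟨hMVsubG, hMVpair⟩, hMVin,
    ⟨hdeg2, hacyc⟩, ?_, ?_, ?_, ?_, ?_⟩
  · rw [← hmUcast]
    exact_mod_cast hMUcard_le
  · intro h
    rw [← hmUcast]
    exact_mod_cast hMUcard_ex h
  · rw [← hmVcast]
    exact_mod_cast hMVcard_le
  · intro h
    rw [← hmVcast]
    exact_mod_cast hMVcard_ex h
  · intro hMne
    obtain ⟨u0, v0, hu0U, hv0V, he0M, hFUeq, hFVeq⟩ := hstar hMne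
    have he0E : s(u0, v0) ∈ Efin := by
      rw [hEfind]
      exact Finset.mem_union_left _ (Finset.mem_union_left _ he0M)
    have hadj : P.Adj u0 v0 := (hPadj u0 v0).mpr he0E
    refine ⟨u0, hu0U, v0, hv0V, ?_, ?_, hadj.reachable⟩
    · have hset : {w | P.Adj u0 w} = {v0} := by
        ext w
        simp only [Set.mem_setOf_eq, Set.mem_singleton_iff]
        constructor
        · intro hwadj
          have hmem := (hPadj u0 w).mp hwadj
          rcases hclassE _ hmem with h | h | h
          · exact matching_eq_of hM.2 h he0M
          · exact absurd (hFUeq ▸ Finset.mem_singleton_self u0)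
              (hMUavoid _ h u0 (Sym2.mem_mk_left _ _))
          · exact absurd (hMVin _ h u0 (Sym2.mem_mk_left _ _))
              (Finset.disjoint_left.mp hdisj hu0U)
        · rintro rfl
          exact hadj
      show ({w | P.Adj u0 w}).ncard = 1
      rw [hset, Set.ncard_singleton]
    · have hset : {w | P.Adj v0 w} = {u0} := by
        ext w
        simp only [Set.mem_setOf_eq, Set.mem_singleton_iff]
        constructor
        · intro hwadj
          have hmem := (hPadj v0 w).mp hwadj
          rcases hclassE _ hmem with h | h | h
          · have he0M' : s(v0, u0) ∈ M := by rwa [Sym2.eq_swap]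
            exact matching_eq_of hM.2 h he0M'
          · exact absurd (hMUin _ h v0 (Sym2.mem_mk_left _ _))
              (fun hv0U => Finset.disjoint_left.mp hdisj hv0U hv0V)
          · exact absurd
              (Finset.mem_union_left _ (hFVeq ▸ Finset.mem_singleton_self v0))
              (hMVavoid _ h v0 (Sym2.mem_mk_left _ _))
        · rintro rfl
          exact hadj.symm
      show ({w | P.Adj v0 w}).ncard = 1
      rw [hset, Set.ncard_singleton]
end
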